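/- arXiv:2108.04513 — 9 statements merged into one kernel-verified Lean document; each statement's English description precedes it below -/
import Mathlib

section
/- Let H be a numerical semigroup minimally generated by n_1,…,n_e, let k be a field, and let a = (a_1,…,a_e) ∈ ℕ^e with h = ∑_{i=1}^e a_i n_i. For each pseudo-Frobenius number f ∈ PF(H), let M_f ⊆ S be the ideal generated by all monomials x^b = ∏_{i=1}^e x_i^{b_i} (b ∈ ℕ^e) for which there is no c ∈ H with (∑_{i=1}^e b_i n_i) + c = f + h. Then I_H + (x^a) = ⋂_{f ∈ PF(H)} (I_H + M_f). In particular, if H is symmetric, then for each i, I_H + (x_i) = I_H + M, where M is the ideal generated by all monomials x^b for which there is no c ∈ H with (∑_j b_j n_j) + c = Fr(H) + n_i. -/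
/-- A numerical semigroup: a submonoid of `(ℕ, +)` with finite complement. -/
def IsNumericalSemigroup (H : Set ℕ) : Prop :=
  0 ∈ H ∧ (∀ a ∈ H, ∀ b ∈ H, a + b ∈ H) ∧ Hᶜ.Finite

/-- The set of pseudo-Frobenius numbers of `H`, as a subset of `ℤ`. -/
def PF (H : Set ℕ) : Set ℤ :=
  {f | f ∉ ((Nat.cast : ℕ → ℤ) '' H) ∧
    ∀ h ∈ H, 0 < h → f + (h : ℤ) ∈ ((Nat.cast : ℕ → ℤ) '' H)}

/-- Every integer not in `H` is dominated by a pseudo-Frobenius number. -/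
theorem exists_pf_aux (H : Set ℕ) (hH : IsNumericalSemigroup H) (z : ℤ)
    (hz : z ∉ ((Nat.cast : ℕ → ℤ) '' H)) :
    ∃ f ∈ PF H, ∃ c ∈ H, f = z + (c : ℤ) := by
  obtain ⟨h0, hadd, hfin⟩ := hH
  set P : ℤ → Prop := fun w => w ∉ ((Nat.cast : ℕ → ℤ) '' H) ∧ ∃ c ∈ H, w = z + (c : ℤ)
  have hbdd : ∃ b : ℤ, ∀ w, P w → w ≤ b := by
    refine ⟨(hfin.toFinset.sup id : ℕ), ?_⟩
    intro w hw
    rcases lt_or_ge w 0 with hneg | hpos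
    · exact hneg.le.trans (by positivity)
    · have : w.toNat ∈ hfin.toFinset := by
        simp only [Set.Finite.mem_toFinset, Set.mem_compl_iff]
        intro hmem
        exact hw.1 ⟨w.toNat, hmem, by omega⟩
      have := Finset.le_sup (f := id) this
      simp only [id_eq] at this
      omega
  have hne : ∃ w, P w := ⟨z, hz, 0, h0, by simp⟩
  obtain ⟨f, ⟨hf1, c, hc, hfc⟩, hmax⟩ := Int.exists_greatest_of_bdd hbdd hne
  refine ⟨f, ⟨hf1, ?_⟩, c, hc, hfc⟩
  intro h' hh' hpos
  by_contra hmem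
  have : P (f + h') := ⟨hmem, c + h', hadd c hc h' hh', by push_cast; omega⟩
  have := hmax _ this
  omega

open Polynomial MvPolynomial

section Aux

variable {e : ℕ} {k : Type*} [Field k] (n : Fin e → ℕ)

/-- abbreviation for the evaluation map. -/
noncomputable def phi (n : Fin e → ℕ) (k : Type*) [Field k] :
    MvPolynomial (Fin e) k →ₐ[k] Polynomial k :=
  MvPolynomial.aeval (fun i => (Polynomial.X : Polynomial k) ^ n i)

theorem phi_monomial (b : Fin e → ℕ) (c : k) :
    phi n k (MvPolynomial.monomial (Finsupp.equivFunOnFinite.symm b) c) =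
      Polynomial.C c * Polynomial.X ^ (∑ i, b i * n i) := by
  rw [phi, MvPolynomial.aeval_monomial]
  rw [Finsupp.prod_fintype _ _ (fun i => pow_zero _)]
  simp only [Finsupp.coe_equivFunOnFinite_symm, ← pow_mul]
  rw [← Finset.prod_pow_eq_pow_sum]
  congr 1
  exact Finset.prod_congr rfl fun i _ => by rw [mul_comm (n i) (b i)]

theorem support_mul_aux {p q : Polynomial k} {m : ℕ} (hm : m ∈ (p * q).support) :
    ∃ i ∈ p.support, ∃ j ∈ q.support, m = i + j := by
  by_contra hcon
  push_neg at hcon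
  rw [Polynomial.mem_support_iff, Polynomial.coeff_mul] at hm
  refine hm (Finset.sum_eq_zero fun x hx => ?_)
  rw [Finset.HasAntidiagonal.mem_antidiagonal] at hx
  rcases eq_or_ne (p.coeff x.1) 0 with h1 | h1
  · rw [h1, zero_mul]
  rcases eq_or_ne (q.coeff x.2) 0 with h2 | h2
  · rw [h2, mul_zero]
  exact absurd (hx.symm) (hcon x.1 (Polynomial.mem_support_iff.2 h1) x.2
    (Polynomial.mem_support_iff.2 h2))

theorem supp_phi_mem (H : Set ℕ) (h0 : 0 ∈ H)
    (hadd : ∀ a ∈ H, ∀ b ∈ H, a + b ∈ H) (hn : ∀ i, n i ∈ H)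
    (p : MvPolynomial (Fin e) k) : ∀ m ∈ (phi n k p).support, m ∈ H := by
  induction p using MvPolynomial.induction_on with
  | C a =>
    intro m hm
    rcases eq_or_ne a 0 with rfl | ha
    · simp [phi] at hm
    · have : (phi n k (MvPolynomial.C a)).support = {0} := by
        rw [phi]; simp only [MvPolynomial.aeval_C]
        exact Polynomial.support_C (by simpa using ha)
      rw [this] at hm
      simp at hm
      rwa [hm]
  | add p q hp hq =>
    intro m hm
    rw [map_add] at hm
    rcases Finset.mem_union.1 (Polynomial.support_add hm) with h | h
    · exact hp m h
    · exact hq m h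
  | mul_X p i hp =>
    intro m hm
    rw [map_mul] at hm
    obtain ⟨m1, hm1, m2, hm2, rfl⟩ := support_mul_aux hm
    have hXi : phi n k (MvPolynomial.X i) = (Polynomial.X : Polynomial k) ^ n i := by
      simp [phi]
    rw [hXi, Polynomial.support_X_pow] at hm2
    simp only [Finset.mem_singleton] at hm2
    exact hm2 ▸ hadd m1 (hp m1 hm1) (n i) (hn i)

theorem symm_add (x y : Fin e → ℕ) :
    (Finsupp.equivFunOnFinite.symm (x + y) : Fin e →₀ ℕ) =
      Finsupp.equivFunOnFinite.symm x + Finsupp.equivFunOnFinite.symm y := by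
  ext i
  simp [Finsupp.coe_equivFunOnFinite_symm]

end Aux

/-- for a numerical semigroup `H` minimally generated by `n₁,…,n_e`,
`I_H + (x^a) = ⋂_{f ∈ PF(H)} (I_H + M_f)`. -/
theorem stmt0 {e : ℕ} (n : Fin e → ℕ) (H : Set ℕ)
    (hH : IsNumericalSemigroup H)
    (hgen : H = {m | ∃ a : Fin e → ℕ, m = ∑ i, a i * n i})
    (hmin : ∀ j : Fin e, {m | ∃ a : Fin e → ℕ, a j = 0 ∧ m = ∑ i, a i * n i} ≠ H)
    (k : Type*) [Field k] (a : Fin e → ℕ) (h : ℕ) (hh : h = ∑ i, a i * n i)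
    (IH : Ideal (MvPolynomial (Fin e) k))
    (hIH : IH = RingHom.ker (MvPolynomial.aeval
      (fun i => (Polynomial.X : Polynomial k) ^ n i) :
      MvPolynomial (Fin e) k →ₐ[k] Polynomial k))
    (M : ℤ → Ideal (MvPolynomial (Fin e) k))
    (hM : ∀ f : ℤ, M f = Ideal.span {p | ∃ b : Fin e → ℕ,
      p = MvPolynomial.monomial (Finsupp.equivFunOnFinite.symm b) (1 : k) ∧
      ¬ ∃ c ∈ H, ((∑ i, b i * n i : ℕ) : ℤ) + (c : ℤ) = f + (h : ℤ)}) :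
    IH ⊔ Ideal.span {MvPolynomial.monomial (Finsupp.equivFunOnFinite.symm a) (1 : k)} =
      ⨅ f ∈ PF H, (IH ⊔ M f) := by
  have h0 : 0 ∈ H := hH.1
  have hadd : ∀ x ∈ H, ∀ y ∈ H, x + y ∈ H := hH.2.1
  have hn : ∀ i, n i ∈ H := by
    intro i
    rw [hgen]
    refine ⟨fun j => if j = i then 1 else 0, ?_⟩
    simp [ite_mul]
  have hIHker : IH = RingHom.ker (phi n k) := hIH
  have hhH : h ∈ H := by rw [hgen]; exact ⟨a, hh⟩
  -- Bad sets
  set Bad : ℤ → ℕ → Prop := fun f m => ¬ ∃ c ∈ H, (m : ℤ) + (c : ℤ) = f + (h : ℤ) with hBad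
  -- The test ideal Tf
  have badd : ∀ f m1 m2, m1 ∈ H → Bad f m2 → Bad f (m1 + m2) := by
    intro f m1 m2 hm1 hm2 ⟨c, hc, hceq⟩
    exact hm2 ⟨m1 + c, hadd m1 hm1 c hc, by push_cast; push_cast at hceq; omega⟩
  let Tf : ℤ → Ideal (MvPolynomial (Fin e) k) := fun f =>
    { carrier := {p | ∀ m ∈ (phi n k p).support, Bad f m}
      zero_mem' := by simp
      add_mem' := by
        intro p q hp hq m hm
        rw [Set.mem_setOf_eq, map_add] at *
        rcases Finset.mem_union.1 (Polynomial.support_add hm) with hmem | hmem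
        · exact hp m hmem
        · exact hq m hmem
      smul_mem' := by
        intro r p hp m hm
        rw [Set.mem_setOf_eq, smul_eq_mul, map_mul] at *
        obtain ⟨m1, hm1, m2, hm2, rfl⟩ := support_mul_aux hm
        exact badd f m1 m2 (supp_phi_mem n H h0 hadd hn r m1 hm1) (hp m2 hm2) }
  have hTf : ∀ f, ∀ p, p ∈ Tf f ↔ ∀ m ∈ (phi n k p).support, Bad f m := fun _ _ => Iff.rfl
  -- each side contained in Tf
  have hsub : ∀ f ∈ PF H, IH ⊔ M f ≤ Tf f := by
    intro f hf
    refine sup_le ?_ ?_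
    · intro p hp
      rw [hIHker, RingHom.mem_ker] at hp
      rw [hTf]
      intro m hm
      rw [hp] at hm
      simp at hm
    · rw [hM f, Ideal.span_le]
      rintro p ⟨b, rfl, hb⟩
      rw [SetLike.mem_coe, hTf]
      intro m hm
      rw [phi_monomial, Polynomial.C_1, one_mul] at hm
      rw [Polynomial.support_X_pow] at hm
      simp only [Finset.mem_singleton] at hm
      subst hm
      exact hb
  -- reconstruction: if support of phi p lies in h + H, then p ∈ IH ⊔ (x^a)
  refine le_antisymm ?_ ?_
  · refine le_iInf fun f => le_iInf fun hf => sup_le le_sup_left ?_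
    rw [Ideal.span_le]
    rintro p hp
    rw [Set.mem_singleton_iff] at hp
    subst hp
    refine le_sup_right (a := IH) ?_
    rw [hM f]
    refine Ideal.subset_span ⟨a, rfl, ?_⟩
    rintro ⟨c, hc, hceq⟩
    rw [← hh] at hceq
    have : (c : ℤ) = f := by omega
    exact hf.1 ⟨c, hc, this⟩
  · intro p hp
    simp only [Ideal.mem_iInf] at hp
    -- every m in support of phi p lies in h + H
    have key : ∀ m ∈ (phi n k p).support, ∃ c ∈ H, m = h + c := by
      intro m hm
      have hmH : m ∈ H := supp_phi_mem n H h0 hadd hn p m hm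
      by_contra hcon
      push_neg at hcon
      have hz : ((m : ℤ) - (h : ℤ)) ∉ ((Nat.cast : ℕ → ℤ) '' H) := by
        rintro ⟨c, hc, hceq⟩
        exact absurd hceq.symm (by intro hq; exact (hcon c hc (by omega)).elim)
      obtain ⟨f, hfPF, c, hc, hfc⟩ := exists_pf_aux H hH _ hz
      have hpf : p ∈ IH ⊔ M f := hp f hfPF
      have := hsub f hfPF hpf
      rw [hTf] at this
      exact this m hm ⟨c, hc, by omega⟩
    -- choose decompositions
    classical
    set φp := phi n k p with hφp
    have hchoice : ∀ m ∈ φp.support, ∃ d : Fin e → ℕ, m = h + ∑ i, d i * n i := by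
      intro m hm
      obtain ⟨c, hc, hmc⟩ := key m hm
      rw [hgen] at hc
      obtain ⟨d, hd⟩ := hc
      exact ⟨d, by rw [hmc, hd]⟩
    choose d hd using hchoice
    set q : MvPolynomial (Fin e) k :=
      ∑ m ∈ φp.support.attach, MvPolynomial.monomial
        (Finsupp.equivFunOnFinite.symm (a + d m.1 m.2)) (φp.coeff m.1) with hq
    have hqmem : q ∈ Ideal.span {MvPolynomial.monomial
        (Finsupp.equivFunOnFinite.symm a) (1 : k)} := by
      refine Ideal.sum_mem _ fun m _ => ?_
      rw [Ideal.mem_span_singleton']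
      refine ⟨MvPolynomial.monomial (Finsupp.equivFunOnFinite.symm (d m.1 m.2))
        (φp.coeff m.1), ?_⟩
      rw [MvPolynomial.monomial_mul, mul_one, symm_add, add_comm
        (Finsupp.equivFunOnFinite.symm a) (Finsupp.equivFunOnFinite.symm (d m.1 m.2))]
    have hφq : phi n k q = φp := by
      rw [hq, map_sum]
      conv_rhs => rw [Polynomial.as_sum_support φp]
      rw [← Finset.sum_attach φp.support (fun i => Polynomial.monomial i (φp.coeff i))]
      refine Finset.sum_congr rfl fun m _ => ?_
      rw [phi_monomial, Polynomial.C_mul_X_pow_eq_monomial]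
      have hdm := hd m.1 m.2
      have hsum : ∑ i, (a + d m.1 m.2) i * n i = h + ∑ i, d m.1 m.2 i * n i := by
        rw [hh]
        rw [← Finset.sum_add_distrib]
        exact Finset.sum_congr rfl fun i _ => by simp [add_mul]
      rw [hsum, ← hdm]
    have hpq : p - q ∈ IH := by
      rw [hIHker, RingHom.mem_ker, map_sub, hφq, ← hφp, sub_self]
    have : p = (p - q) + q := by ring
    rw [this]
    exact Ideal.add_mem _ (Ideal.mem_sup_left hpq) (Ideal.mem_sup_right hqmem)
end

section
/- Let H_1 be a numerical semigroup and let d, m be positive integers with gcd(d, m) = 1 and m ∉ H_1. Let H = {d·h + s·m : h ∈ H_1, s ∈ ℕ} and let H' be the submonoid of ℕ generated by H_1 ∪ {m}. Then H and H' are numerical semigroups, and H is symmetric if and only if H' is symmetric. -/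
lemma aux_add_mul_mem {S : Set ℕ} (hSadd : ∀ a ∈ S, ∀ b ∈ S, a + b ∈ S) {m : ℕ}
    (hmS : m ∈ S) {s : ℕ} (hs : s ∈ S) (k : ℕ) : s + k * m ∈ S := by
  induction k with
  | zero => simpa using hs
  | succ n ih =>
      have h := hSadd _ ih _ hmS
      have he : s + n * m + m = s + (n + 1) * m := by ring
      rwa [he] at h

/-- Pseudo-Frobenius numbers of a gluing `H = d·S + mℕ` with `m ∈ S`. -/
lemma pf_glue (S : Set ℕ) (hS0 : 0 ∈ S) (hSadd : ∀ a ∈ S, ∀ b ∈ S, a + b ∈ S)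
    (d m : ℕ) (hd : 0 < d) (hm : 0 < m) (hmS : m ∈ S) (hcop : Nat.gcd d m = 1)
    (H : Set ℕ) (hH : H = {x | ∃ h ∈ S, ∃ s : ℕ, x = d * h + s * m}) :
    PF H = (fun f : ℤ => (d : ℤ) * f + ((d : ℤ) - 1) * m) '' PF S := by
  have hm0 : (m : ℤ) ≠ 0 := by positivity
  have hd1 : (1 : ℤ) ≤ (d : ℤ) := by exact_mod_cast hd
  have hcopZ : IsCoprime (m : ℤ) (d : ℤ) := by
    rw [Int.isCoprime_iff_gcd_eq_one]
    simpa [Int.gcd, Nat.gcd_comm] using hcop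
  have mdvd : ∀ x y : ℤ, (d : ℤ) * x = y * m → (m : ℤ) ∣ x := by
    intro x y h
    refine hcopZ.dvd_of_dvd_mul_left ⟨y, ?_⟩
    linarith [h]
  have memHZ : ∀ z : ℤ, z ∈ ((Nat.cast : ℕ → ℤ) '' H) ↔
      ∃ s ∈ S, ∃ t : ℕ, z = (d : ℤ) * s + t * m := by
    intro z
    constructor
    · rintro ⟨x, hx, rfl⟩
      rw [hH] at hx
      obtain ⟨h, hhS, t, rfl⟩ := hx
      exact ⟨h, hhS, t, by push_cast; ring⟩
    · rintro ⟨s, hs, t, rfl⟩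
      refine ⟨d * s + t * m, ?_, by push_cast; ring⟩
      rw [hH]; exact ⟨s, hs, t, rfl⟩
  have memSZ : ∀ (s : ℕ), s ∈ S → ∀ k : ℤ, 0 ≤ k →
      (s : ℤ) + k * m ∈ ((Nat.cast : ℕ → ℤ) '' S) := by
    intro s hs k hk
    obtain ⟨k', rfl⟩ := Int.eq_ofNat_of_zero_le hk
    exact ⟨s + k' * m, aux_add_mul_mem hSadd hmS hs k', by push_cast; ring⟩
  ext F
  simp only [PF, Set.mem_setOf_eq]
  constructor
  · rintro ⟨hFH, hFpf⟩
    have hmH : m ∈ H := by rw [hH]; exact ⟨0, hS0, 1, by ring⟩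
    have h1 := hFpf m hmH hm
    rw [memHZ] at h1
    obtain ⟨a, haS, b, hab⟩ := h1
    have hb0 : b = 0 := by
      by_contra hb
      apply hFH
      rw [memHZ]
      refine ⟨a, haS, b - 1, ?_⟩
      have hb1 : (1 : ℕ) ≤ b := Nat.one_le_iff_ne_zero.mpr hb
      push_cast [Nat.cast_sub hb1]
      linarith [hab]
    have hF : F = (d : ℤ) * a - m := by
      rw [hb0] at hab; push_cast at hab; linarith
    refine ⟨(a : ℤ) - m, ⟨?_, ?_⟩, by rw [hF]; ring⟩
    · rintro ⟨s, hsS, hs⟩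
      apply hFH
      rw [memHZ]
      refine ⟨s, hsS, d - 1, ?_⟩
      push_cast [Nat.cast_sub hd]
      linear_combination hF - (d : ℤ) * hs
    · intro s hsS hspos
      have hds : d * s ∈ H := by rw [hH]; exact ⟨s, hsS, 0, by ring⟩
      have h2 := hFpf (d * s) hds (Nat.mul_pos hd hspos)
      rw [memHZ] at h2
      obtain ⟨s', hs'S, t', heq⟩ := h2
      have h3 : (d : ℤ) * ((a : ℤ) + s - s') = ((t' : ℤ) + 1) * m := by
        push_cast at heq
        linear_combination heq - hF
      obtain ⟨k, hk⟩ := mdvd _ _ h3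
      have h5 : ((d : ℤ) * k) * m = ((t' : ℤ) + 1) * m := by
        rw [hk] at h3; linear_combination h3
      have h6 : (d : ℤ) * k = (t' : ℤ) + 1 := mul_right_cancel₀ hm0 h5
      have hk1 : 1 ≤ k := by
        by_contra hc
        push_neg at hc
        have hk0 : k ≤ 0 := by omega
        have : (d : ℤ) * k ≤ 0 := mul_nonpos_of_nonneg_of_nonpos (by positivity) hk0
        have ht0 : (0 : ℤ) ≤ (t' : ℤ) := Int.natCast_nonneg t'
        linarith
      have hmem := memSZ s' hs'S (k - 1) (by linarith)
      have heq2 : (a : ℤ) - m + s = (s' : ℤ) + (k - 1) * m := by linear_combination hk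
      rwa [heq2]
  · rintro ⟨f, ⟨hfS, hfPF⟩, rfl⟩
    constructor
    · intro hmem
      rw [memHZ] at hmem
      obtain ⟨h, hhS, t, heq⟩ := hmem
      have h1 : (d : ℤ) * (f - h) = ((t : ℤ) - d + 1) * m := by linear_combination heq
      obtain ⟨k, hk⟩ := mdvd _ _ h1
      have h5 : ((d : ℤ) * k) * m = ((t : ℤ) - d + 1) * m := by
        rw [hk] at h1; linear_combination h1
      have h6 : (d : ℤ) * k = (t : ℤ) - d + 1 := mul_right_cancel₀ hm0 h5
      have hk0 : 0 ≤ k := by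
        by_contra hc
        push_neg at hc
        have hk1 : k + 1 ≤ 0 := by omega
        have : (d : ℤ) * (k + 1) ≤ 0 := mul_nonpos_of_nonneg_of_nonpos (by positivity) hk1
        have ht0 : (0 : ℤ) ≤ (t : ℤ) := Int.natCast_nonneg t
        nlinarith
      have hmem2 := memSZ h hhS k hk0
      have heq2 : f = (h : ℤ) + k * m := by linear_combination hk
      exact hfS (by rwa [heq2])
    · intro x hx hxpos
      rw [hH] at hx
      obtain ⟨h, hhS, t, rfl⟩ := hx
      rcases Nat.eq_zero_or_pos h with rfl | hhpos
      · have ht : 1 ≤ t := by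
          rcases Nat.eq_zero_or_pos t with rfl | ht
          · simp at hxpos
          · exact ht
        obtain ⟨g, hgS, hgeq⟩ := hfPF m hmS hm
        rw [memHZ]
        refine ⟨g, hgS, t - 1, ?_⟩
        push_cast [Nat.cast_sub ht]
        linear_combination -(d : ℤ) * hgeq
      · obtain ⟨g, hgS, hgeq⟩ := hfPF h hhS hhpos
        rw [memHZ]
        refine ⟨g, hgS, t + (d - 1), ?_⟩
        push_cast [Nat.cast_sub hd]
        linear_combination -(d : ℤ) * hgeq

/-- with `H = {d·h + s·m}` and `H' = ⟨H₁, m⟩`, both are numerical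
semigroups and `H` is symmetric iff `H'` is symmetric. -/
theorem stmt8 (H₁ : Set ℕ) (hH₁ : IsNumericalSemigroup H₁)
    (d m : ℕ) (hd : 0 < d) (hm : 0 < m) (hcop : Nat.gcd d m = 1)
    (hmH₁ : m ∉ H₁)
    (H : Set ℕ) (hH : H = {x | ∃ h ∈ H₁, ∃ s : ℕ, x = d * h + s * m})
    (H' : Set ℕ) (hH' : H' = {x | ∃ h ∈ H₁, ∃ s : ℕ, x = h + s * m}) :
    IsNumericalSemigroup H ∧ IsNumericalSemigroup H' ∧
      ((PF H).ncard = 1 ↔ (PF H').ncard = 1) := by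
  obtain ⟨h10, h1add, h1fin⟩ := hH₁
  have hH'0 : 0 ∈ H' := by rw [hH']; exact ⟨0, h10, 0, by ring⟩
  have hH'add : ∀ a ∈ H', ∀ b ∈ H', a + b ∈ H' := by
    rw [hH']
    rintro a ⟨h1, hh1, s1, rfl⟩ b ⟨h2, hh2, s2, rfl⟩
    exact ⟨h1 + h2, h1add _ hh1 _ hh2, s1 + s2, by ring⟩
  have hsub : H₁ ⊆ H' := by
    intro h hh; rw [hH']; exact ⟨h, hh, 0, by ring⟩
  have hH'fin : H'ᶜ.Finite := h1fin.subset (Set.compl_subset_compl.mpr hsub)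
  have hmH' : m ∈ H' := by rw [hH']; exact ⟨0, h10, 1, by ring⟩
  have hH0 : 0 ∈ H := by rw [hH]; exact ⟨0, h10, 0, by ring⟩
  have hHadd : ∀ a ∈ H, ∀ b ∈ H, a + b ∈ H := by
    rw [hH]
    rintro a ⟨h1, hh1, s1, rfl⟩ b ⟨h2, hh2, s2, rfl⟩
    exact ⟨h1 + h2, h1add _ hh1 _ hh2, s1 + s2, by ring⟩
  -- cofiniteness of H
  obtain ⟨c, hc⟩ := h1fin.bddAbove
  have hc1 : ∀ k : ℕ, c + 1 ≤ k → k ∈ H₁ := by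
    intro k hk
    by_contra hkn
    have := hc hkn
    omega
  have hHfin : Hᶜ.Finite := by
    have hbig : ∀ n : ℕ, d * (c + 1) + d * m ≤ n → n ∈ H := by
      intro n hn
      haveI : NeZero d := ⟨hd.ne'⟩
      have hcop' : Nat.Coprime m d := Nat.Coprime.symm hcop
      set u := ZMod.unitOfCoprime m hcop' with hu
      set r := n - d * (c + 1) with hr
      have hrn : n = d * (c + 1) + r := by omega
      have hrge : d * m ≤ r := by omega
      set b := (((r : ZMod d)) * ↑u⁻¹).val with hb
      have hblt : b < d := ZMod.val_lt _
      have hbm : b * m ≤ r :=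
        le_trans (Nat.mul_le_mul_right m (by omega)) hrge
      have hdvd : d ∣ r - b * m := by
        rw [← ZMod.natCast_eq_zero_iff]
        have hbz : ((b : ℕ) : ZMod d) = (r : ZMod d) * ↑u⁻¹ := by
          rw [hb, ZMod.natCast_val, ZMod.cast_id]
        have hmu : ((m : ℕ) : ZMod d) = (u : ZMod d) := (ZMod.coe_unitOfCoprime m hcop').symm
        push_cast [Nat.cast_sub hbm]
        rw [hbz, hmu]
        rw [mul_assoc, Units.inv_mul, mul_one, sub_self]
      obtain ⟨a', ha'⟩ := hdvd
      have hreq : r = d * a' + b * m := by omega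
      rw [hH]
      refine ⟨c + 1 + a', hc1 _ (by omega), b, by rw [hrn, hreq]; ring⟩
    refine Set.Finite.subset (Set.finite_Iio (d * (c + 1) + d * m)) ?_
    intro x hx
    by_contra hxn
    simp only [Set.mem_Iio, not_lt] at hxn
    exact hx (hbig x hxn)
  -- H = d·H' + mℕ
  have hHalt : H = {x | ∃ h ∈ H', ∃ s : ℕ, x = d * h + s * m} := by
    ext x
    rw [hH, hH']
    simp only [Set.mem_setOf_eq]
    constructor
    · rintro ⟨h, hh, s, rfl⟩
      exact ⟨h, ⟨h, hh, 0, by ring⟩, s, rfl⟩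
    · rintro ⟨_, ⟨h, hh, u, rfl⟩, s, rfl⟩
      exact ⟨h, hh, d * u + s, by ring⟩
  have hpf := pf_glue H' hH'0 hH'add d m hd hm hmH' hcop H hHalt
  have hinj : Function.Injective (fun f : ℤ => (d : ℤ) * f + ((d : ℤ) - 1) * m) := by
    intro a b hab
    simp only at hab
    have hd0 : (d : ℤ) ≠ 0 := by positivity
    have : (d : ℤ) * a = (d : ℤ) * b := by linarith
    exact mul_left_cancel₀ hd0 this
  have hcard : (PF H).ncard = (PF H').ncard := by
    rw [hpf, Set.ncard_image_of_injective _ hinj]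
  exact ⟨⟨hH0, hHadd, hHfin⟩, ⟨hH'0, hH'add, hH'fin⟩, by rw [hcard]⟩
end

section
/- Let H_1 be a numerical semigroup and let d, m be positive integers with gcd(d, m) = 1 and m ∉ H_1. Let H = {d·h + s·m : h ∈ H_1, s ∈ ℕ} and let H' be the submonoid of ℕ generated by H_1 ∪ {m}. Then: (i) for every f ∈ PF(H'), the integer d·f + (d−1)·m belongs to PF(H); and (ii) if H' is symmetric, then PF(H) = {d·Fr(H') + (d−1)·m}, so that H is symmetric with Fr(H) = d·Fr(H') + (d−1)·m. -/
/-- The Frobenius number of `H`, as an integer (so `FrobZ ℕ = -1`). -/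
noncomputable def FrobZ (H : Set ℕ) : ℤ :=
  sSup {z : ℤ | z ∉ ((Nat.cast : ℕ → ℤ) '' H)}

/-- with `H = {d·h + s·m}` and `H' = ⟨H₁, m⟩`:
(i) `f ∈ PF(H')` implies `d·f + (d−1)·m ∈ PF(H)`; and
(ii) if `H'` is symmetric then `PF(H) = {d·Fr(H') + (d−1)·m}`, so `H` is
symmetric with `Fr(H) = d·Fr(H') + (d−1)·m`. -/
theorem stmt9 (H₁ : Set ℕ) (hH₁ : IsNumericalSemigroup H₁)
    (d m : ℕ) (hd : 0 < d) (hm : 0 < m) (hcop : Nat.gcd d m = 1)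
    (hmH₁ : m ∉ H₁)
    (H : Set ℕ) (hH : H = {x | ∃ h ∈ H₁, ∃ s : ℕ, x = d * h + s * m})
    (H' : Set ℕ) (hH' : H' = {x | ∃ h ∈ H₁, ∃ s : ℕ, x = h + s * m}) :
    (∀ f ∈ PF H', (d : ℤ) * f + ((d : ℤ) - 1) * m ∈ PF H) ∧
    ((PF H').ncard = 1 →
      PF H = {(d : ℤ) * FrobZ H' + ((d : ℤ) - 1) * m} ∧
      (PF H).ncard = 1 ∧
      FrobZ H = (d : ℤ) * FrobZ H' + ((d : ℤ) - 1) * m) := by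
  obtain ⟨h01, hadd1, hfin1⟩ := hH₁
  have hdZ : (0:ℤ) < (d:ℤ) := by exact_mod_cast hd
  have hmZ : (0:ℤ) < (m:ℤ) := by exact_mod_cast hm
  have hcop' : IsCoprime (d:ℤ) (m:ℤ) := by
    rw [Int.isCoprime_iff_gcd_eq_one, Int.gcd_natCast_natCast, hcop]
  -- intro/elim lemmas
  have memH'_intro : ∀ h ∈ H₁, ∀ s : ℕ, h + s * m ∈ H' := by
    intro h hh s; rw [hH']; exact ⟨h, hh, s, rfl⟩
  have memH'_elim : ∀ x ∈ H', ∃ h ∈ H₁, ∃ s : ℕ, x = h + s * m := by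
    intro x hx; rw [hH'] at hx; exact hx
  have memH_intro : ∀ h ∈ H₁, ∀ s : ℕ, d * h + s * m ∈ H := by
    intro h hh s; rw [hH]; exact ⟨h, hh, s, rfl⟩
  have memH_elim : ∀ x ∈ H, ∃ h ∈ H₁, ∃ s : ℕ, x = d * h + s * m := by
    intro x hx; rw [hH] at hx; exact hx
  have h0H' : (0:ℕ) ∈ H' := by simpa using memH'_intro 0 h01 0
  have hmH' : m ∈ H' := by simpa using memH'_intro 0 h01 1
  have hmH : m ∈ H := by simpa using memH_intro 0 h01 1
  have hsub1 : H₁ ⊆ H' := fun h hh => by simpa using memH'_intro h hh 0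
  have haddH' : ∀ a ∈ H', ∀ b ∈ H', a + b ∈ H' := by
    intro a ha b hb
    obtain ⟨h1, hh1, s1, rfl⟩ := memH'_elim a ha
    obtain ⟨h2, hh2, s2, rfl⟩ := memH'_elim b hb
    have := memH'_intro (h1 + h2) (hadd1 h1 hh1 h2 hh2) (s1 + s2)
    convert this using 1; ring
  have memH_of_H' : ∀ h' ∈ H', ∀ r : ℕ, d * h' + r * m ∈ H := by
    intro h' hh' r
    obtain ⟨h, hh, s, rfl⟩ := memH'_elim h' hh'
    have := memH_intro h hh (d * s + r)
    convert this using 1; ring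
  have decompH : ∀ x ∈ H, ∃ h' ∈ H', ∃ r : ℕ, r < d ∧ x = d * h' + r * m := by
    intro x hx
    obtain ⟨h, hh, s, rfl⟩ := memH_elim x hx
    refine ⟨h + (s / d) * m, memH'_intro h hh (s / d), s % d, Nat.mod_lt _ hd, ?_⟩
    have h1 : d * (s / d) + s % d = s := Nat.div_add_mod s d
    calc d * h + s * m = d * h + (d * (s / d) + s % d) * m := by rw [h1]
      _ = d * (h + (s / d) * m) + (s % d) * m := by ring
  -- uniqueness of decomposition over ℤ
  have huniq : ∀ (k₁ k₂ : ℤ) (r₁ r₂ : ℕ), r₁ < d → r₂ < d →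
      (d:ℤ) * k₁ + (r₁:ℤ) * m = (d:ℤ) * k₂ + (r₂:ℤ) * m → r₁ = r₂ ∧ k₁ = k₂ := by
    intro k₁ k₂ r₁ r₂ hr₁ hr₂ heq
    have hdvd : (d:ℤ) ∣ ((r₂:ℤ) - r₁) * m := ⟨k₁ - k₂, by linear_combination -heq⟩
    have hdvd' : (d:ℤ) ∣ ((r₂:ℤ) - r₁) := hcop'.dvd_of_dvd_mul_right hdvd
    have h0 : ((r₂:ℤ) - r₁) = 0 :=
      Int.eq_zero_of_dvd_of_natAbs_lt_natAbs hdvd' (by omega)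
    have hrr : r₁ = r₂ := by omega
    subst hrr
    refine ⟨rfl, ?_⟩
    have hk : (d:ℤ) * k₁ = (d:ℤ) * k₂ := by linarith
    exact mul_left_cancel₀ hdZ.ne' hk
  -- ℤ-image membership
  have memA_of : ∀ k : ℤ, k ∈ ((Nat.cast : ℕ → ℤ) '' H') → ∀ r : ℕ,
      (d:ℤ) * k + (r:ℤ) * m ∈ ((Nat.cast : ℕ → ℤ) '' H) := by
    rintro k ⟨n, hn, rfl⟩ r
    exact ⟨d * n + r * m, memH_of_H' n hn r, by push_cast; ring⟩
  have notmemA : ∀ (k : ℤ) (r : ℕ), r < d → k ∉ ((Nat.cast : ℕ → ℤ) '' H') →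
      (d:ℤ) * k + (r:ℤ) * m ∉ ((Nat.cast : ℕ → ℤ) '' H) := by
    rintro k r hr hk ⟨x, hx, hxe⟩
    obtain ⟨h', hh', r', hr', rfl⟩ := decompH x hx
    have heq : (d:ℤ) * (h':ℤ) + (r':ℤ) * m = (d:ℤ) * k + (r:ℤ) * m := by
      push_cast at hxe; linarith
    obtain ⟨hre, hke⟩ := huniq (h':ℤ) k r' r hr' hr heq
    exact hk ⟨h', hh', hke⟩
  -- decomposition of arbitrary integers
  have decompZ : ∀ g : ℤ, ∃ (k : ℤ) (r : ℕ), r < d ∧ g = (d:ℤ) * k + (r:ℤ) * m := by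
    intro g
    obtain ⟨u, v, huv⟩ := hcop'
    set q := (g * v) / d with hq
    set r := (g * v) % d with hr
    have hr0 : 0 ≤ r := Int.emod_nonneg _ hdZ.ne'
    have hrd : r < d := Int.emod_lt_of_pos _ hdZ
    have hrq : r = g * v - d * q := by rw [hr, hq, Int.emod_def]
    refine ⟨g * u + q * m, r.toNat, by omega, ?_⟩
    have h1 : (r.toNat : ℤ) = r := Int.toNat_of_nonneg hr0
    rw [h1, hrq]
    linear_combination (-g) * huv
  -- Part (i)
  have partI : ∀ f ∈ PF H', (d:ℤ) * f + ((d:ℤ) - 1) * m ∈ PF H := by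
    intro f hf
    simp only [PF, Set.mem_setOf_eq] at hf ⊢
    obtain ⟨hf1, hf2⟩ := hf
    have hc : ((d - 1 : ℕ) : ℤ) = (d:ℤ) - 1 := by omega
    constructor
    · have := notmemA f (d-1) (by omega) hf1
      rw [hc] at this; exact this
    · intro h hh hhpos
      obtain ⟨h', hh', r, hr, rfl⟩ := decompH h hh
      by_cases hr0 : r = 0
      · subst hr0
        have hne0 : h' ≠ 0 := by rintro rfl; simp at hhpos
        obtain ⟨n, hn, hne⟩ := hf2 h' hh' (Nat.pos_of_ne_zero hne0)
        refine ⟨d * n + (d-1) * m, memH_of_H' n hn (d-1), ?_⟩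
        push_cast [hc]
        linear_combination (d:ℤ) * hne
      · obtain ⟨n, hn, hne⟩ := hf2 (h' + m) (haddH' h' hh' m hmH') (Nat.add_pos_right h' hm)
        refine ⟨d * n + (r-1) * m, memH_of_H' n hn (r-1), ?_⟩
        have hc2 : ((r - 1 : ℕ) : ℤ) = (r:ℤ) - 1 := by omega
        push_cast [hc2] at hne ⊢
        linear_combination (d:ℤ) * hne
  refine ⟨partI, ?_⟩
  intro hone
  -- H' complement is bounded
  obtain ⟨N, hN⟩ := hfin1.bddAbove
  have hNH' : ∀ n : ℕ, N + 1 ≤ n → n ∈ H' := by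
    intro n hn
    by_contra hc
    have h1 : n ∈ H₁ᶜ := fun h' => hc (hsub1 h')
    have := hN h1
    omega
  have hS'ne : (-1 : ℤ) ∈ {z : ℤ | z ∉ ((Nat.cast : ℕ → ℤ) '' H')} := by
    rintro ⟨n, _, hn⟩; omega
  have hS'bdd : BddAbove {z : ℤ | z ∉ ((Nat.cast : ℕ → ℤ) '' H')} := by
    refine ⟨(N:ℤ) + 1, fun z hz => ?_⟩
    by_contra hlt
    push_neg at hlt
    exact hz ⟨z.toNat, hNH' z.toNat (by omega), by omega⟩
  have hF'mem : FrobZ H' ∉ ((Nat.cast : ℕ → ℤ) '' H') :=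
    Int.csSup_mem ⟨-1, hS'ne⟩ hS'bdd
  have hF'ub : ∀ z : ℤ, z ∉ ((Nat.cast : ℕ → ℤ) '' H') → z ≤ FrobZ H' :=
    fun z hz => le_csSup hS'bdd hz
  have hF'PF : FrobZ H' ∈ PF H' := by
    refine ⟨hF'mem, fun h hh hpos => ?_⟩
    by_contra hc
    have h1 := hF'ub _ hc
    have h2 : (0:ℤ) < (h:ℤ) := by exact_mod_cast hpos
    omega
  obtain ⟨a, ha⟩ := Set.ncard_eq_one.mp hone
  have haF : a = FrobZ H' := by
    have := hF'PF; rw [ha, Set.mem_singleton_iff] at this; omega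
  have hPF' : PF H' = {FrobZ H'} := by rw [ha, haF]
  -- symmetry
  have hsym : ∀ z : ℤ, z ∉ ((Nat.cast : ℕ → ℤ) '' H') →
      FrobZ H' - z ∈ ((Nat.cast : ℕ → ℤ) '' H') := by
    intro z hz
    by_contra hc
    set T : Set ℤ := {w | w ∉ ((Nat.cast : ℕ → ℤ) '' H') ∧
      FrobZ H' - w ∉ ((Nat.cast : ℕ → ℤ) '' H')} with hT
    have hTz : z ∈ T := ⟨hz, hc⟩
    have hTbdd : BddAbove T := ⟨FrobZ H', fun w hw => hF'ub w hw.1⟩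
    have hmax := Int.csSup_mem ⟨z, hTz⟩ hTbdd
    obtain ⟨hw1, hw2⟩ := hmax
    have hwPF : sSup T ∈ PF H' := by
      refine ⟨hw1, fun h hh hpos => ?_⟩
      by_contra hc2
      have hT2 : sSup T + (h:ℤ) ∈ T := by
        refine ⟨hc2, fun hmem => ?_⟩
        obtain ⟨n, hn, hne⟩ := hmem
        exact hw2 ⟨n + h, haddH' n hn h hh, by push_cast; push_cast at hne; linarith⟩
      have h1 := le_csSup hTbdd hT2
      have h2 : (0:ℤ) < (h:ℤ) := by exact_mod_cast hpos
      omega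
    have hwF : sSup T = FrobZ H' := by
      rw [hPF', Set.mem_singleton_iff] at hwPF; exact hwPF
    apply hw2
    rw [hwF]
    exact ⟨0, h0H', by simp⟩
  set G : ℤ := (d:ℤ) * FrobZ H' + ((d:ℤ) - 1) * m with hG
  have hGPF : G ∈ PF H := partI _ hF'PF
  have hGnot : G ∉ ((Nat.cast : ℕ → ℤ) '' H) := hGPF.1
  -- PF H ⊆ {G}
  have hsubset : PF H ⊆ {G} := by
    intro g hg
    simp only [PF, Set.mem_setOf_eq] at hg
    obtain ⟨hg1, hg2⟩ := hg
    obtain ⟨k, r, hr, rfl⟩ := decompZ g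
    have hk : k ∉ ((Nat.cast : ℕ → ℤ) '' H') := fun hk => hg1 (memA_of k hk r)
    have hrd : r = d - 1 := by
      by_contra hne
      have hr1 : r + 1 < d := by omega
      have hmem := hg2 m hmH hm
      apply notmemA k (r+1) hr1 hk
      have : (d:ℤ) * k + ((r+1:ℕ):ℤ) * m = ((d:ℤ) * k + (r:ℤ) * m) + (m:ℤ) := by
        push_cast; ring
      rw [this]; exact hmem
    have hkF : k = FrobZ H' := by
      have hkle := hF'ub k hk
      rcases eq_or_lt_of_le hkle with h | h
      · exact h
      · exfalso
        obtain ⟨n, hn, hne⟩ := hsym k hk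
        have hnpos : 0 < n := by
          have : (0:ℤ) < (n:ℤ) := by omega
          exact_mod_cast this
        have hdn : d * n ∈ H := by simpa using memH_of_H' n hn 0
        have hmem := hg2 (d*n) hdn (Nat.mul_pos hd hnpos)
        apply notmemA (FrobZ H') r hr hF'mem
        have : (d:ℤ) * FrobZ H' + (r:ℤ) * m
            = ((d:ℤ) * k + (r:ℤ) * m) + ((d*n : ℕ):ℤ) := by
          push_cast; linear_combination (-(d:ℤ)) * hne
        rw [this]; exact hmem
    simp only [Set.mem_singleton_iff, hG, hkF]
    have : (r:ℤ) = (d:ℤ) - 1 := by omega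
    rw [this]
  have hPFH : PF H = {G} := by
    refine Set.Subset.antisymm hsubset ?_
    simpa using hGPF
  refine ⟨hPFH, by rw [hPFH]; exact Set.ncard_singleton _, ?_⟩
  -- Frobenius number of H
  have hub : ∀ z : ℤ, z ∉ ((Nat.cast : ℕ → ℤ) '' H) → z ≤ G := by
    intro z hz
    obtain ⟨k, r, hr, rfl⟩ := decompZ z
    have hk : k ∉ ((Nat.cast : ℕ → ℤ) '' H') := fun hk => hz (memA_of k hk r)
    have hkle := hF'ub k hk
    have hrle : (r:ℤ) ≤ (d:ℤ) - 1 := by omega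
    have h1 : (d:ℤ) * k ≤ (d:ℤ) * FrobZ H' :=
      mul_le_mul_of_nonneg_left hkle (by positivity)
    have h2 : (r:ℤ) * m ≤ ((d:ℤ) - 1) * m :=
      mul_le_mul_of_nonneg_right hrle (by positivity)
    rw [hG]; linarith
  show FrobZ H = G
  exact IsGreatest.csSup_eq ⟨hGnot, fun z hz => hub z hz⟩
end

section
/- Let H_1, H_2 be numerical semigroups generated respectively by positive integers n^{(1)}_1,…,n^{(1)}_{e_1} and n^{(2)}_1,…,n^{(2)}_{e_2}, and let d_1 ∈ H_2 and d_2 ∈ H_1 be coprime positive integers. For m_1 ∈ H_1 and m_2 ∈ H_2, set m = d_1 m_1 + d_2 m_2. Then the number of tuples (a, b) ∈ ℕ^{e_1} × ℕ^{e_2} with d_1·(∑_{i=1}^{e_1} a_i n^{(1)}_i) + d_2·(∑_{j=1}^{e_2} b_j n^{(2)}_j) = m equals ∑_{d ∈ ℤ} F_1(m_1 + d·d_2)·F_2(m_2 − d·d_1), where for l = 1, 2 and an integer x, F_l(x) is the number of tuples c ∈ ℕ^{e_l} with ∑_i c_i n^{(l)}_i = x when x ≥ 0 and F_l(x) = 0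 when x < 0 (only finitely many terms of the sum are nonzero). -/
private lemma sum_update_zero_nat {e : ℕ} (n : Fin e → ℕ) (i : Fin e) (hi : n i = 0)
    (a : Fin e → ℕ) (t : ℕ) :
    ∑ j, Function.update a i t j * n j = ∑ j, a j * n j := by
  refine Finset.sum_congr rfl fun j _ => ?_
  rcases eq_or_ne j i with rfl | h
  · simp [hi]
  · simp [Function.update_of_ne h]

private lemma sum_update_zero_int {e : ℕ} (n : Fin e → ℕ) (i : Fin e) (hi : n i = 0)
    (a : Fin e → ℕ) (t : ℕ) :
    ∑ j, (Function.update a i t j : ℤ) * n j = ∑ j, (a j : ℤ) * n j := by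
  refine Finset.sum_congr rfl fun j _ => ?_
  rcases eq_or_ne j i with rfl | h
  · simp [hi]
  · simp [Function.update_of_ne h]

private lemma ncard_zero_of_zero_gen {e : ℕ} (n : Fin e → ℕ) (i : Fin e) (hi : n i = 0)
    (x : ℤ) : {a : Fin e → ℕ | (∑ j, (a j : ℤ) * n j) = x}.ncard = 0 := by
  rcases Set.eq_empty_or_nonempty {a : Fin e → ℕ | (∑ j, (a j : ℤ) * n j) = x} with h | ⟨a, ha⟩
  · simp [h]
  · apply Set.Infinite.ncard
    apply Set.infinite_of_injective_forall_mem
      (f := fun t : ℕ => Function.update a i t)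
    · intro t t' h
      have := congrFun h i
      simpa using this
    · intro t
      simp only [Set.mem_setOf_eq, sum_update_zero_int n i hi]
      exact ha

private lemma finite_sol {e : ℕ} (n : Fin e → ℕ) (hn : ∀ i, 0 < n i) (x : ℤ) :
    {a : Fin e → ℕ | (∑ i, (a i : ℤ) * n i) = x}.Finite := by
  apply Set.Finite.subset (Set.Finite.pi (fun i : Fin e => Set.finite_Iic x.toNat))
  intro a ha
  simp only [Set.mem_setOf_eq] at ha
  simp only [Set.mem_pi, Set.mem_univ, Set.mem_Iic, forall_true_left]
  intro i
  have h1 : (a i : ℤ) ≤ x := by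
    calc (a i : ℤ) ≤ (a i : ℤ) * n i := by
          have : (1 : ℤ) ≤ n i := by exact_mod_cast hn i
          nlinarith [Int.ofNat_nonneg (a i)]
      _ ≤ ∑ j, (a j : ℤ) * n j :=
          Finset.single_le_sum (f := fun j => (a j : ℤ) * n j)
            (fun j _ => by positivity) (Finset.mem_univ i)
      _ = x := ha
  omega

private lemma nonneg_of_sol {e : ℕ} {n : Fin e → ℕ} {x : ℤ}
    (h : {a : Fin e → ℕ | (∑ i, (a i : ℤ) * n i) = x}.Nonempty) : 0 ≤ x := by
  obtain ⟨a, ha⟩ := h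
  rw [Set.mem_setOf_eq] at ha
  have : (0 : ℤ) ≤ ∑ i, (a i : ℤ) * n i := Finset.sum_nonneg fun i _ => by positivity
  rwa [ha] at this

/-- counting factorizations in a gluing
`H = ⟨d₁H₁, d₂H₂⟩` at `m = d₁m₁ + d₂m₂`. -/
theorem stmt10 {e₁ e₂ : ℕ} (n₁ : Fin e₁ → ℕ) (n₂ : Fin e₂ → ℕ)
    (H₁ H₂ : Set ℕ)
    (hH₁ : IsNumericalSemigroup H₁) (hH₂ : IsNumericalSemigroup H₂)
    (hgen₁ : H₁ = {x | ∃ a : Fin e₁ → ℕ, x = ∑ i, a i * n₁ i})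
    (hgen₂ : H₂ = {x | ∃ b : Fin e₂ → ℕ, x = ∑ j, b j * n₂ j})
    (d₁ d₂ : ℕ) (hd₁pos : 0 < d₁) (hd₂pos : 0 < d₂)
    (hd₁ : d₁ ∈ H₂) (hd₂ : d₂ ∈ H₁) (hcop : Nat.gcd d₁ d₂ = 1)
    (m₁ m₂ m : ℕ) (hm₁ : m₁ ∈ H₁) (hm₂ : m₂ ∈ H₂) (hm : m = d₁ * m₁ + d₂ * m₂)
    (F₁ F₂ : ℤ → ℕ)
    (hF₁ : ∀ x : ℤ, F₁ x = {a : Fin e₁ → ℕ | (∑ i, (a i : ℤ) * n₁ i) = x}.ncard)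
    (hF₂ : ∀ x : ℤ, F₂ x = {b : Fin e₂ → ℕ | (∑ j, (b j : ℤ) * n₂ j) = x}.ncard) :
    {p : (Fin e₁ → ℕ) × (Fin e₂ → ℕ) |
        d₁ * (∑ i, p.1 i * n₁ i) + d₂ * (∑ j, p.2 j * n₂ j) = m}.ncard =
      ∑ᶠ d : ℤ, F₁ ((m₁ : ℤ) + d * d₂) * F₂ ((m₂ : ℤ) - d * d₁) := by
  rw [hgen₁] at hm₁; rw [hgen₂] at hm₂
  obtain ⟨a₀, ha₀⟩ := hm₁
  obtain ⟨b₀, hb₀⟩ := hm₂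
  by_cases h1 : ∃ i, n₁ i = 0
  · obtain ⟨i, hi⟩ := h1
    have hL : {p : (Fin e₁ → ℕ) × (Fin e₂ → ℕ) |
        d₁ * (∑ i, p.1 i * n₁ i) + d₂ * (∑ j, p.2 j * n₂ j) = m}.ncard = 0 := by
      apply Set.Infinite.ncard
      apply Set.infinite_of_injective_forall_mem
        (f := fun t : ℕ => (Function.update a₀ i t, b₀))
      · intro t t' h
        have := congrFun (congrArg Prod.fst h) i
        simpa using this
      · intro t
        simp only [Set.mem_setOf_eq, sum_update_zero_nat n₁ i hi]
        rw [hm, ha₀, hb₀]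
    have hR : ∀ d : ℤ, F₁ ((m₁ : ℤ) + d * d₂) * F₂ ((m₂ : ℤ) - d * d₁) = 0 := by
      intro d
      rw [hF₁, ncard_zero_of_zero_gen n₁ i hi, Nat.zero_mul]
    rw [hL, finsum_eq_zero_of_forall_eq_zero hR]
  by_cases h2 : ∃ j, n₂ j = 0
  · obtain ⟨j, hj⟩ := h2
    have hL : {p : (Fin e₁ → ℕ) × (Fin e₂ → ℕ) |
        d₁ * (∑ i, p.1 i * n₁ i) + d₂ * (∑ j, p.2 j * n₂ j) = m}.ncard = 0 := by
      apply Set.Infinite.ncard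
      apply Set.infinite_of_injective_forall_mem
        (f := fun t : ℕ => (a₀, Function.update b₀ j t))
      · intro t t' h
        have := congrFun (congrArg Prod.snd h) j
        simpa using this
      · intro t
        simp only [Set.mem_setOf_eq, sum_update_zero_nat n₂ j hj]
        rw [hm, ha₀, hb₀]
    have hR : ∀ d : ℤ, F₁ ((m₁ : ℤ) + d * d₂) * F₂ ((m₂ : ℤ) - d * d₁) = 0 := by
      intro d
      rw [hF₂, ncard_zero_of_zero_gen n₂ j hj, Nat.mul_zero]
    rw [hL, finsum_eq_zero_of_forall_eq_zero hR]
  push_neg at h1 h2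
  have hn₁ : ∀ i, 0 < n₁ i := fun i => Nat.pos_of_ne_zero (h1 i)
  have hn₂ : ∀ j, 0 < n₂ j := fun j => Nat.pos_of_ne_zero (h2 j)
  set A : ℤ → Set (Fin e₁ → ℕ) := fun x => {a | (∑ i, (a i : ℤ) * n₁ i) = x} with hA
  set B : ℤ → Set (Fin e₂ → ℕ) := fun x => {b | (∑ j, (b j : ℤ) * n₂ j) = x} with hB
  have hAfin : ∀ x, (A x).Finite := fun x => finite_sol n₁ hn₁ x
  have hBfin : ∀ x, (B x).Finite := fun x => finite_sol n₂ hn₂ x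
  set S : Finset ℤ := Finset.Icc (-(m₁ : ℤ)) (m₂ : ℤ) with hS
  -- the interval bound
  have hbound : ∀ d : ℤ, 0 ≤ (m₁ : ℤ) + d * d₂ → 0 ≤ (m₂ : ℤ) - d * d₁ → d ∈ S := by
    intro d hx hy
    rw [hS, Finset.mem_Icc]
    have hd1 : (1 : ℤ) ≤ d₁ := by exact_mod_cast hd₁pos
    have hd2 : (1 : ℤ) ≤ d₂ := by exact_mod_cast hd₂pos
    constructor
    · rcases le_or_gt 0 d with h | h
      · have : (0 : ℤ) ≤ m₁ := Int.ofNat_nonneg m₁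
        linarith
      · have : d * d₂ ≤ d * 1 := mul_le_mul_of_nonpos_left hd2 h.le
        linarith
    · rcases le_or_gt d 0 with h | h
      · have : (0 : ℤ) ≤ m₂ := Int.ofNat_nonneg m₂
        linarith
      · have : d * 1 ≤ d * d₁ := mul_le_mul_of_nonneg_left hd1 h.le
        linarith
  -- membership characterization
  have hmem : ∀ p : (Fin e₁ → ℕ) × (Fin e₂ → ℕ),
      (d₁ * (∑ i, p.1 i * n₁ i) + d₂ * (∑ j, p.2 j * n₂ j) = m) ↔
      ∃ d ∈ S, p.1 ∈ A ((m₁ : ℤ) + d * d₂) ∧ p.2 ∈ B ((m₂ : ℤ) - d * d₁) := by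
    intro p
    constructor
    · intro hp
      have key : (d₁ : ℤ) * ((∑ i, (p.1 i : ℤ) * n₁ i) - m₁) =
          (d₂ : ℤ) * ((m₂ : ℤ) - ∑ j, (p.2 j : ℤ) * n₂ j) := by
        have := congrArg (fun x : ℕ => (x : ℤ)) hp
        push_cast [hm] at this
        ring_nf
        ring_nf at this
        linarith
      have hc : IsCoprime (d₂ : ℤ) (d₁ : ℤ) := by
        rw [Int.isCoprime_iff_gcd_eq_one, Int.gcd_natCast_natCast, Nat.gcd_comm]
        exact hcop
      have hdvd : (d₂ : ℤ) ∣ (∑ i, (p.1 i : ℤ) * n₁ i) - m₁ := by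
        apply hc.dvd_of_dvd_mul_left
        exact ⟨(m₂ : ℤ) - ∑ j, (p.2 j : ℤ) * n₂ j, key⟩
      obtain ⟨d, hd⟩ := hdvd
      refine ⟨d, ?_, ?_, ?_⟩
      · apply hbound
        · have : (0 : ℤ) ≤ ∑ i, (p.1 i : ℤ) * n₁ i :=
            Finset.sum_nonneg fun i _ => by positivity
          rw [mul_comm] at hd
          linarith
        · have h2' : (d₂ : ℤ) * ((m₂ : ℤ) - ∑ j, (p.2 j : ℤ) * n₂ j) =
              (d₂ : ℤ) * (d * d₁) := by rw [← key, hd]; ring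
          have hd2ne : (d₂ : ℤ) ≠ 0 := by positivity
          have h3 := mul_left_cancel₀ hd2ne h2'
          have : (0 : ℤ) ≤ ∑ j, (p.2 j : ℤ) * n₂ j :=
            Finset.sum_nonneg fun j _ => by positivity
          linarith
      · show (∑ i, (p.1 i : ℤ) * n₁ i) = (m₁ : ℤ) + d * d₂
        linarith [hd]
      · show (∑ j, (p.2 j : ℤ) * n₂ j) = (m₂ : ℤ) - d * d₁
        have h2' : (d₂ : ℤ) * ((m₂ : ℤ) - ∑ j, (p.2 j : ℤ) * n₂ j) =
            (d₂ : ℤ) * (d * d₁) := by rw [← key, hd]; ring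
        have hd2ne : (d₂ : ℤ) ≠ 0 := by positivity
        have h3 := mul_left_cancel₀ hd2ne h2'
        linarith
    · rintro ⟨d, _, ha, hb⟩
      have ha' : (∑ i, (p.1 i : ℤ) * n₁ i) = (m₁ : ℤ) + d * d₂ := ha
      have hb' : (∑ j, (p.2 j : ℤ) * n₂ j) = (m₂ : ℤ) - d * d₁ := hb
      have : (d₁ : ℤ) * (∑ i, (p.1 i : ℤ) * n₁ i) +
          (d₂ : ℤ) * (∑ j, (p.2 j : ℤ) * n₂ j) = (m : ℤ) := by
        rw [ha', hb', hm]; push_cast; ring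
      exact_mod_cast by push_cast at this ⊢; linarith
  -- the finset version of the LHS set
  set T : Finset ((Fin e₁ → ℕ) × (Fin e₂ → ℕ)) :=
    S.biUnion (fun d => (hAfin ((m₁ : ℤ) + d * d₂)).toFinset ×ˢ
      (hBfin ((m₂ : ℤ) - d * d₁)).toFinset) with hT
  have hPT : {p : (Fin e₁ → ℕ) × (Fin e₂ → ℕ) |
      d₁ * (∑ i, p.1 i * n₁ i) + d₂ * (∑ j, p.2 j * n₂ j) = m} = ↑T := by
    ext p
    simp only [Set.mem_setOf_eq, hmem p, hT, Finset.coe_biUnion, Set.mem_iUnion,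
      Finset.mem_coe, Finset.mem_product, Set.Finite.mem_toFinset, exists_prop]
  have hdisj : ∀ d ∈ S, ∀ d' ∈ S, d ≠ d' →
      Disjoint ((hAfin ((m₁ : ℤ) + d * d₂)).toFinset ×ˢ
        (hBfin ((m₂ : ℤ) - d * d₁)).toFinset)
        ((hAfin ((m₁ : ℤ) + d' * d₂)).toFinset ×ˢ
        (hBfin ((m₂ : ℤ) - d' * d₁)).toFinset) := by
    intro d _ d' _ hdd'
    rw [Finset.disjoint_left]
    rintro p hp hp'
    simp only [Finset.mem_product, Set.Finite.mem_toFinset] at hp hp'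
    have h1' : (∑ i, (p.1 i : ℤ) * n₁ i) = (m₁ : ℤ) + d * d₂ := hp.1
    have h2' : (∑ i, (p.1 i : ℤ) * n₁ i) = (m₁ : ℤ) + d' * d₂ := hp'.1
    have hd2 : (0 : ℤ) < d₂ := by exact_mod_cast hd₂pos
    apply hdd'
    have : d * d₂ = d' * d₂ := by linarith
    exact mul_right_cancel₀ (by positivity) this
  have hsupp : (Function.support fun d : ℤ =>
      F₁ ((m₁ : ℤ) + d * d₂) * F₂ ((m₂ : ℤ) - d * d₁)) ⊆ ↑S := by
    intro d hd
    simp only [Function.mem_support, Ne, Nat.mul_eq_zero, not_or] at hd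
    have hAne : (A ((m₁ : ℤ) + d * d₂)).Nonempty := by
      rw [Set.nonempty_iff_ne_empty]
      intro h
      apply hd.1
      rw [hF₁]
      have : {a : Fin e₁ → ℕ | (∑ i, (a i : ℤ) * n₁ i) = (m₁ : ℤ) + d * d₂} =
        A ((m₁ : ℤ) + d * d₂) := rfl
      rw [this, h, Set.ncard_empty]
    have hBne : (B ((m₂ : ℤ) - d * d₁)).Nonempty := by
      rw [Set.nonempty_iff_ne_empty]
      intro h
      apply hd.2
      rw [hF₂]
      have : {b : Fin e₂ → ℕ | (∑ j, (b j : ℤ) * n₂ j) = (m₂ : ℤ) - d * d₁} =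
        B ((m₂ : ℤ) - d * d₁) := rfl
      rw [this, h, Set.ncard_empty]
    exact hbound d (nonneg_of_sol hAne) (nonneg_of_sol hBne)
  rw [hPT, Set.ncard_coe_finset, hT, Finset.card_biUnion hdisj,
    finsum_eq_sum_of_support_subset _ hsupp]
  refine Finset.sum_congr rfl fun d _ => ?_
  rw [Finset.card_product, hF₁, hF₂]
  congr 1
  · exact (Set.ncard_eq_toFinset_card _ (hAfin _)).symm
  · exact (Set.ncard_eq_toFinset_card _ (hBfin _)).symm
end

section
/- Let e > 1 be an integer and let c be a positive even integer. Set n_1 = e + c, n_2 = e + c + 1, and n_i = (c² + (e+2)c + 2(i−1))/2 for 3 ≤ i ≤ e. Then H = ⟨n_1, …, n_e⟩ is a symmetric numerical semigroup, minimally generated by n_1, …, n_e, with multiplicity (smallest nonzero element) e + c and Frobenius number Fr(H) = c² + (e+1)c + 1. -/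
/-- The Frobenius number of `H ≠ ℕ`: the largest natural number not in `H`. -/
noncomputable def Frob (H : Set ℕ) : ℕ := sSup Hᶜ

/-- decomposition condition for membership in the explicit model of `H`. -/
def SCond (c q r : ℕ) : Prop := r = 0 ∨ (r ≤ c+1 ∧ r ≤ q) ∨ (c+2 ≤ r ∧ c ≤ 2*q)

/-- the explicit model of the numerical semigroup `H_{e,c}`. -/
def Sset (e c : ℕ) : Set ℕ := {x | ∃ q r, x = q*(e+c)+r ∧ r < e+c ∧ SCond c q r}

lemma decomp_unique {m q1 r1 q2 r2 : ℕ} (h1 : r1 < m) (h2 : r2 < m)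
    (h : q1*m+r1 = q2*m+r2) : q1 = q2 ∧ r1 = r2 := by
  have hm : 0 < m := by omega
  have e1 : (q1*m+r1)/m = q1 := by
    rw [mul_comm, Nat.mul_add_div hm, Nat.div_eq_of_lt h1]; omega
  have e2 : (q2*m+r2)/m = q2 := by
    rw [mul_comm, Nat.mul_add_div hm, Nat.div_eq_of_lt h2]; omega
  have hq : q1 = q2 := by rw [← e1, ← e2, h]
  subst hq
  exact ⟨rfl, by omega⟩

lemma Sset_add {e c : ℕ} {a b : ℕ}
    (ha : a ∈ Sset e c) (hb : b ∈ Sset e c) : a + b ∈ Sset e c := by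
  obtain ⟨qa, ra, hda, hra, hca⟩ := ha
  obtain ⟨qb, rb, hdb, hrb, hcb⟩ := hb
  rcases lt_or_ge (ra + rb) (e+c) with hlt | hge
  · refine ⟨qa+qb, ra+rb, ?_, hlt, ?_⟩
    · rw [hda, hdb]; ring
    · unfold SCond at *; omega
  · refine ⟨qa+qb+1, ra+rb-(e+c), ?_, by omega, ?_⟩
    · rw [hda, hdb]
      have h1 : (qa+qb+1)*(e+c) = qa*(e+c) + qb*(e+c) + (e+c) := by ring
      rw [h1]; omega
    · unfold SCond at *; omega

lemma Sset_zero (e c : ℕ) (he : 0 < e + c) : 0 ∈ Sset e c :=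
  ⟨0, 0, by simp, he, Or.inl rfl⟩

lemma Sset_nsmul {e c : ℕ} (he : 0 < e + c) {x : ℕ} (hx : x ∈ Sset e c) (k : ℕ) :
    k * x ∈ Sset e c := by
  induction k with
  | zero => simpa using Sset_zero e c he
  | succ k ih => rw [Nat.succ_mul]; exact Sset_add ih hx

lemma Sset_big {e c : ℕ} (he : 1 < e) (hc : 0 < c) {x : ℕ}
    (hx : c*(e+c) + c + 1 < x) : x ∈ Sset e c := by
  have hm0 : 0 < e + c := by omega
  refine ⟨x / (e+c), x % (e+c), ?_, Nat.mod_lt _ hm0, ?_⟩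
  · rw [Nat.div_add_mod' x (e+c)]
  · have hxd : x = (x/(e+c)) * (e+c) + x % (e+c) := (Nat.div_add_mod' x (e+c)).symm
    have hrm : x % (e+c) < e + c := Nat.mod_lt _ hm0
    have hqc : c ≤ x/(e+c) := by
      by_contra hcon
      push_neg at hcon
      have h1 : (x/(e+c))*(e+c) + (e+c) ≤ c*(e+c) := by
        calc (x/(e+c))*(e+c) + (e+c) = (x/(e+c)+1)*(e+c) := by ring
        _ ≤ c*(e+c) := Nat.mul_le_mul_right (e+c) hcon
      omega
    rcases Nat.eq_or_lt_of_le hqc with hqe | hql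
    · have hxe : x = c * (e+c) + x % (e+c) := by
        have h := hxd; rw [← hqe] at h; exact h
      unfold SCond; omega
    · have h1 : (c+1)*(e+c) ≤ (x/(e+c))*(e+c) := Nat.mul_le_mul_right (e+c) hql
      have h2 : (c+1)*(e+c) = c*(e+c) + (e+c) := by ring
      unfold SCond; omega

lemma Sset_notF {e c : ℕ} (he : 1 < e) (hc : 0 < c) :
    c*(e+c) + c + 1 ∉ Sset e c := by
  rintro ⟨q, r, hd, hrm, hcond⟩
  have hd' : q*(e+c)+r = c*(e+c)+(c+1) := by omega
  have hu := decomp_unique hrm (show c + 1 < e + c by omega) hd'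
  unfold SCond at hcond
  omega

lemma Sset_sym {e c : ℕ} (he : 1 < e) (hc : 0 < c) (hceven : Even c) {z : ℕ}
    (hzF : z ≤ c*(e+c) + c + 1) (hz : z ∉ Sset e c) :
    c*(e+c) + c + 1 - z ∈ Sset e c := by
  obtain ⟨d, hd⟩ := hceven
  have hm0 : 0 < e + c := by omega
  have hzd : z = (z/(e+c)) * (e+c) + z % (e+c) := (Nat.div_add_mod' z (e+c)).symm
  have hrm : z % (e+c) < e + c := Nat.mod_lt _ hm0
  have hsub : c*(e+c) + c + 1 - z + z = c*(e+c) + c + 1 := Nat.sub_add_cancel hzF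
  have hnc : ¬ SCond c (z/(e+c)) (z % (e+c)) :=
    fun hcond => hz ⟨_, _, hzd, hrm, hcond⟩
  unfold SCond at hnc
  push_neg at hnc
  obtain ⟨hr0, h2, h3⟩ := hnc
  rcases le_or_gt (z % (e+c)) (c+1) with hrle | hrgt
  · have hqr : z/(e+c) < z % (e+c) := h2 hrle
    obtain ⟨u, hu⟩ : ∃ u, c = z/(e+c) + u := ⟨c - z/(e+c), by omega⟩
    obtain ⟨v, hv⟩ : ∃ v, c + 1 = z % (e+c) + v := ⟨c + 1 - z % (e+c), by omega⟩
    have hmul : (z/(e+c))*(e+c) + u*(e+c) = c*(e+c) := by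
      calc (z/(e+c))*(e+c) + u*(e+c) = (z/(e+c)+u)*(e+c) := by ring
      _ = c*(e+c) := by rw [← hu]
    refine ⟨u, v, by omega, by omega, ?_⟩
    unfold SCond; omega
  · have hq2 : 2*(z/(e+c)) < c := h3 (by omega)
    obtain ⟨u, hu⟩ : ∃ u, c = z/(e+c) + 1 + u := ⟨c - z/(e+c) - 1, by omega⟩
    obtain ⟨w, hw⟩ : ∃ w, (e+c) + c + 1 = z % (e+c) + w :=
      ⟨(e+c) + c + 1 - z % (e+c), by omega⟩
    have hmul : (z/(e+c))*(e+c) + u*(e+c) + (e+c) = c*(e+c) := by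
      calc (z/(e+c))*(e+c) + u*(e+c) + (e+c) = (z/(e+c)+1+u)*(e+c) := by ring
      _ = c*(e+c) := by rw [← hu]
    refine ⟨u, w, by omega, by omega, ?_⟩
    unfold SCond; omega

lemma Sset_pos_ge {e c : ℕ} (hc : 0 < c) {x : ℕ}
    (hx : x ∈ Sset e c) (hx0 : 0 < x) : e + c ≤ x := by
  obtain ⟨q, r, hd, hrm, hcond⟩ := hx
  unfold SCond at hcond
  rcases Nat.eq_zero_or_pos q with hq | hq
  · subst hq; omega
  · have h1 : e + c ≤ q * (e+c) := Nat.le_mul_of_pos_left _ hq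
    omega

lemma sum_one {e : ℕ} (n : Fin e → ℕ) (i0 : Fin e) (x : ℕ) :
    ∑ i, (if i = i0 then x else 0) * n i = x * n i0 := by
  rw [Finset.sum_congr rfl
    (fun i _ => show (if i = i0 then x else 0) * n i = if i = i0 then x * n i else 0 by
      by_cases h : i = i0 <;> simp [h])]
  simp [Finset.sum_ite_eq']

lemma sum_two {e : ℕ} (n : Fin e → ℕ) {i0 i1 : Fin e} (hne : i0 ≠ i1) (x y : ℕ) :
    ∑ i, (if i = i0 then x else if i = i1 then y else 0) * n i
      = x * n i0 + y * n i1 := by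
  have h : ∀ i : Fin e, (if i = i0 then x else if i = i1 then y else 0) * n i
      = (if i = i0 then x * n i else 0) + (if i = i1 then y * n i else 0) := by
    intro i
    by_cases h0 : i = i0
    · subst h0; simp [hne]
    · by_cases h1 : i = i1
      · subst h1; simp [h0]
      · simp [h0, h1]
  rw [Finset.sum_congr rfl (fun i _ => h i), Finset.sum_add_distrib]
  simp [Finset.sum_ite_eq']

/-- `H_{e,c}` for even `c`: with `n₁ = e+c`, `n₂ = e+c+1` and
`n_i = (c² + (e+2)c + 2(i−1))/2` for `3 ≤ i ≤ e` (here `0`-indexed, so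
`n_{j+1}` is `n j` and `2 · n j = c² + (e+2)c + 2j` for `2 ≤ j`),
`H = ⟨n₁,…,n_e⟩` is a symmetric numerical semigroup minimally generated by
`n₁,…,n_e`, with multiplicity `e+c` and Frobenius number `c² + (e+1)c + 1`. -/
theorem stmt12 (e c : ℕ) (he : 1 < e) (hc : 0 < c) (hceven : Even c)
    (n : Fin e → ℕ)
    (hn0 : ∀ i : Fin e, (i : ℕ) = 0 → n i = e + c)
    (hn1 : ∀ i : Fin e, (i : ℕ) = 1 → n i = e + c + 1)
    (hni : ∀ i : Fin e, 2 ≤ (i : ℕ) →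
      2 * n i = c ^ 2 + (e + 2) * c + 2 * (i : ℕ))
    (H : Set ℕ) (hH : H = {m | ∃ a : Fin e → ℕ, m = ∑ i, a i * n i}) :
    IsNumericalSemigroup H ∧
    (PF H).ncard = 1 ∧
    (∀ j : Fin e, {m | ∃ a : Fin e → ℕ, a j = 0 ∧ m = ∑ i, a i * n i} ≠ H) ∧
    sInf {x ∈ H | 0 < x} = e + c ∧
    Frob H = c ^ 2 + (e + 1) * c + 1 := by
  classical
  obtain ⟨d, hd⟩ := id hceven
  have hd0 : 0 < d := by omega
  have hm0 : 0 < e + c := by omega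
  obtain ⟨i0, hi0v⟩ : ∃ i : Fin e, (i:ℕ) = 0 := ⟨⟨0, by omega⟩, rfl⟩
  obtain ⟨i1, hi1v⟩ : ∃ i : Fin e, (i:ℕ) = 1 := ⟨⟨1, he⟩, rfl⟩
  have hne01 : i0 ≠ i1 := fun h => by rw [h] at hi0v; omega
  have hvi0 : n i0 = e + c := hn0 i0 hi0v
  have hvi1 : n i1 = e + c + 1 := hn1 i1 hi1v
  have hval2 : ∀ i : Fin e, 2 ≤ (i:ℕ) → n i = d*(e+c) + c + (i:ℕ) := by
    intro i hi
    have h3 : 2 * n i = 2 * (d*(e+c) + c + (i:ℕ)) := by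
      rw [hni i hi]; subst hd; ring
    omega
  -- generators lie in Sset
  have hgen : ∀ i : Fin e, n i ∈ Sset e c := by
    intro i
    rcases Nat.lt_or_ge (i:ℕ) 2 with h2 | h2
    · have : (i:ℕ) = 0 ∨ (i:ℕ) = 1 := by omega
      rcases this with h | h
      · rw [hn0 i h]; exact ⟨1, 0, by omega, by omega, Or.inl rfl⟩
      · rw [hn1 i h]
        exact ⟨1, 1, by omega, by omega, Or.inr (Or.inl ⟨by omega, le_refl 1⟩)⟩
    · rw [hval2 i h2]
      exact ⟨d, c + (i:ℕ), by omega, by have := i.isLt; omega,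
        Or.inr (Or.inr ⟨by omega, by omega⟩)⟩
  -- H equals the explicit model
  have hHS : H = Sset e c := by
    rw [hH]; ext x; constructor
    · rintro ⟨a, rfl⟩
      exact Finset.sum_induction _ (· ∈ Sset e c) (fun _ _ ha hb => Sset_add ha hb)
        (Sset_zero e c hm0) (fun i _ => Sset_nsmul hm0 (hgen i) (a i))
    · rintro ⟨q, r, hxd, hrm, hcond⟩
      rcases hcond with h | ⟨h1, h2⟩ | ⟨h1, h2⟩
      · refine ⟨fun i => if i = i0 then q else 0, ?_⟩
        rw [sum_one, hvi0]; omega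
      · refine ⟨fun i => if i = i0 then q - r else if i = i1 then r else 0, ?_⟩
        rw [sum_two n hne01, hvi0, hvi1]
        obtain ⟨t, ht⟩ : ∃ t, q = r + t := ⟨q - r, by omega⟩
        subst ht
        have hrt : r + t - r = t := by omega
        rw [hrt, hxd]; ring
      · have hie : r - c < e := by omega
        have hj2ge : 2 ≤ ((⟨r - c, hie⟩ : Fin e):ℕ) := by show 2 ≤ r - c; omega
        have hj2n : n ⟨r - c, hie⟩ = d*(e+c) + c + (r - c) := hval2 _ hj2ge
        have hne2 : (⟨r - c, hie⟩ : Fin e) ≠ i0 := by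
          intro hcontra
          have := congrArg Fin.val hcontra
          simp only [hi0v] at this
          omega
        refine ⟨fun i => if i = (⟨r - c, hie⟩ : Fin e) then 1 else
          if i = i0 then q - d else 0, ?_⟩
        rw [sum_two n hne2, hj2n, hvi0, one_mul]
        obtain ⟨t, ht⟩ : ∃ t, q = d + t := ⟨q - d, by omega⟩
        obtain ⟨s, hs⟩ : ∃ s, r = c + s := ⟨r - c, by omega⟩
        subst ht; subst hs
        have ha1 : d + t - d = t := by omega
        have ha2 : c + s - c = s := by omega
        rw [ha1, ha2, hxd]; ring
  have hSH : ∀ {x : ℕ}, x ∈ Sset e c → x ∈ H := by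
    intro x hx; rw [hHS]; exact hx
  have hHSm : ∀ {x : ℕ}, x ∈ H → x ∈ Sset e c := by
    intro x hx; rw [hHS] at hx; exact hx
  have hFH : c*(e+c)+c+1 ∉ H := fun hmem => Sset_notF he hc (hHSm hmem)
  -- assemble
  refine ⟨⟨hSH (Sset_zero e c hm0), fun a ha b hb => hSH (Sset_add (hHSm ha) (hHSm hb)), ?_⟩,
    ?_, ?_, ?_, ?_⟩
  · -- cofinite
    apply Set.Finite.subset (Set.finite_Iic (c*(e+c)+c+1))
    intro x hx
    by_contra hcon
    simp only [Set.mem_Iic, not_le] at hcon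
    exact hx (hSH (Sset_big he hc hcon))
  · -- PF has one element
    have hPF : PF H = {((c*(e+c)+c+1 : ℕ) : ℤ)} := by
      ext f
      simp only [PF, Set.mem_setOf_eq, Set.mem_singleton_iff]
      constructor
      · rintro ⟨hf1, hf2⟩
        by_contra hne
        rcases lt_trichotomy f (((c*(e+c)+c+1 : ℕ)) : ℤ) with hlt | heq | hgt
        · have hex : ∃ t : ℕ, t ∈ H ∧ 0 < t ∧ (t:ℤ) = ((c*(e+c)+c+1 : ℕ):ℤ) - f := by
            rcases lt_or_ge f 0 with hf0 | hf0
            · obtain ⟨g, hg0, hg⟩ : ∃ g : ℕ, 0 < g ∧ (g:ℤ) = -f :=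
                ⟨(-f).toNat, by omega, by omega⟩
              refine ⟨c*(e+c)+c+1+g, hSH (Sset_big he hc (by omega)), by omega, ?_⟩
              push_cast
              omega
            · obtain ⟨w, hw⟩ : ∃ w : ℕ, (w:ℤ) = f := ⟨f.toNat, Int.toNat_of_nonneg hf0⟩
              have hwF : w < c*(e+c)+c+1 := by
                have h' : (w:ℤ) < ((c*(e+c)+c+1 : ℕ):ℤ) := by rw [hw]; exact hlt
                exact_mod_cast h'
              have hwH : w ∉ H := fun hmem => hf1 ⟨w, hmem, hw⟩
              have hsymm := Sset_sym he hc hceven (z := w) (by omega)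
                (fun hs => hwH (hSH hs))
              refine ⟨c*(e+c)+c+1 - w, hSH hsymm, by omega, ?_⟩
              rw [Nat.cast_sub (le_of_lt hwF), hw]
          obtain ⟨t, htH, ht0, htv⟩ := hex
          have hmem := hf2 t htH ht0
          rw [htv] at hmem
          have hFeq : f + (((c*(e+c)+c+1:ℕ):ℤ) - f) = ((c*(e+c)+c+1:ℕ):ℤ) := by ring
          rw [hFeq] at hmem
          obtain ⟨w, hwH, hw⟩ := hmem
          have hww : w = c*(e+c)+c+1 := by exact_mod_cast hw
          rw [hww] at hwH
          exact hFH hwH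
        · exact hne heq
        · have hf0 : 0 ≤ f := le_trans (by positivity) (le_of_lt hgt)
          obtain ⟨w, hw⟩ : ∃ w : ℕ, (w:ℤ) = f := ⟨f.toNat, Int.toNat_of_nonneg hf0⟩
          have hwb : c*(e+c)+c+1 < w := by
            have h' : ((c*(e+c)+c+1 : ℕ):ℤ) < (w:ℤ) := by rw [hw]; exact hgt
            exact_mod_cast h'
          exact hf1 ⟨w, hSH (Sset_big he hc hwb), hw⟩
      · rintro rfl
        refine ⟨?_, ?_⟩
        · rintro ⟨w, hwH, hw⟩
          have hww : w = c*(e+c)+c+1 := by exact_mod_cast hw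
          rw [hww] at hwH
          exact hFH hwH
        · intro h hhH hh0
          exact ⟨c*(e+c)+c+1+h, hSH (Sset_big he hc (by omega)), by push_cast; ring⟩
    rw [hPF]
    exact Set.ncard_singleton _
  · -- minimal generation
    intro j heq
    have hjH : n j ∈ H := hSH (hgen j)
    rw [← heq] at hjH
    obtain ⟨a, haj, hsum⟩ := hjH
    set B : Finset (Fin e) := Finset.univ \ {i0, i1} with hBdef
    have hBnotmem : ∀ i ∈ B, 2 ≤ (i:ℕ) := by
      intro i hi
      rw [hBdef, Finset.mem_sdiff] at hi
      have hi' := hi.2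
      simp only [Finset.mem_insert, Finset.mem_singleton, not_or] at hi'
      obtain ⟨h0', h1'⟩ := hi'
      by_contra hcon
      push_neg at hcon
      have : (i:ℕ) = 0 ∨ (i:ℕ) = 1 := by omega
      rcases this with h' | h'
      · exact h0' (Fin.ext (by omega))
      · exact h1' (Fin.ext (by omega))
    have hsplit : ∑ i, a i * n i = (∑ i ∈ B, a i * n i) + (a i0 * n i0 + a i1 * n i1) := by
      rw [← Finset.sum_pair (f := fun i => a i * n i) hne01, hBdef]
      exact (Finset.sum_sdiff (Finset.subset_univ _)).symm
    rw [hsplit, hvi0, hvi1] at hsum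
    have hjlt : (j:ℕ) < e := j.isLt
    rcases Nat.lt_or_ge (j:ℕ) 2 with hj2 | hj2
    · have hj01 : (j:ℕ) = 0 ∨ (j:ℕ) = 1 := by omega
      rcases hj01 with hj0 | hj1
      · -- j = i0
        have hji : j = i0 := Fin.ext (by omega)
        rw [hji] at haj
        rw [hn0 j hj0, haj] at hsum
        by_cases hex : ∃ i ∈ B, 1 ≤ a i
        · obtain ⟨i2, hi2B, hi2a⟩ := hex
          have hle : a i2 * n i2 ≤ ∑ i ∈ B, a i * n i :=
            Finset.single_le_sum (f := fun i => a i * n i) (fun _ _ => Nat.zero_le _) hi2B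
          have hge : n i2 ≤ a i2 * n i2 := Nat.le_mul_of_pos_left _ hi2a
          have hni2 : n i2 = d*(e+c)+c+(i2:ℕ) := hval2 i2 (hBnotmem i2 hi2B)
          have hmul : e+c ≤ d*(e+c) := Nat.le_mul_of_pos_left _ hd0
          omega
        · push_neg at hex
          have hz : ∑ i ∈ B, a i * n i = 0 :=
            Finset.sum_eq_zero (fun i hi => by
              have := hex i hi
              have hz' : a i = 0 := by omega
              rw [hz', zero_mul])
          rw [hz] at hsum
          rcases Nat.eq_zero_or_pos (a i1) with h1' | h1'
          · rw [h1'] at hsum; omega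
          · have := Nat.le_mul_of_pos_left (e+c+1) h1'; omega
      · -- j = i1
        have hji : j = i1 := Fin.ext (by omega)
        rw [hji] at haj
        rw [hn1 j hj1, haj] at hsum
        by_cases hex : ∃ i ∈ B, 1 ≤ a i
        · obtain ⟨i2, hi2B, hi2a⟩ := hex
          have hle : a i2 * n i2 ≤ ∑ i ∈ B, a i * n i :=
            Finset.single_le_sum (f := fun i => a i * n i) (fun _ _ => Nat.zero_le _) hi2B
          have hge : n i2 ≤ a i2 * n i2 := Nat.le_mul_of_pos_left _ hi2a
          have hni2 : n i2 = d*(e+c)+c+(i2:ℕ) := hval2 i2 (hBnotmem i2 hi2B)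
          have hmul : e+c ≤ d*(e+c) := Nat.le_mul_of_pos_left _ hd0
          omega
        · push_neg at hex
          have hz : ∑ i ∈ B, a i * n i = 0 :=
            Finset.sum_eq_zero (fun i hi => by
              have := hex i hi
              have hz' : a i = 0 := by omega
              rw [hz', zero_mul])
          rw [hz] at hsum
          have hdu := decomp_unique (show (1:ℕ) < e+c by omega) (show (0:ℕ) < e+c by omega)
            (show 1*(e+c)+1 = a i0 * (e+c) + 0 by omega)
          omega
    · -- 2 ≤ j
      rw [hval2 j hj2] at hsum
      rcases Nat.lt_or_ge (∑ i ∈ B, a i) 2 with hTlt | hTge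
      · have hT01 : (∑ i ∈ B, a i) = 0 ∨ (∑ i ∈ B, a i) = 1 := by omega
        rcases hT01 with hT0 | hT1
        · have hz0 : ∀ i ∈ B, a i = 0 := by
            intro i hi
            exact (Finset.sum_eq_zero_iff).mp hT0 i hi
          have hzB : ∑ i ∈ B, a i * n i = 0 :=
            Finset.sum_eq_zero (fun i hi => by rw [hz0 i hi, zero_mul])
          rw [hzB] at hsum
          rcases lt_or_ge (a i1) (e+c) with hlt' | hge'
          · have hre : a i0*(e+c) + a i1*(e+c+1) = (a i0 + a i1)*(e+c) + a i1 := by ring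
            have hd' : d*(e+c) + (c+(j:ℕ)) = (a i0 + a i1)*(e+c) + a i1 := by omega
            have hu := decomp_unique (show c+(j:ℕ) < e+c by omega) hlt' hd'
            omega
          · have h1 : (e+c)*(e+c+1) ≤ a i1 * (e+c+1) := Nat.mul_le_mul_right _ hge'
            have h2 : (d+1)*(e+c) ≤ (e+c)*(e+c) := Nat.mul_le_mul_right _ (by omega)
            have h3 : (e+c)*(e+c) ≤ (e+c)*(e+c+1) := Nat.mul_le_mul_left _ (by omega)
            have h4 : (d+1)*(e+c) = d*(e+c) + (e+c) := by ring
            omega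
        · have hex : ∃ i ∈ B, 1 ≤ a i := by
            by_contra hno; push_neg at hno
            have : ∑ i ∈ B, a i = 0 :=
              Finset.sum_eq_zero (fun i hi => by have := hno i hi; omega)
            omega
          obtain ⟨i2, hi2B, hi2a⟩ := hex
          have hsum1 : a i2 + ∑ i ∈ B.erase i2, a i = ∑ i ∈ B, a i :=
            Finset.add_sum_erase B a hi2B
          have hzrest : ∀ i ∈ B.erase i2, a i = 0 := by
            intro i hi
            have h' := Finset.single_le_sum (f := a) (fun _ _ => Nat.zero_le _) hi
            omega
          have hai2 : a i2 = 1 := by omega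
          have hBsum : ∑ i ∈ B, a i * n i = a i2 * n i2 := by
            rw [← Finset.add_sum_erase B (fun i => a i * n i) hi2B]
            have hzz : ∑ i ∈ B.erase i2, a i * n i = 0 :=
              Finset.sum_eq_zero (fun i hi => by rw [hzrest i hi, zero_mul])
            omega
          have hni2 : n i2 = d*(e+c)+c+(i2:ℕ) := hval2 i2 (hBnotmem i2 hi2B)
          rw [hBsum, hai2, one_mul, hni2] at hsum
          rcases Nat.eq_zero_or_pos (a i0) with h0' | h0'
          · rcases Nat.eq_zero_or_pos (a i1) with h1' | h1'
            · rw [h0', h1'] at hsum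
              have : i2 = j := Fin.ext (by omega)
              rw [this] at hai2
              omega
            · have := Nat.le_mul_of_pos_left (e+c+1) h1'
              rw [h0'] at hsum
              have hi2lt : (i2:ℕ) < e := i2.isLt
              omega
          · have := Nat.le_mul_of_pos_left (e+c) h0'
            have hi2lt : (i2:ℕ) < e := i2.isLt
            omega
      · have h1 : ∑ i ∈ B, a i * (d*(e+c)+c+2) ≤ ∑ i ∈ B, a i * n i :=
          Finset.sum_le_sum (fun i hi => Nat.mul_le_mul_left (a i)
            (by rw [hval2 i (hBnotmem i hi)]; have := hBnotmem i hi; omega))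
        have h2 : ∑ i ∈ B, a i * (d*(e+c)+c+2) = (∑ i ∈ B, a i) * (d*(e+c)+c+2) :=
          (Finset.sum_mul ..).symm
        have h3 : 2 * (d*(e+c)+c+2) ≤ (∑ i ∈ B, a i) * (d*(e+c)+c+2) :=
          Nat.mul_le_mul_right _ hTge
        have h4 : 2*(d*(e+c)+c+2) = d*(e+c)+d*(e+c)+2*c+4 := by ring
        have h5 : e+c ≤ d*(e+c) := Nat.le_mul_of_pos_left _ hd0
        omega
  · -- multiplicity
    have hmH : (e+c) ∈ H := hvi0 ▸ hSH (hgen i0)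
    apply le_antisymm
    · exact Nat.sInf_le ⟨hmH, hm0⟩
    · exact le_csInf ⟨e+c, hmH, hm0⟩ (fun b hb => Sset_pos_ge hc (hHSm hb.1) hb.2)
  · -- Frobenius number
    have hFval : c ^ 2 + (e+1)*c + 1 = c*(e+c)+c+1 := by ring
    rw [hFval]
    have hFc : c*(e+c)+c+1 ∈ Hᶜ := hFH
    have hub : ∀ x ∈ Hᶜ, x ≤ c*(e+c)+c+1 := by
      intro x hx
      by_contra hcon
      push_neg at hcon
      exact hx (hSH (Sset_big he hc hcon))
    exact le_antisymm (csSup_le ⟨_, hFc⟩ hub) (le_csSup ⟨_, hub⟩ hFc)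
end

section
/- Let e > 1 be an even integer and let c > 1 be an odd integer. Set n_1 = e + c, n_2 = e + c + 2, and n_i = (c² + (e+3)c + 4(i−1) − e)/2 for 3 ≤ i ≤ e. Then H = ⟨n_1, …, n_e⟩ is a symmetric numerical semigroup, minimally generated by n_1, …, n_e, with multiplicity (smallest nonzero element) e + c and Frobenius number Fr(H) = c² + (e+2)c + 2. -/
namespace Stmt13Aux

/-- The Apéry-set function: for `t ≤ c+1`, `uu e c t = t*(e+c+2)`;
for `c+2 ≤ t ≤ e+c-1`, `uu e c t = ((c-1)/2)*(e+c) + 2t`, which equals `n (t-c)`. -/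
def uu (e c t : ℕ) : ℕ := (if t ≤ c + 1 then t else (c - 1) / 2) * (e + c) + 2 * t

lemma uu_lo (e c : ℕ) {t : ℕ} (h : t ≤ c + 1) : uu e c t = t * (e + c) + 2 * t := by
  simp [uu, h]

lemma uu_hi (e : ℕ) {c γ : ℕ} (hγ : c = 2 * γ + 1) {t : ℕ} (h : c + 2 ≤ t) :
    uu e c t = γ * (e + c) + 2 * t := by
  have h1 : ¬ (t ≤ c + 1) := by omega
  have h2 : (c - 1) / 2 = γ := by omega
  simp [uu, h1, h2]

lemma key_add_mix {e c γ : ℕ} (hγ : c = 2 * γ + 1) (hγ1 : 1 ≤ γ) (he : 2 ≤ e)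
    {s t : ℕ} (ht : t < e + c) (hs1 : s ≤ c + 1) (ht1 : c + 2 ≤ t) :
    ∃ t' b, t' < e + c ∧ uu e c s + uu e c t = b * (e + c) + uu e c t' ∧
      (b = 0 → t' ≤ c + 1 ∨ s = 0 ∨ t = 0) := by
  by_cases h1 : s + t < e + c
  · refine ⟨s + t, s, by omega, ?_, fun hb => Or.inr (Or.inl hb)⟩
    rw [uu_lo e c hs1, uu_hi e hγ ht1, uu_hi e hγ (show c + 2 ≤ s + t by omega)]
    push_cast
    ring
  · obtain ⟨t₃, hk⟩ : ∃ t₃, s + t = (e + c) + t₃ := ⟨s + t - (e + c), by omega⟩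
    obtain ⟨b, hb⟩ : ∃ b, t₃ + b = s + γ + 2 := ⟨s + γ + 2 - t₃, by omega⟩
    refine ⟨t₃, b, by omega, ?_, by omega⟩
    rw [uu_lo e c hs1, uu_hi e hγ ht1, uu_lo e c (show t₃ ≤ c + 1 by omega)]
    have hkz : (s : ℤ) + t = (e + c) + t₃ := by exact_mod_cast hk
    have hbz : (t₃ : ℤ) + b = s + γ + 2 := by exact_mod_cast hb
    zify
    linear_combination 2 * hkz - ((e : ℤ) + c) * hbz

/-- Key closure lemma: the sum of two Apéry elements is an Apéry element plus a
multiple of `e+c`; moreover if the multiple is zero then the result is a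
multiple of `n₂` or one summand was zero. -/
lemma key_add {e c γ : ℕ} (hγ : c = 2 * γ + 1) (hγ1 : 1 ≤ γ) (he : 2 ≤ e)
    {s t : ℕ} (hs : s < e + c) (ht : t < e + c) :
    ∃ t' b, t' < e + c ∧ uu e c s + uu e c t = b * (e + c) + uu e c t' ∧
      (b = 0 → t' ≤ c + 1 ∨ s = 0 ∨ t = 0) := by
  by_cases hs1 : s ≤ c + 1 <;> by_cases ht1 : t ≤ c + 1
  · -- both low
    by_cases h1 : s + t ≤ c + 1
    · exact ⟨s + t, 0, by omega,
        by rw [uu_lo e c hs1, uu_lo e c ht1, uu_lo e c h1]; push_cast; ring,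
        fun _ => Or.inl h1⟩
    · by_cases h2 : s + t < e + c
      · obtain ⟨k, hk⟩ : ∃ k, s + t = γ + k := ⟨s + t - γ, by omega⟩
        refine ⟨s + t, k, by omega, ?_, by omega⟩
        rw [uu_lo e c hs1, uu_lo e c ht1, uu_hi e hγ (show c + 2 ≤ s + t by omega)]
        have hkz : (s : ℤ) + t = γ + k := by exact_mod_cast hk
        zify
        linear_combination ((e : ℤ) + c) * hkz
      · obtain ⟨t₃, hk⟩ : ∃ t₃, s + t = (e + c) + t₃ := ⟨s + t - (e + c), by omega⟩
        refine ⟨t₃, (e + c) + 2, by omega, ?_, by omega⟩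
        rw [uu_lo e c hs1, uu_lo e c ht1, uu_lo e c (show t₃ ≤ c + 1 by omega)]
        have hkz : (s : ℤ) + t = (e + c) + t₃ := by exact_mod_cast hk
        zify
        linear_combination ((e : ℤ) + c + 2) * hkz
  · exact key_add_mix hγ hγ1 he ht hs1 (by omega)
  · obtain ⟨t', b, h1, h2, h3⟩ := key_add_mix hγ hγ1 he hs ht1 (by omega)
    refine ⟨t', b, h1, by rw [Nat.add_comm (uu e c s)]; exact h2, by tauto⟩
  · -- both high
    by_cases h1 : s + t < e + c
    · refine ⟨s + t, γ, by omega, ?_, by omega⟩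
      rw [uu_hi e hγ (by omega), uu_hi e hγ (by omega), uu_hi e hγ (show c + 2 ≤ s + t by omega)]
      push_cast
      ring
    · obtain ⟨t₃, hk⟩ : ∃ t₃, s + t = (e + c) + t₃ := ⟨s + t - (e + c), by omega⟩
      have hkz : (s : ℤ) + t = (e + c) + t₃ := by exact_mod_cast hk
      by_cases h2 : t₃ ≤ c + 1
      · obtain ⟨b, hb⟩ : ∃ b, t₃ + b = 2 * γ + 2 := ⟨2 * γ + 2 - t₃, by omega⟩
        refine ⟨t₃, b, by omega, ?_, by omega⟩
        rw [uu_hi e hγ (by omega), uu_hi e hγ (by omega), uu_lo e c h2]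
        have hbz : (t₃ : ℤ) + b = 2 * γ + 2 := by exact_mod_cast hb
        zify
        linear_combination 2 * hkz - ((e : ℤ) + c) * hbz
      · refine ⟨t₃, γ + 2, by omega, ?_, by omega⟩
        rw [uu_hi e hγ (by omega), uu_hi e hγ (by omega), uu_hi e hγ (by omega)]
        zify
        linear_combination 2 * hkz

/-- Residues of the Apéry elements are pairwise distinct mod `e+c`. -/
lemma uu_inj {e c γ ε : ℕ} (hγ : c = 2 * γ + 1) (hε : e = 2 * ε)
    {s t : ℕ} (hs : s < e + c) (ht : t < e + c)
    (h : uu e c s % (e + c) = uu e c t % (e + c)) : s = t := by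
  have key : ∀ r, r < e + c → 2 * uu e c r % (e + c) = 4 * r % (e + c) := by
    intro r hr
    by_cases h1 : r ≤ c + 1
    · rw [uu_lo e c h1]
      have : 2 * (r * (e + c) + 2 * r) = 4 * r + (2 * r) * (e + c) := by ring
      rw [this, Nat.add_mul_mod_self_right]
    · rw [uu_hi e hγ (by omega)]
      have : 2 * (γ * (e + c) + 2 * r) = 4 * r + (2 * γ) * (e + c) := by ring
      rw [this, Nat.add_mul_mod_self_right]
  have h2 : (4 * s) % (e + c) = (4 * t) % (e + c) := by
    rw [← key s hs, ← key t ht]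
    have : uu e c s % (e + c) = uu e c t % (e + c) := h
    calc 2 * uu e c s % (e + c) = 2 % (e+c) * (uu e c s % (e+c)) % (e+c) := by
          rw [Nat.mul_mod]
      _ = 2 % (e+c) * (uu e c t % (e+c)) % (e+c) := by rw [this]
      _ = 2 * uu e c t % (e + c) := by rw [← Nat.mul_mod]
  have hcop : Nat.Coprime 4 (e + c) := by
    have hodd : Odd (e + c) := ⟨ε + γ, by omega⟩
    have h2' : Nat.Coprime 2 (e + c) := Nat.coprime_two_left.mpr hodd
    have : (4 : ℕ) = 2 ^ 2 := by norm_num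
    rw [this]
    exact Nat.Coprime.pow_left 2 h2'
  have h3 : s ≡ t [MOD e + c] := by
    have h4 : 4 * s ≡ 4 * t [MOD e + c] := h2
    exact Nat.ModEq.cancel_left_of_coprime (Nat.Coprime.symm hcop) h4
  have : s % (e + c) = t % (e + c) := h3
  rwa [Nat.mod_eq_of_lt hs, Nat.mod_eq_of_lt ht] at this

/-- Apéry symmetry: every element pairs to `uu e c (c+1) = (c+1)(e+c+2)`. -/
lemma uu_pair {e c γ : ℕ} (hγ : c = 2 * γ + 1) (he : 2 ≤ e)
    {t : ℕ} (ht : t < e + c) :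
    ∃ t', t' < e + c ∧ uu e c t + uu e c t' = uu e c (c + 1) := by
  by_cases h1 : t ≤ c + 1
  · obtain ⟨k, hk⟩ : ∃ k, t + k = c + 1 := ⟨c + 1 - t, by omega⟩
    refine ⟨k, by omega, ?_⟩
    rw [uu_lo e c h1, uu_lo e c (by omega), uu_lo e c le_rfl]
    have hkz : (t : ℤ) + k = c + 1 := by exact_mod_cast hk
    zify
    linear_combination ((e : ℤ) + c + 2) * hkz
  · obtain ⟨k, hk⟩ : ∃ k, t + k = (e + c) + c + 1 := ⟨(e + c) + c + 1 - t, by omega⟩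
    have hγz : (c : ℤ) = 2 * γ + 1 := by exact_mod_cast hγ
    refine ⟨k, by omega, ?_⟩
    rw [uu_hi e hγ (by omega), uu_hi e hγ (by omega), uu_lo e c le_rfl]
    have hkz : (t : ℤ) + k = (e + c) + c + 1 := by exact_mod_cast hk
    zify
    linear_combination 2 * hkz - ((e : ℤ) + c) * hγz

lemma uu_zero (e c : ℕ) : uu e c 0 = 0 := by simp [uu]

lemma uu_ge {e c γ : ℕ} (hγ : c = 2 * γ + 1) (hγ1 : 1 ≤ γ) {t : ℕ}
    (h0 : 1 ≤ t) (ht : t < e + c) : e + c + 2 ≤ uu e c t := by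
  by_cases h1 : t ≤ c + 1
  · rw [uu_lo e c h1]
    nlinarith
  · rw [uu_hi e hγ (by omega)]
    nlinarith

end Stmt13Aux

open Stmt13Aux

/-- `H_{e,c}` for odd `c > 1`, even `e`: with `n₁ = e+c`,
`n₂ = e+c+2`, and `n_i = (c² + (e+3)c + 4(i−1) − e)/2` for `3 ≤ i ≤ e` (here
`0`-indexed, so `2 · n j + e = c² + (e+3)c + 4j` for `2 ≤ j`), `H = ⟨n₁,…,n_e⟩`
is a symmetric numerical semigroup minimally generated by `n₁,…,n_e`, with
multiplicity `e+c` and Frobenius number `c² + (e+2)c + 2`. -/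
theorem stmt13 (e c : ℕ) (he : 1 < e) (heeven : Even e)
    (hc : 1 < c) (hcodd : Odd c)
    (n : Fin e → ℕ)
    (hn0 : ∀ i : Fin e, (i : ℕ) = 0 → n i = e + c)
    (hn1 : ∀ i : Fin e, (i : ℕ) = 1 → n i = e + c + 2)
    (hni : ∀ i : Fin e, 2 ≤ (i : ℕ) →
      2 * n i + e = c ^ 2 + (e + 3) * c + 4 * (i : ℕ))
    (H : Set ℕ) (hH : H = {m | ∃ a : Fin e → ℕ, m = ∑ i, a i * n i}) :
    IsNumericalSemigroup H ∧
    (PF H).ncard = 1 ∧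
    (∀ j : Fin e, {m | ∃ a : Fin e → ℕ, a j = 0 ∧ m = ∑ i, a i * n i} ≠ H) ∧
    sInf {x ∈ H | 0 < x} = e + c ∧
    Frob H = c ^ 2 + (e + 2) * c + 2 := by
  obtain ⟨γ, hγ⟩ : ∃ γ, c = 2 * γ + 1 := by
    obtain ⟨k, hk⟩ := hcodd; exact ⟨k, by omega⟩
  have hγ1 : 1 ≤ γ := by omega
  obtain ⟨ε, hε⟩ : ∃ ε, e = 2 * ε := by
    obtain ⟨k, hk⟩ := heeven; exact ⟨k, by omega⟩
  have he2 : 2 ≤ e := he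
  have hm5 : 5 ≤ e + c := by omega
  -- link n to uu
  have hnu : ∀ i : Fin e, 2 ≤ (i : ℕ) → n i = uu e c (c + (i : ℕ)) := by
    intro i hi
    have h1 := hni i hi
    have h2 : 2 * uu e c (c + (i : ℕ)) + e = c ^ 2 + (e + 3) * c + 4 * (i : ℕ) := by
      rw [uu_hi e hγ (by omega)]
      have hγz : (c : ℤ) = 2 * γ + 1 := by exact_mod_cast hγ
      zify
      linear_combination (-(c : ℤ) - e) * hγz
    omega
  have hgenu : ∀ i : Fin e, 1 ≤ (i : ℕ) → ∃ s, s < e + c ∧ 1 ≤ s ∧ n i = uu e c s ∧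
      (s = 1 ∨ (s = c + (i : ℕ) ∧ 2 ≤ (i : ℕ))) := by
    intro i hi
    rcases Nat.lt_or_ge (i : ℕ) 2 with h2 | h2
    · have : (i : ℕ) = 1 := by omega
      refine ⟨1, by omega, le_rfl, ?_, Or.inl rfl⟩
      rw [hn1 i this, uu_lo e c (by omega)]; ring
    · exact ⟨c + (i : ℕ), by omega, by omega, hnu i h2, Or.inr ⟨rfl, h2⟩⟩
  have hgen_ge : ∀ i : Fin e, 1 ≤ (i : ℕ) → e + c + 2 ≤ n i := by
    intro i hi
    obtain ⟨s, hs1, hs2, hs3, _⟩ := hgenu i hi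
    rw [hs3]; exact uu_ge hγ hγ1 hs2 hs1
  have hnpos : ∀ i : Fin e, 0 < n i := by
    intro i
    rcases Nat.eq_zero_or_pos (i : ℕ) with h | h
    · rw [hn0 i h]; omega
    · have := hgen_ge i h; omega
  -- basic membership
  have hzero : 0 ∈ H := by rw [hH]; exact ⟨fun _ => 0, by simp⟩
  have hadd : ∀ x ∈ H, ∀ y ∈ H, x + y ∈ H := by
    rw [hH]
    rintro x ⟨a, rfl⟩ y ⟨b, rfl⟩
    exact ⟨a + b, by rw [← Finset.sum_add_distrib]; simp [add_mul]⟩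
  have hgen : ∀ i, n i ∈ H := by
    intro i
    rw [hH]
    refine ⟨fun j => if j = i then 1 else 0, ?_⟩
    rw [Finset.sum_eq_single i]
    · simp
    · intro b _ hb; simp [hb]
    · intro hb; exact absurd (Finset.mem_univ i) hb
  have hmul : ∀ (k : ℕ) (x : ℕ), x ∈ H → k * x ∈ H := by
    intro k x hx
    induction k with
    | zero => simpa using hzero
    | succ k ih => have := hadd _ ih _ hx; rw [Nat.succ_mul]; exact this
  have i0 : Fin e := ⟨0, by omega⟩
  have i1 : Fin e := ⟨1, by omega⟩
  have hm : e + c ∈ H := by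
    have := hgen ⟨0, by omega⟩
    rwa [hn0 ⟨0, by omega⟩ rfl] at this
  have humem : ∀ t, t < e + c → uu e c t ∈ H := by
    intro t ht
    by_cases h1 : t ≤ c + 1
    · have : uu e c t = t * n ⟨1, by omega⟩ := by
        rw [hn1 ⟨1, by omega⟩ rfl, uu_lo e c h1]; ring
      rw [this]; exact hmul t _ (hgen _)
    · have hi : t - c < e := by omega
      have h2 : (2 : ℕ) ≤ ((⟨t - c, hi⟩ : Fin e) : ℕ) := by simp; omega
      have := hnu ⟨t - c, hi⟩ h2
      have h3 : c + ((⟨t - c, hi⟩ : Fin e) : ℕ) = t := by simp; omega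
      rw [h3] at this
      rw [← this]; exact hgen _
  have hTmem : ∀ (b t : ℕ), t < e + c → b * (e + c) + uu e c t ∈ H := by
    intro b t ht
    exact hadd _ (hmul b _ hm) _ (humem t ht)
  -- splitting a combination
  have hsplit : ∀ (a : Fin e → ℕ) (i₀ : Fin e) (k : ℕ), a i₀ = k + 1 →
      ∑ i, a i * n i = n i₀ + ∑ i, (Function.update a i₀ k) i * n i := by
    intro a i₀ k hk
    have h1 : ∀ j, (Function.update a i₀ k) j * n j
        = Function.update (fun j => a j * n j) i₀ (k * n i₀) j := by
      intro j
      by_cases hj : j = i₀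
      · subst hj; simp
      · simp [Function.update_apply, hj]
    rw [Finset.sum_congr rfl fun j _ => h1 j, Finset.sum_update_of_mem (Finset.mem_univ i₀),
      Finset.sum_eq_add_sum_sdiff_singleton_of_mem (Finset.mem_univ i₀) (fun j => a j * n j), hk]
    ring
  -- H is contained in the Apéry description
  have hHT : ∀ x ∈ H, ∃ t b, t < e + c ∧ x = b * (e + c) + uu e c t := by
    intro x hx
    rw [hH] at hx
    obtain ⟨a, ha⟩ := hx

    induction x using Nat.strong_induction_on generalizing a with
    | _ x ih =>
      by_cases hx0 : x = 0
      · exact ⟨0, 0, by omega, by simp [uu_zero, hx0]⟩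
      · have hne : ∃ i, a i * n i ≠ 0 := by
          by_contra hcon
          push_neg at hcon
          apply hx0
          rw [ha]
          exact Finset.sum_eq_zero fun i _ => hcon i
        obtain ⟨i₁, hi₁⟩ := hne
        have hai : 1 ≤ a i₁ := by
          rcases Nat.eq_zero_or_pos (a i₁) with h | h
          · exact absurd (by rw [h]; ring) hi₁
          · exact h
        obtain ⟨k, hk⟩ : ∃ k, a i₁ = k + 1 := ⟨a i₁ - 1, by omega⟩
        have hx' := hsplit a i₁ k hk
        set y := ∑ i, (Function.update a i₁ k) i * n i with hy
        have hxy : x = n i₁ + y := by rw [ha, hx']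
        have hylt : y < x := by have := hnpos i₁; omega
        obtain ⟨t, b, ht, hyeq⟩ := ih y hylt _ rfl
        rcases Nat.eq_zero_or_pos (i₁ : ℕ) with hival | hival
        · refine ⟨t, b + 1, ht, ?_⟩
          rw [hxy, hn0 i₁ hival, hyeq]; ring
        · obtain ⟨s, hs1, hs2, hs3, _⟩ := hgenu i₁ hival
          obtain ⟨t', b₂, ht', heq, _⟩ := key_add hγ hγ1 he2 hs1 ht
          refine ⟨t', b + b₂, ht', ?_⟩
          rw [hxy, hyeq, hs3]
          calc uu e c s + (b * (e + c) + uu e c t)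
              = b * (e + c) + (uu e c s + uu e c t) := by ring
            _ = b * (e + c) + (b₂ * (e + c) + uu e c t') := by rw [heq]
            _ = (b + b₂) * (e + c) + uu e c t' := by ring
  -- membership criterion
  have hcrit : ∀ x : ℕ, x ∈ H ↔ ∃ t, t < e + c ∧ uu e c t ≤ x ∧
      x % (e + c) = uu e c t % (e + c) := by
    intro x
    constructor
    · intro hx
      obtain ⟨t, b, ht, hx'⟩ := hHT x hx
      refine ⟨t, ht, by omega, ?_⟩
      rw [hx', add_comm, Nat.add_mul_mod_self_right]
    · rintro ⟨t, ht, hle, hmod⟩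
      have hdvd : (e + c) ∣ x - uu e c t := by
        have : uu e c t ≡ x [MOD e + c] := hmod.symm
        exact (Nat.modEq_iff_dvd' hle).mp this
      obtain ⟨b, hb⟩ := hdvd
      have : x = b * (e + c) + uu e c t := by rw [Nat.mul_comm] at hb; omega
      rw [this]
      exact hTmem b t ht
  -- residue surjectivity
  have hsurj : ∀ r, r < e + c → ∃ t, t < e + c ∧ uu e c t % (e + c) = r := by
    intro r hr
    have hinj : Set.InjOn (fun t => uu e c t % (e + c)) (Finset.range (e + c)) := by
      intro s hs t ht hst
      exact uu_inj hγ hε (Finset.mem_range.mp hs) (Finset.mem_range.mp ht) hst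
    have hsub : (Finset.range (e + c)).image (fun t => uu e c t % (e + c))
        ⊆ Finset.range (e + c) := by
      intro x hx
      obtain ⟨t, _, ht⟩ := Finset.mem_image.mp hx
      rw [Finset.mem_range, ← ht]
      exact Nat.mod_lt _ (by omega)
    have hcard : ((Finset.range (e + c)).image (fun t => uu e c t % (e + c))).card
        = (Finset.range (e + c)).card := Finset.card_image_of_injOn hinj
    have heq := Finset.eq_of_subset_of_card_le hsub (le_of_eq hcard.symm)
    have : r ∈ (Finset.range (e + c)).image (fun t => uu e c t % (e + c)) := by
      rw [heq]; exact Finset.mem_range.mpr hr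
    obtain ⟨t, ht, ht'⟩ := Finset.mem_image.mp this
    exact ⟨t, Finset.mem_range.mp ht, ht'⟩
  -- the top Apéry element
  have hB : uu e c (c + 1) = (c + 1) * (e + c) + 2 * (c + 1) := uu_lo e c le_rfl
  have hle_B : ∀ t, t < e + c → uu e c t ≤ uu e c (c + 1) := by
    intro t ht
    obtain ⟨t', _, hpair⟩ := uu_pair hγ he2 ht
    omega
  have hbig : ∀ x : ℕ, uu e c (c + 1) ≤ x → x ∈ H := by
    intro x hx
    obtain ⟨t, ht, hmod⟩ := hsurj (x % (e + c)) (Nat.mod_lt _ (by omega))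
    exact (hcrit x).mpr ⟨t, ht, le_trans (hle_B t ht) hx, hmod.symm⟩
  have hcompl : Hᶜ.Finite := by
    apply (Set.finite_Iio (uu e c (c + 1))).subset
    intro x hx
    rw [Set.mem_Iio]
    by_contra hcon
    exact hx (hbig x (by omega))
  -- the Frobenius number
  have hFB : (c ^ 2 + (e + 2) * c + 2) + (e + c) = uu e c (c + 1) := by
    rw [hB]; ring
  have hFnot : (c ^ 2 + (e + 2) * c + 2) ∉ H := by
    intro hFmem
    obtain ⟨t, ht, hle, hmod⟩ := (hcrit _).mp hFmem
    have h1 : (c ^ 2 + (e + 2) * c + 2) % (e + c) = uu e c (c + 1) % (e + c) := by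
      conv_rhs => rw [← hFB]
      rw [Nat.add_mod_right]
    have h2 : t = c + 1 := uu_inj hγ hε ht (by omega) (by rw [← hmod, h1])
    rw [h2] at hle
    omega
  have hgreat : ∀ x : ℕ, x ∉ H → x ≤ c ^ 2 + (e + 2) * c + 2 := by
    intro x hx
    by_contra hcon
    push_neg at hcon
    obtain ⟨t, ht, hmod⟩ := hsurj (x % (e + c)) (Nat.mod_lt _ (by omega))
    rcases le_or_gt (uu e c t) x with hle | hlt
    · exact hx ((hcrit x).mpr ⟨t, ht, hle, hmod.symm⟩)
    · have hdvd : (e + c) ∣ uu e c t - x := by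
        have : x ≡ uu e c t [MOD e + c] := hmod.symm
        exact (Nat.modEq_iff_dvd' (le_of_lt hlt)).mp this
      have h1 : uu e c t ≤ uu e c (c + 1) := hle_B t ht
      have h2 : 0 < uu e c t - x := by omega
      have h3 : e + c ≤ uu e c t - x := Nat.le_of_dvd h2 hdvd
      omega
  have hfrob : Frob H = c ^ 2 + (e + 2) * c + 2 := by
    have hIG : IsGreatest Hᶜ (c ^ 2 + (e + 2) * c + 2) := by
      constructor
      · exact hFnot
      · intro x hx
        exact hgreat x hx
    exact hIG.csSup_eq
  -- multiplicity
  have hmult : sInf {x ∈ H | 0 < x} = e + c := by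
    apply le_antisymm
    · exact Nat.sInf_le ⟨hm, by omega⟩
    · have hne : Set.Nonempty {x ∈ H | 0 < x} := ⟨e + c, hm, by omega⟩
      apply le_csInf hne
      rintro b ⟨hb, hbpos⟩
      obtain ⟨t, a, ht, hb'⟩ := hHT b hb
      rcases Nat.eq_zero_or_pos t with ht0 | ht0
      · subst ht0
        rw [uu_zero] at hb'
        rcases Nat.eq_zero_or_pos a with ha0 | ha0
        · subst ha0; simp at hb'; omega
        · have h9 : 1 * (e + c) ≤ a * (e + c) := Nat.mul_le_mul_right _ ha0
          omega
      · have := uu_ge hγ hγ1 ht0 ht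
        omega
  -- integer-level criterion
  have hcritZ_mpr : ∀ (z : ℤ) (t : ℕ), t < e + c → (uu e c t : ℤ) ≤ z →
      ((e + c : ℕ) : ℤ) ∣ z - (uu e c t : ℤ) → z ∈ ((Nat.cast : ℕ → ℤ) '' H) := by
    intro z t ht hle hdvd
    obtain ⟨k, hk⟩ := hdvd
    have hM0 : (0 : ℤ) < ((e + c : ℕ) : ℤ) := by exact_mod_cast (by omega : 0 < e + c)
    have hk0 : 0 ≤ k := by nlinarith
    refine ⟨k.toNat * (e + c) + uu e c t, hTmem _ t ht, ?_⟩
    push_cast at hk ⊢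
    rw [Int.toNat_of_nonneg hk0]
    linarith
  have hmemZ_iff : ∀ (z : ℤ) (t : ℕ), t < e + c →
      ((e + c : ℕ) : ℤ) ∣ z - (uu e c t : ℤ) →
      (z ∈ ((Nat.cast : ℕ → ℤ) '' H) ↔ (uu e c t : ℤ) ≤ z) := by
    intro z t ht hdvd
    constructor
    · rintro ⟨x, hx, rfl⟩
      obtain ⟨t₂, b, ht₂, hx'⟩ := hHT x hx
      have hxz : (x : ℤ) = b * ((e + c : ℕ) : ℤ) + uu e c t₂ := by exact_mod_cast hx'
      have hdd : ((e + c : ℕ) : ℤ) ∣ (uu e c t₂ : ℤ) - (uu e c t : ℤ) := by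
        have h1 : ((e + c : ℕ) : ℤ) ∣ (x : ℤ) - uu e c t₂ := ⟨b, by linarith⟩
        have h2 := dvd_sub hdvd h1
        have h3 : (x : ℤ) - uu e c t - ((x : ℤ) - uu e c t₂)
            = (uu e c t₂ : ℤ) - uu e c t := by ring
        rwa [h3] at h2
      have hteq : t = t₂ := by
        have hmq : Nat.ModEq (e + c) (uu e c t) (uu e c t₂) :=
          (Nat.modEq_iff_dvd).mpr hdd
        exact uu_inj hγ hε ht ht₂ hmq
      subst hteq
      have hb0 : (0 : ℤ) ≤ (b : ℤ) * ((e + c : ℕ) : ℤ) := by positivity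
      linarith
    · intro hle
      exact hcritZ_mpr z t ht hle hdvd
  have hresZ : ∀ z : ℤ, ∃ t, t < e + c ∧ ((e + c : ℕ) : ℤ) ∣ z - (uu e c t : ℤ) := by
    intro z
    have hM0 : (0 : ℤ) < ((e + c : ℕ) : ℤ) := by exact_mod_cast (by omega : 0 < e + c)
    have h1 : 0 ≤ z % ((e + c : ℕ) : ℤ) := Int.emod_nonneg z (ne_of_gt hM0)
    have h2 : z % ((e + c : ℕ) : ℤ) < ((e + c : ℕ) : ℤ) := Int.emod_lt_of_pos z hM0
    have hrz : (((z % ((e + c : ℕ) : ℤ)).toNat : ℕ) : ℤ) = z % ((e + c : ℕ) : ℤ) :=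
      Int.toNat_of_nonneg h1
    have hr : (z % ((e + c : ℕ) : ℤ)).toNat < e + c := by
      have : (((z % ((e + c : ℕ) : ℤ)).toNat : ℕ) : ℤ) < ((e + c : ℕ) : ℤ) := by
        rw [hrz]; exact h2
      exact_mod_cast this
    obtain ⟨t, ht, hmod⟩ := hsurj _ hr
    refine ⟨t, ht, ?_⟩
    have h3 : (uu e c t : ℤ) % ((e + c : ℕ) : ℤ) = z % ((e + c : ℕ) : ℤ) := by
      rw [← hrz, ← hmod]
      exact_mod_cast (Int.natCast_mod (uu e c t) (e + c)).symm
    have h4 : z % ((e + c : ℕ) : ℤ) = (z - uu e c t) % ((e + c : ℕ) : ℤ) + (uu e c t : ℤ) % ((e + c : ℕ) : ℤ) ∨ True := Or.inr trivial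
    have h5 : (z - (uu e c t : ℤ)) % ((e + c : ℕ) : ℤ) = 0 := by
      rw [Int.sub_emod, h3, sub_self, Int.zero_emod]
    exact Int.dvd_of_emod_eq_zero h5
  -- symmetry
  have hFnotZ : (((c ^ 2 + (e + 2) * c + 2 : ℕ)) : ℤ) ∉ ((Nat.cast : ℕ → ℤ) '' H) := by
    rintro ⟨y, hy, hyz⟩
    have : y = c ^ 2 + (e + 2) * c + 2 := by exact_mod_cast hyz
    subst this
    exact hFnot hy
  have hFBz : (((c ^ 2 + (e + 2) * c + 2 : ℕ)) : ℤ) + ((e + c : ℕ) : ℤ)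
      = (uu e c (c + 1) : ℤ) := by exact_mod_cast hFB
  have hsym : ∀ z : ℤ, z ∉ ((Nat.cast : ℕ → ℤ) '' H) →
      (((c ^ 2 + (e + 2) * c + 2 : ℕ)) : ℤ) - z ∈ ((Nat.cast : ℕ → ℤ) '' H) := by
    intro z hz
    obtain ⟨t, ht, hdvd⟩ := hresZ z
    have hnle : ¬ (uu e c t : ℤ) ≤ z := fun hle => hz (hcritZ_mpr z t ht hle hdvd)
    push_neg at hnle
    have hdvd' : ((e + c : ℕ) : ℤ) ∣ (uu e c t : ℤ) - z := by
      have := dvd_neg.mpr hdvd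
      rwa [neg_sub] at this
    have hMle : ((e + c : ℕ) : ℤ) ≤ (uu e c t : ℤ) - z :=
      Int.le_of_dvd (by linarith) hdvd'
    obtain ⟨t', ht', hpair⟩ := uu_pair hγ he2 ht
    have hpz : (uu e c t : ℤ) + (uu e c t' : ℤ) = (uu e c (c + 1) : ℤ) := by
      exact_mod_cast hpair
    apply hcritZ_mpr _ t' ht'
    · linarith
    · have heq : (((c ^ 2 + (e + 2) * c + 2 : ℕ)) : ℤ) - z - uu e c t'
          = ((uu e c t : ℤ) - z) - ((e + c : ℕ) : ℤ) := by linarith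
      rw [heq]
      exact dvd_sub hdvd' dvd_rfl
  -- F is a pseudo-Frobenius number
  have hPF_F : (((c ^ 2 + (e + 2) * c + 2 : ℕ)) : ℤ) ∈ PF H := by
    refine ⟨hFnotZ, ?_⟩
    intro h hh hpos
    obtain ⟨t, b, ht, hhe⟩ := hHT h hh
    rcases Nat.eq_zero_or_pos t with ht0 | ht0
    · subst ht0
      rw [uu_zero] at hhe
      obtain ⟨k, hk⟩ : ∃ k, b = k + 1 := by
        rcases Nat.eq_zero_or_pos b with h0 | h0
        · subst h0; simp at hhe; omega
        · exact ⟨b - 1, by omega⟩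
      have hx : (c ^ 2 + (e + 2) * c + 2) + h = k * (e + c) + uu e c (c + 1) := by
        have hhz : (h : ℤ) = ((k : ℤ) + 1) * ((e : ℤ) + c) := by
          rw [hhe, hk]; push_cast; ring
        have hFBz' := hFBz
        push_cast at hFBz'
        zify
        linarith [hFBz', hhz]
      refine ⟨(c ^ 2 + (e + 2) * c + 2) + h, ?_, by push_cast; ring⟩
      rw [hx]
      exact hTmem k (c + 1) (by omega)
    · have hu2 := uu_ge hγ hγ1 ht0 ht
      obtain ⟨t', ht', hdvd'⟩ := hresZ ((((c ^ 2 + (e + 2) * c + 2 : ℕ)) : ℤ) + h)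
      apply hcritZ_mpr _ t' ht' ?_ hdvd'
      have h1 : uu e c t' ≤ uu e c (c + 1) := hle_B t' ht'
      have h2 : uu e c t' ≤ (c ^ 2 + (e + 2) * c + 2) + h := by omega
      exact_mod_cast h2
  -- PF is a singleton
  have hPFeq : PF H = {(((c ^ 2 + (e + 2) * c + 2 : ℕ)) : ℤ)} := by
    apply Set.eq_singleton_iff_unique_mem.mpr
    refine ⟨hPF_F, ?_⟩
    intro f hf
    obtain ⟨hf1, hf2⟩ := hf
    obtain ⟨x, hx, hxz⟩ := hsym f hf1
    rcases Nat.eq_zero_or_pos x with hx0 | hx0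
    · subst hx0
      push_cast at hxz ⊢
      linarith
    · exfalso
      have hmem := hf2 x hx hx0
      have hfx : f + (x : ℤ) = (((c ^ 2 + (e + 2) * c + 2 : ℕ)) : ℤ) := by linarith
      rw [hfx] at hmem
      exact hFnotZ hmem
  -- assemble, with minimality proved inline
  refine ⟨⟨hzero, hadd, hcompl⟩, ?_, ?_, hmult, hfrob⟩
  · rw [hPFeq]; exact Set.ncard_singleton _
  · intro j hKH
    have hjlt := j.isLt
    have hnj : n j ∈ {m | ∃ a : Fin e → ℕ, a j = 0 ∧ m = ∑ i, a i * n i} := by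
      rw [hKH]; exact hgen j
    obtain ⟨a, haj, hsum⟩ := hnj
    rcases Nat.lt_or_ge (j : ℕ) 1 with hj0 | hj1
    · -- generator n₁ = e+c
      have hj0' : (j : ℕ) = 0 := by omega
      have hnjv : n j = e + c := hn0 j hj0'
      by_cases hall : ∀ i, a i = 0
      · have h0 : ∑ i, a i * n i = 0 := Finset.sum_eq_zero fun i _ => by rw [hall i]; ring
        omega
      · push_neg at hall
        obtain ⟨i, hi⟩ := hall
        have hai : 1 ≤ a i := Nat.pos_of_ne_zero hi
        have hij : i ≠ j := fun h => hi (h ▸ haj)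
        have hi1 : 1 ≤ (i : ℕ) := by
          rcases Nat.eq_zero_or_pos (i : ℕ) with h | h
          · exact absurd (Fin.ext (by omega) : i = j) hij
          · exact h
        have h1 : n i ≤ a i * n i := Nat.le_mul_of_pos_left _ hai
        have h2 : a i * n i ≤ ∑ i, a i * n i :=
          Finset.single_le_sum (f := fun i => a i * n i) (fun i _ => Nat.zero_le _)
            (Finset.mem_univ i)
        have h3 := hgen_ge i hi1
        omega
    · rcases Nat.lt_or_ge (j : ℕ) 2 with hj1' | hj2
      · -- generator n₂ = e+c+2
        have hjv : (j : ℕ) = 1 := by omega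
        have hnjv : n j = e + c + 2 := hn1 j hjv
        by_cases hbig : ∃ i : Fin e, 2 ≤ (i : ℕ) ∧ 1 ≤ a i
        · obtain ⟨i, hi2, hai⟩ := hbig
          have h1 : n i = uu e c (c + (i : ℕ)) := hnu i hi2
          have h2 : uu e c (c + (i : ℕ)) = γ * (e + c) + 2 * (c + (i : ℕ)) :=
            uu_hi e hγ (by omega)
          have h3 : 1 * (e + c) ≤ γ * (e + c) := Nat.mul_le_mul_right _ hγ1
          have h4 : n i ≤ a i * n i := Nat.le_mul_of_pos_left _ hai
          have h5 : a i * n i ≤ ∑ i, a i * n i :=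
            Finset.single_le_sum (f := fun i => a i * n i) (fun i _ => Nat.zero_le _)
              (Finset.mem_univ i)
          omega
        · push_neg at hbig
          have hsum0 : ∑ i, a i * n i = a ⟨0, by omega⟩ * n ⟨0, by omega⟩ := by
            apply Finset.sum_eq_single
            · intro b _ hb
              rcases Nat.lt_or_ge (b : ℕ) 1 with h | h
              · exact absurd (Fin.ext (by simp; omega) : b = ⟨0, by omega⟩) hb
              · rcases Nat.lt_or_ge (b : ℕ) 2 with h' | h'
                · have : b = j := Fin.ext (by omega)
                  rw [this, haj]; ring
                · have := hbig b h'
                  rw [show a b = 0 by omega]; ring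
            · intro h; exact absurd (Finset.mem_univ _) h
          rw [hn0 ⟨0, by omega⟩ rfl] at hsum0
          rcases Nat.lt_or_ge (a ⟨0, by omega⟩) 2 with hA | hA
          · have : a ⟨0, by omega⟩ = 0 ∨ a ⟨0, by omega⟩ = 1 := by omega
            rcases this with h | h <;> rw [h] at hsum0 <;> omega
          · have := Nat.mul_le_mul_right (e + c) hA
            omega
      · -- a higher generator n j = uu e c (c + j)
        have hnjv : n j = uu e c (c + (j : ℕ)) := hnu j hj2
        by_cases ha0 : 1 ≤ a ⟨0, by omega⟩
        · obtain ⟨k, hk⟩ : ∃ k, a ⟨0, by omega⟩ = k + 1 := ⟨a ⟨0, by omega⟩ - 1, by omega⟩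
          have hs := hsplit a ⟨0, by omega⟩ k hk
          have hyH : (∑ i, (Function.update a ⟨0, by omega⟩ k) i * n i) ∈ H := by
            rw [hH]; exact ⟨_, rfl⟩
          obtain ⟨t, b, ht, hy⟩ := hHT _ hyH
          have hnj2 : n j = (b + 1) * (e + c) + uu e c t := by
            rw [hsum, hs, hy, hn0 ⟨0, by omega⟩ rfl]; ring
          have h9 : uu e c (c + (j : ℕ)) = uu e c t + (b + 1) * (e + c) := by
            rw [← hnjv]; omega
          have hteq : t = c + (j : ℕ) := by
            apply uu_inj hγ hε ht (by omega)
            rw [h9, Nat.add_mul_mod_self_right]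
          rw [hteq, ← hnjv] at hnj2
          have hbb : (b + 1) * (e + c) = 0 := by omega
          rcases Nat.mul_eq_zero.mp hbb with h | h <;> omega
        · have ha00 : a ⟨0, by omega⟩ = 0 := by omega
          by_cases hall : ∀ i, a i = 0
          · have h0 : ∑ i, a i * n i = 0 := Finset.sum_eq_zero fun i _ => by rw [hall i]; ring
            have := hnpos j
            omega
          · push_neg at hall
            obtain ⟨i₁, hi₁⟩ := hall
            have hai₁ : 1 ≤ a i₁ := Nat.pos_of_ne_zero hi₁
            have hi₁j : i₁ ≠ j := fun h => hi₁ (h ▸ haj)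
            have hi₁0 : 1 ≤ (i₁ : ℕ) := by
              rcases Nat.eq_zero_or_pos (i₁ : ℕ) with h | h
              · exfalso
                have : i₁ = ⟨0, by omega⟩ := Fin.ext (by simp; omega)
                rw [this] at hi₁
                exact hi₁ ha00
              · exact h
            obtain ⟨k, hk⟩ : ∃ k, a i₁ = k + 1 := ⟨a i₁ - 1, by omega⟩
            have hs := hsplit a i₁ k hk
            have hyH : (∑ i, (Function.update a i₁ k) i * n i) ∈ H := by
              rw [hH]; exact ⟨_, rfl⟩
            obtain ⟨t, b, ht, hy⟩ := hHT _ hyH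
            obtain ⟨s, hs1, hs2, hs3, hs4⟩ := hgenu i₁ hi₁0
            obtain ⟨t', b₂, ht', heq, hside⟩ := key_add hγ hγ1 he2 hs1 ht
            have hnj2 : n j = (b + b₂) * (e + c) + uu e c t' := by
              rw [hsum, hs, hy, hs3]
              calc uu e c s + (b * (e + c) + uu e c t)
                  = b * (e + c) + (uu e c s + uu e c t) := by ring
                _ = b * (e + c) + (b₂ * (e + c) + uu e c t') := by rw [heq]
                _ = (b + b₂) * (e + c) + uu e c t' := by ring
            have h9 : uu e c (c + (j : ℕ)) = uu e c t' + (b + b₂) * (e + c) := by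
              rw [← hnjv]; omega
            have hteq : t' = c + (j : ℕ) := by
              apply uu_inj hγ hε ht' (by omega)
              rw [h9, Nat.add_mul_mod_self_right]
            rw [hteq, ← hnjv] at hnj2
            have hbb : (b + b₂) * (e + c) = 0 := by omega
            have hbb0 : b = 0 ∧ b₂ = 0 := by
              rcases Nat.mul_eq_zero.mp hbb with h | h <;> omega
            rcases hside hbb0.2 with h | h | h
            · omega
            · omega
            · have hy0 : (∑ i, (Function.update a i₁ k) i * n i) = 0 := by
                rw [hy, hbb0.1, h, uu_zero]; ring
              have hnj3 : n j = uu e c s := by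
                rw [hsum, hs, hy0, hs3]; ring
              have hseq : s = c + (j : ℕ) := by
                apply uu_inj hγ hε hs1 (by omega)
                rw [← hnj3, hnjv]
              rcases hs4 with h1 | ⟨h1, h2⟩
              · omega
              · exact hi₁j (Fin.ext (by omega))
end

section
/- Let H be a symmetric numerical semigroup minimally generated by n_1 < n_2 < ⋯ < n_e with n_1 = e + 1. Then n_i + n_{e+2−i} = Fr(H) + e + 1 for every i with 2 ≤ i ≤ e. -/
namespace NSAux

def img (H : Set ℕ) : Set ℤ := (Nat.cast : ℕ → ℤ) '' H

lemma mem_img {H : Set ℕ} {x : ℕ} : (x : ℤ) ∈ img H ↔ x ∈ H := by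
  constructor
  · rintro ⟨y, hy, hxy⟩
    have : y = x := by exact_mod_cast hxy
    rwa [this] at hy
  · intro hx; exact ⟨x, hx, rfl⟩

lemma img_nonneg {H : Set ℕ} {z : ℤ} (hz : z ∈ img H) : 0 ≤ z := by
  rcases hz with ⟨y, _, rfl⟩; positivity

lemma frob_not_mem {H : Set ℕ} (hH : IsNumericalSemigroup H) (h1 : 1 ∉ H) :
    Frob H ∉ H := by
  have hne : Hᶜ.Nonempty := ⟨1, h1⟩
  exact hne.csSup_mem hH.2.2

lemma gap_le_frob {H : Set ℕ} (hH : IsNumericalSemigroup H) {x : ℕ} (hx : x ∉ H) :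
    x ≤ Frob H :=
  le_csSup hH.2.2.bddAbove hx

lemma mem_of_frob_lt {H : Set ℕ} (hH : IsNumericalSemigroup H) {x : ℕ} (hx : Frob H < x) :
    x ∈ H := by
  by_contra h
  exact absurd (gap_le_frob hH h) (by omega)

lemma frob_mem_PF {H : Set ℕ} (hH : IsNumericalSemigroup H) (h1 : 1 ∉ H) :
    (Frob H : ℤ) ∈ PF H := by
  constructor
  · rw [show ((Nat.cast : ℕ → ℤ) '' H) = img H from rfl, mem_img]
    exact frob_not_mem hH h1
  · intro h hh hpos
    have : Frob H + h ∈ H := mem_of_frob_lt hH (by omega)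
    exact ⟨Frob H + h, this, by push_cast; ring⟩

lemma PF_eq {H : Set ℕ} (hH : IsNumericalSemigroup H) (h1 : 1 ∉ H)
    (hsym : (PF H).ncard = 1) : PF H = {(Frob H : ℤ)} := by
  obtain ⟨a, ha⟩ := Set.ncard_eq_one.mp hsym
  have := frob_mem_PF hH h1
  rw [ha] at this ⊢
  simp_all

lemma sym {H : Set ℕ} (hH : IsNumericalSemigroup H) (h1 : 1 ∉ H)
    (hsym : (PF H).ncard = 1) {z : ℤ} (hz : z ∉ img H) :
    (Frob H : ℤ) - z ∈ img H := by
  set F := Frob H with hF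
  by_contra hc
  -- z is between 0 and F
  have hz0 : 0 ≤ z := by
    by_contra h
    push_neg at h
    apply hc
    have : ((F + (-z).toNat : ℕ) : ℤ) = F - z := by push_cast; omega
    rw [← this, mem_img]
    exact mem_of_frob_lt hH (by omega)
  have hzF : z ≤ F := by
    by_contra h
    push_neg at h
    apply hz
    have : ((z.toNat : ℕ) : ℤ) = z := by omega
    rw [← this, mem_img]
    exact mem_of_frob_lt hH (by omega)
  set x := z.toNat with hx
  have hzx : (x : ℤ) = z := by omega
  have hxH : x ∉ H := by rw [← mem_img, hzx]; exact hz
  have hFxH : F - x ∉ H := by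
    rw [← mem_img]
    have : ((F - x : ℕ) : ℤ) = F - z := by push_cast [Nat.cast_sub (by omega : x ≤ F)]; omega
    rw [this]; exact hc
  -- maximal such element
  set S : Set ℕ := {y | y ≤ F ∧ y ∉ H ∧ F - y ∉ H} with hS
  have hSfin : S.Finite := (Set.finite_Iic F).subset (fun y hy => hy.1)
  have hSne : S.Nonempty := ⟨x, ⟨by omega, hxH, hFxH⟩⟩
  set y := sSup S with hy
  have hyS : y ∈ S := hSne.csSup_mem hSfin
  have hyPF : (y : ℤ) ∈ PF H := by
    constructor
    · rw [show ((Nat.cast : ℕ → ℤ) '' H) = img H from rfl, mem_img]; exact hyS.2.1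
    · intro h hh hpos
      have key : y + h ∈ H := by
        by_contra hyh
        have h1' : y + h ≤ F := gap_le_frob hH hyh
        have h2' : F - (y + h) ∈ H := by
          by_contra h2
          have : y + h ∈ S := ⟨h1', hyh, h2⟩
          have := le_csSup hSfin.bddAbove this
          omega
        have : F - y ∈ H := by
          have := hH.2.1 _ h2' _ hh
          have heq : F - (y + h) + h = F - y := by omega
          rwa [heq] at this
        exact hyS.2.2 this
      exact ⟨y + h, key, by push_cast; ring⟩
  have := PF_eq hH h1 hsym
  rw [this] at hyPF
  have : y = F := by simpa using hyPF
  have : F - y ∉ H := hyS.2.2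
  simp [‹y = F›] at this
  exact this hH.1

lemma sym' {H : Set ℕ} (hH : IsNumericalSemigroup H) (h1 : 1 ∉ H)
    {z : ℤ} (hz : z ∈ img H) : (Frob H : ℤ) - z ∉ img H := by
  rintro ⟨b, hb, hbe⟩
  rcases hz with ⟨a, ha, rfl⟩
  have : Frob H = a + b := by omega
  have : Frob H ∈ H := this ▸ hH.2.1 _ ha _ hb
  exact frob_not_mem hH h1 this

/-- Apery set of `H` with respect to `m`. -/
def Ap (H : Set ℕ) (m : ℕ) : Set ℕ := {a | a ∈ H ∧ ((a : ℤ) - m) ∉ img H}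

lemma zero_mem_ap {H : Set ℕ} (hH : IsNumericalSemigroup H) {m : ℕ} (hm : 0 < m) :
    0 ∈ Ap H m := by
  refine ⟨hH.1, fun h => ?_⟩
  have := img_nonneg h
  omega

lemma frob_add_mem_ap {H : Set ℕ} (hH : IsNumericalSemigroup H) (h1 : 1 ∉ H)
    {m : ℕ} (hm : 0 < m) : Frob H + m ∈ Ap H m := by
  refine ⟨mem_of_frob_lt hH (by omega), fun h => ?_⟩
  have : ((Frob H + m : ℕ) : ℤ) - m = ((Frob H : ℕ) : ℤ) := by push_cast; ring
  rw [this, mem_img] at h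
  exact frob_not_mem hH h1 h

/-- the symmetry pairing on the Apery set -/
lemma ap_pair {H : Set ℕ} (hH : IsNumericalSemigroup H) (h1 : 1 ∉ H)
    (hsym : (PF H).ncard = 1) {m a : ℕ} (ha : a ∈ Ap H m) :
    ∃ b ∈ Ap H m, a + b = Frob H + m := by
  obtain ⟨haH, ham⟩ := ha
  have h2 : (Frob H : ℤ) - ((a : ℤ) - m) ∈ img H := sym hH h1 hsym ham
  obtain ⟨b, hbH, hbe⟩ := h2
  refine ⟨b, ⟨hbH, ?_⟩, by omega⟩
  have : (b : ℤ) - m = (Frob H : ℤ) - a := by omega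
  rw [this]
  exact sym' hH h1 (mem_img.mpr haH)

/-- summands of Apery elements are Apery elements -/
lemma ap_summand {H : Set ℕ} (hH : IsNumericalSemigroup H) {m x y : ℕ}
    (hx : x ∈ H) (hy : y ∈ H) (hxy : x + y ∈ Ap H m) : y ∈ Ap H m := by
  refine ⟨hy, fun h => ?_⟩
  obtain ⟨c, hcH, hce⟩ := h
  apply hxy.2
  have : ((x + y : ℕ) : ℤ) - m = ((x + c : ℕ) : ℤ) := by push_cast; omega
  rw [this, mem_img]
  exact hH.2.1 _ hx _ hcH

/-- multiples of an element are in H -/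
lemma nsmul_mem {H : Set ℕ} (hH : IsNumericalSemigroup H) {m : ℕ} (hm : m ∈ H) :
    ∀ t : ℕ, t * m ∈ H := by
  intro t
  induction t with
  | zero => simpa using hH.1
  | succ k ih => have := hH.2.1 _ ih _ hm; rwa [show (k+1)*m = k*m+m by ring]

/-- each residue class contains at most one Apery element -/
lemma ap_unique {H : Set ℕ} (hH : IsNumericalSemigroup H) {m : ℕ} (hm : m ∈ H)
    (hm0 : 0 < m) {a a' : ℕ} (ha : a ∈ Ap H m) (ha' : a' ∈ Ap H m)
    (hmod : a % m = a' % m) : a = a' := by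
  -- wlog a ≤ a'
  have key : ∀ b b' : ℕ, b ∈ Ap H m → b' ∈ Ap H m → b % m = b' % m → b ≤ b' → b = b' := by
    intro b b' hb hb' heq hle
    by_contra hne
    have hdvd : m ∣ b' - b := (Nat.modEq_iff_dvd' hle).mp heq
    obtain ⟨t, ht⟩ := hdvd
    have ht0 : t ≠ 0 := by rintro rfl; simp at ht; omega
    obtain ⟨s, rfl⟩ : ∃ s, t = s + 1 := ⟨t - 1, by omega⟩
    have h2 : b' = b + m * s + m := by
      have h3 : b' - b = m * s + m := by rw [ht]; ring
      omega
    apply hb'.2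
    have hmem : b + m * s ∈ H := hH.2.1 _ hb.1 _ (by rw [mul_comm]; exact nsmul_mem hH hm s)
    have h2c : (b' : ℤ) = (b : ℤ) + (m : ℤ) * s + m := by exact_mod_cast h2
    rw [show ((b' : ℤ) - m) = ((b + m * s : ℕ) : ℤ) by push_cast; linarith, mem_img]
    exact hmem
  rcases le_total a a' with h | h
  · exact key a a' ha ha' hmod h
  · exact (key a' a ha' ha hmod.symm h).symm

/-- each residue class contains an Apery element -/
lemma ap_exists {H : Set ℕ} (hH : IsNumericalSemigroup H) {m : ℕ} (hm : m ∈ H)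
    (hm0 : 0 < m) (r : ℕ) (hr : r < m) : ∃ a ∈ Ap H m, a % m = r := by
  set S : Set ℕ := {h | h ∈ H ∧ h % m = r} with hS
  have hSne : S.Nonempty := by
    refine ⟨r + m * (Frob H + 1), ?_, ?_⟩
    · exact mem_of_frob_lt hH (by nlinarith)
    · simp [Nat.add_mul_mod_self_left, Nat.mod_eq_of_lt hr]
  set a := sInf S with ha
  have haS : a ∈ S := Nat.sInf_mem hSne
  refine ⟨a, ⟨haS.1, fun h => ?_⟩, haS.2⟩
  obtain ⟨c, hcH, hce⟩ := h
  have hca : c + m = a := by omega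
  have hcr : c % m = r := by
    rw [← haS.2, ← hca, Nat.add_mod_right]
  have : c ∈ S := ⟨hcH, hcr⟩
  have := Nat.sInf_le this
  omega


variable {e : ℕ} {n : Fin e → ℕ} {H : Set ℕ}

lemma gen_mem (hgen : H = {m | ∃ a : Fin e → ℕ, m = ∑ i, a i * n i}) (i : Fin e) : n i ∈ H := by
  rw [hgen]
  refine ⟨fun k => if k = i then 1 else 0, ?_⟩
  simp [ite_mul]

lemma split_sum (j : Fin e) (c : Fin e → ℕ) :
    ∑ i, c i * n i = c j * n j + ∑ i ∈ Finset.univ.erase j, c i * n i :=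
  (Finset.add_sum_erase _ _ (Finset.mem_univ j)).symm

lemma pos_ge (hgen : H = {m | ∃ a : Fin e → ℕ, m = ∑ i, a i * n i}) (he : 1 ≤ e) (hmono : StrictMono n)
    (hn1 : ∀ i : Fin e, (i : ℕ) = 0 → n i = e + 1)
    {h : ℕ} (hh : h ∈ H) (hpos : 0 < h) : e + 1 ≤ h := by
  rw [hgen] at hh
  obtain ⟨a, rfl⟩ := hh
  have : ∃ i, a i ≠ 0 := by
    by_contra hc
    push_neg at hc
    simp [hc] at hpos
  obtain ⟨i, hi⟩ := this
  have h0 : n ⟨0, by omega⟩ = e + 1 := hn1 _ rfl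
  have h1 : n ⟨0, by omega⟩ ≤ n i := hmono.monotone (by simp [Fin.le_def])
  have h2 : n i ≤ a i * n i := Nat.le_mul_of_pos_left _ (by omega)
  have h3 : a i * n i ≤ ∑ k, a k * n k :=
    Finset.single_le_sum (f := fun k => a k * n k) (fun k _ => Nat.zero_le _) (Finset.mem_univ i)
  omega

lemma not_gen_self (hgen : H = {m | ∃ a : Fin e → ℕ, m = ∑ i, a i * n i}) (hmin : ∀ j : Fin e, {m | ∃ a : Fin e → ℕ, a j = 0 ∧ m = ∑ i, a i * n i} ≠ H)
    (j : Fin e) : ¬ ∃ a : Fin e → ℕ, a j = 0 ∧ n j = ∑ i, a i * n i := by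
  rintro ⟨a, haj, hrep⟩
  apply hmin j
  ext x
  simp only [Set.mem_setOf_eq]
  constructor
  · rintro ⟨b, _, rfl⟩
    rw [hgen]; exact ⟨b, rfl⟩
  · intro hx
    rw [hgen] at hx
    obtain ⟨b, rfl⟩ := hx
    set c : Fin e → ℕ := fun i => if i = j then 0 else b i + b j * a i with hc
    refine ⟨c, by simp [hc], ?_⟩
    have ha' : ∑ i ∈ Finset.univ.erase j, a i * n i = n j := by
      have := split_sum (n := n) j a
      rw [haj] at this
      omega
    rw [split_sum (n := n) j b, split_sum (n := n) j c]
    have hcj : c j = 0 := by simp [hc]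
    rw [hcj, zero_mul, zero_add]
    have hsum : ∑ i ∈ Finset.univ.erase j, c i * n i
        = ∑ i ∈ Finset.univ.erase j, (b i + b j * a i) * n i :=
      Finset.sum_congr rfl (fun i hi => by
        have hci : c i = b i + b j * a i := by simp [hc, (Finset.mem_erase.mp hi).1]
        rw [hci])
    rw [hsum]
    have : ∑ i ∈ Finset.univ.erase j, (b i + b j * a i) * n i
        = ∑ i ∈ Finset.univ.erase j, b i * n i + b j * ∑ i ∈ Finset.univ.erase j, a i * n i := by
      rw [Finset.mul_sum, ← Finset.sum_add_distrib]
      exact Finset.sum_congr rfl (fun i _ => by ring)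
    rw [this, ha']
    ring

lemma irred (hgen : H = {m | ∃ a : Fin e → ℕ, m = ∑ i, a i * n i}) (hmin : ∀ j : Fin e, {m | ∃ a : Fin e → ℕ, a j = 0 ∧ m = ∑ i, a i * n i} ≠ H)
    (j : Fin e) {h₁ h₂ : ℕ} (hh₁ : h₁ ∈ H) (hh₂ : h₂ ∈ H)
    (hp₁ : 0 < h₁) (hp₂ : 0 < h₂) : n j ≠ h₁ + h₂ := by
  intro heq
  rw [hgen] at hh₁ hh₂
  obtain ⟨a, rfl⟩ := hh₁
  obtain ⟨b, rfl⟩ := hh₂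
  have key : ∀ c : Fin e → ℕ, (0 < ∑ i, c i * n i) → n j = ∑ i, c i * n i + _root_.id 0 → True := fun _ _ _ => trivial
  have haj : a j = 0 := by
    by_contra hc
    have h2 : n j ≤ a j * n j := Nat.le_mul_of_pos_left _ (by omega)
    have h3 : a j * n j ≤ ∑ k, a k * n k :=
      Finset.single_le_sum (f := fun k => a k * n k) (fun k _ => Nat.zero_le _) (Finset.mem_univ j)
    omega
  have hbj : b j = 0 := by
    by_contra hc
    have h2 : n j ≤ b j * n j := Nat.le_mul_of_pos_left _ (by omega)
    have h3 : b j * n j ≤ ∑ k, b k * n k :=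
      Finset.single_le_sum (f := fun k => b k * n k) (fun k _ => Nat.zero_le _) (Finset.mem_univ j)
    omega
  apply not_gen_self hgen hmin j
  refine ⟨fun i => a i + b i, by simp [haj, hbj], ?_⟩
  rw [heq, ← Finset.sum_add_distrib]
  exact Finset.sum_congr rfl (fun i _ => by ring)

lemma decomp (hgen : H = {m | ∃ a : Fin e → ℕ, m = ∑ i, a i * n i}) (he : 1 ≤ e) (hmono : StrictMono n)
    (hn1 : ∀ i : Fin e, (i : ℕ) = 0 → n i = e + 1)
    {w : ℕ} (hw : w ∈ H) (hw0 : w ≠ 0) (hwn : ∀ i, w ≠ n i) :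
    ∃ x y, x ∈ H ∧ y ∈ H ∧ 0 < x ∧ 0 < y ∧ w = x + y := by
  have hNpos : ∀ i : Fin e, 0 < n i := by
    intro i
    have h0 : n ⟨0, by omega⟩ = e + 1 := hn1 _ rfl
    have h1 : n ⟨0, by omega⟩ ≤ n i := hmono.monotone (by simp [Fin.le_def])
    omega
  have hw' := hw
  rw [hgen] at hw'
  obtain ⟨a, hrep⟩ := hw'
  have hex : ∃ i, a i ≠ 0 := by
    by_contra hc
    push_neg at hc
    apply hw0
    rw [hrep]
    simp [hc]
  obtain ⟨i, hi⟩ := hex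
  -- the total coefficient is at least 2
  rcases Nat.lt_or_ge (∑ k, a k) 2 with hs | hs
  · -- total = 1 : w = n i, contradiction
    exfalso
    have h3 : a i ≤ ∑ k, a k := Finset.single_le_sum (f := a) (fun k _ => Nat.zero_le _) (Finset.mem_univ i)
    have hai : a i = 1 := by omega
    have hrest : ∀ k, k ≠ i → a k = 0 := by
      intro k hk
      have := Finset.add_sum_erase Finset.univ a (Finset.mem_univ i)
      have hk' : k ∈ Finset.univ.erase i := Finset.mem_erase.mpr ⟨hk, Finset.mem_univ k⟩
      have h4 : a k ≤ ∑ l ∈ Finset.univ.erase i, a l :=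
        Finset.single_le_sum (f := a) (fun l _ => Nat.zero_le _) hk'
      omega
    apply hwn i
    rw [hrep, split_sum (n := n) i a, hai, one_mul]
    have : ∑ k ∈ Finset.univ.erase i, a k * n k = 0 :=
      Finset.sum_eq_zero (fun k hk => by rw [hrest k (Finset.mem_erase.mp hk).1, zero_mul])
    omega
  · -- total ≥ 2 : split off one copy of n i
    refine ⟨n i, w - n i, gen_mem hgen i, ?_, hNpos i, ?_, ?_⟩
    · rw [hgen]
      refine ⟨Function.update a i (a i - 1), ?_⟩
      rw [hrep, split_sum (n := n) i a, split_sum (n := n) i (Function.update a i (a i - 1))]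
      rw [Function.update_self]
      have hcongr : ∑ k ∈ Finset.univ.erase i, Function.update a i (a i - 1) k * n k
          = ∑ k ∈ Finset.univ.erase i, a k * n k :=
        Finset.sum_congr rfl (fun k hk => by
          rw [Function.update_of_ne (Finset.mem_erase.mp hk).1])
      rw [hcongr]
      have : (a i - 1) * n i + n i = a i * n i := by
        have : a i - 1 + 1 = a i := by omega
        calc (a i - 1) * n i + n i = (a i - 1 + 1) * n i := by ring
        _ = a i * n i := by rw [this]
      omega
    · -- w - n i > 0 : total coeff ≥ 2
      have hsplit := split_sum (n := n) i a
      rw [hrep]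
      rcases Nat.lt_or_ge 1 (a i) with h | h
      · -- a i ≥ 2
        have h2 : 2 * n i ≤ a i * n i := Nat.mul_le_mul_right _ h
        have := hNpos i
        omega
      · -- a i = 1, some other k has a k ≥ 1
        have hai : a i = 1 := by omega
        have hproj : a i * n i = n i := by rw [hai, one_mul]
        have : ∃ k, k ≠ i ∧ a k ≠ 0 := by
          by_contra hc
          push_neg at hc
          have h8 := Finset.add_sum_erase Finset.univ a (Finset.mem_univ i)
          have hz : ∑ l ∈ Finset.univ.erase i, a l = 0 :=
            Finset.sum_eq_zero (fun l hl => hc l (Finset.mem_erase.mp hl).1)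
          omega
        obtain ⟨k, hki, hk⟩ := this
        have hk' : k ∈ Finset.univ.erase i := Finset.mem_erase.mpr ⟨hki, Finset.mem_univ k⟩
        have h5 : a k * n k ≤ ∑ l ∈ Finset.univ.erase i, a l * n l :=
          Finset.single_le_sum (f := fun l => a l * n l) (fun l _ => Nat.zero_le _) hk'
        have h6 : n k ≤ a k * n k := Nat.le_mul_of_pos_left _ (by omega)
        have h7 := hNpos k
        omega
    · -- w = n i + (w - n i)
      have h3 : a i * n i ≤ ∑ k, a k * n k :=
        Finset.single_le_sum (f := fun k => a k * n k) (fun k _ => Nat.zero_le _) (Finset.mem_univ i)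
      have h6 : n i ≤ a i * n i := Nat.le_mul_of_pos_left _ (by omega)
      rw [hrep]
      omega


end NSAux

open NSAux

/-- if `H` is symmetric, minimally generated by
`n₁ < n₂ < ⋯ < n_e` with `n₁ = e+1`, then `n_i + n_{e+2−i} = Fr(H) + e + 1`
for `2 ≤ i ≤ e` (`0`-indexed: `n j + n (e−j) = Fr(H) + e + 1` for `1 ≤ j`). -/
theorem stmt15 {e : ℕ} (n : Fin e → ℕ) (H : Set ℕ)
    (hH : IsNumericalSemigroup H)
    (hsym : (PF H).ncard = 1)
    (hgen : H = {m | ∃ a : Fin e → ℕ, m = ∑ i, a i * n i})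
    (hmin : ∀ j : Fin e, {m | ∃ a : Fin e → ℕ, a j = 0 ∧ m = ∑ i, a i * n i} ≠ H)
    (hmono : StrictMono n)
    (hn1 : ∀ i : Fin e, (i : ℕ) = 0 → n i = e + 1) :
    ∀ j : Fin e, (hj : 1 ≤ (j : ℕ)) →
      n j + n (⟨e - (j : ℕ), by have := j.isLt; omega⟩ : Fin e) =
        Frob H + e + 1 := by
  intro j hj
  have he2 : 2 ≤ e := by have := j.isLt; omega
  have he1 : 1 ≤ e := by omega
  have hm0 : (0 : ℕ) < e + 1 := by omega
  have n0 : n ⟨0, by omega⟩ = e + 1 := hn1 _ rfl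
  have hmH : (e + 1) ∈ H := n0 ▸ gen_mem hgen ⟨0, by omega⟩
  have hnpos : ∀ i : Fin e, 0 < n i := fun i => by
    have : n ⟨0, by omega⟩ ≤ n i := hmono.monotone (by simp [Fin.le_def])
    omega
  have hnge : ∀ i : Fin e, e + 1 ≤ n i := fun i => by
    have : n ⟨0, by omega⟩ ≤ n i := hmono.monotone (by simp [Fin.le_def])
    omega
  have h1 : 1 ∉ H := fun h => by have := pos_ge hgen he1 hmono hn1 h one_pos; omega
  -- (1) generators with positive index are Apery elements
  have gen_ap : ∀ i : Fin e, 1 ≤ (i : ℕ) → n i ∈ Ap H (e + 1) := by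
    intro i hi
    refine ⟨gen_mem hgen i, fun hI => ?_⟩
    obtain ⟨c, hcH, hce⟩ := hI
    have hc : n i = (e + 1) + c := by omega
    rcases Nat.eq_zero_or_pos c with rfl | hcpos
    · have : n i = n ⟨0, by omega⟩ := by omega
      have := hmono.injective this
      have : (i : ℕ) = 0 := by rw [this]
      omega
    · exact irred hgen hmin i hmH hcH (by omega) hcpos hc
  -- residue map on generators
  set f : Fin e → Fin (e + 1) := fun i => ⟨n i % (e + 1), Nat.mod_lt _ hm0⟩ with hf
  have hn0mod : n ⟨0, by omega⟩ % (e + 1) = 0 := by rw [n0]; simp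
  -- non-generator Apery elements have residue outside the range of f
  have hnm : ∀ y : ℕ, y ∈ Ap H (e + 1) → 0 < y → (∀ i, y ≠ n i) →
      ∀ i : Fin e, y % (e + 1) ≠ n i % (e + 1) := by
    intro y hy hy0 hyn i hmod
    by_cases h0 : (i : ℕ) = 0
    · have : i = ⟨0, by omega⟩ := Fin.ext h0
      rw [this, hn0mod] at hmod
      have := ap_unique hH hmH hm0 hy (zero_mem_ap hH hm0) (by simpa using hmod)
      omega
    · have hni : n i ∈ Ap H (e + 1) := gen_ap i (by omega)
      exact hyn i (ap_unique hH hmH hm0 hy hni hmod)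
  have finj : Function.Injective f := by
    intro i k hik
    have hmod : n i % (e + 1) = n k % (e + 1) := by
      have := congrArg Fin.val hik
      simpa [hf] using this
    by_cases hi0 : (i : ℕ) = 0
    · by_cases hk0 : (k : ℕ) = 0
      · exact Fin.ext (by omega)
      · exfalso
        have : i = ⟨0, by omega⟩ := Fin.ext hi0
        rw [this, hn0mod] at hmod
        have hnk : n k ∈ Ap H (e + 1) := gen_ap k (by omega)
        have := ap_unique hH hmH hm0 hnk (zero_mem_ap hH hm0) (by simpa using hmod.symm)
        have := hnpos k
        omega
    · by_cases hk0 : (k : ℕ) = 0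
      · exfalso
        have : k = ⟨0, by omega⟩ := Fin.ext hk0
        rw [this, hn0mod] at hmod
        have hni : n i ∈ Ap H (e + 1) := gen_ap i (by omega)
        have := ap_unique hH hmH hm0 hni (zero_mem_ap hH hm0) (by simpa using hmod)
        have := hnpos i
        omega
      · exact hmono.injective (ap_unique hH hmH hm0 (gen_ap i (by omega)) (gen_ap k (by omega)) hmod)
  -- (2) uniqueness of positive non-generator Apery elements
  have nongen_unique : ∀ x x' : ℕ, x ∈ Ap H (e + 1) → x' ∈ Ap H (e + 1) →
      0 < x → 0 < x' → (∀ i, x ≠ n i) → (∀ i, x' ≠ n i) → x = x' := by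
    intro x x' hx hx' hx0 hx'0 hxn hx'n
    set r : Fin (e + 1) := ⟨x % (e + 1), Nat.mod_lt _ hm0⟩ with hr
    set r' : Fin (e + 1) := ⟨x' % (e + 1), Nat.mod_lt _ hm0⟩ with hr'
    have hrf : r ∉ Finset.image f Finset.univ := by
      simp only [Finset.mem_image, Finset.mem_univ, true_and]
      rintro ⟨i, hi⟩
      exact hnm x hx hx0 hxn i (by have := congrArg Fin.val hi; simpa [hf, hr] using this.symm)
    have hr'f : r' ∉ Finset.image f Finset.univ := by
      simp only [Finset.mem_image, Finset.mem_univ, true_and]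
      rintro ⟨i, hi⟩
      exact hnm x' hx' hx'0 hx'n i (by have := congrArg Fin.val hi; simpa [hf, hr'] using this.symm)
    have hrr : r = r' := by
      by_contra hne
      have hcard : (insert r (insert r' (Finset.image f Finset.univ))).card = e + 2 := by
        rw [Finset.card_insert_of_notMem (by
          simp only [Finset.mem_insert]
          push_neg
          exact ⟨hne, hrf⟩)]
        rw [Finset.card_insert_of_notMem hr'f]
        rw [Finset.card_image_of_injective _ finj, Finset.card_univ, Fintype.card_fin]
      have := Finset.card_le_univ (insert r (insert r' (Finset.image f Finset.univ)))
      rw [hcard] at this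
      have h9 : Fintype.card (Fin (e + 1)) = e + 1 := Fintype.card_fin _
      omega
    have hmod : x % (e + 1) = x' % (e + 1) := by
      have := congrArg Fin.val hrr
      simpa [hr, hr'] using this
    exact ap_unique hH hmH hm0 hx hx' hmod
  -- (3) F + (e+1) is not a generator
  have hFm_ap : Frob H + (e + 1) ∈ Ap H (e + 1) := frob_add_mem_ap hH h1 hm0
  have hFm_pos : 0 < Frob H + (e + 1) := by omega
  have hFm_notgen : ∀ i, Frob H + (e + 1) ≠ n i := by
    intro I hI
    -- get the non-generator Apery element w
    obtain ⟨rs, hrs⟩ : ∃ rs : Fin (e + 1), rs ∉ Finset.image f Finset.univ := by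
      by_contra hcon
      push_neg at hcon
      have : (Finset.univ : Finset (Fin (e + 1))) ⊆ Finset.image f Finset.univ :=
        fun x _ => hcon x
      have := Finset.card_le_card this
      rw [Finset.card_image_of_injective _ finj, Finset.card_univ, Finset.card_univ,
        Fintype.card_fin, Fintype.card_fin] at this
      omega
    obtain ⟨w, hwAp, hwmod⟩ := ap_exists hH hmH hm0 rs.val rs.isLt
    have hwn : ∀ i, w ≠ n i := by
      intro i hwi
      apply hrs
      simp only [Finset.mem_image, Finset.mem_univ, true_and]
      exact ⟨i, Fin.ext (by simp [hf, ← hwi, hwmod])⟩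
    have hw0 : w ≠ 0 := by
      intro h0
      apply hrs
      simp only [Finset.mem_image, Finset.mem_univ, true_and]
      refine ⟨⟨0, by omega⟩, Fin.ext ?_⟩
      simp [hf, hn0mod, ← hwmod, h0]
    obtain ⟨x, y, hxH, hyH, hx0, hy0, hwxy⟩ := decomp hgen he1 hmono hn1 hwAp.1 hw0 hwn
    have hxAp : x ∈ Ap H (e + 1) := ap_summand hH hyH hxH (by rw [show y + x = x + y from Nat.add_comm y x, ← hwxy]; exact hwAp)
    have hyAp : y ∈ Ap H (e + 1) := ap_summand hH hxH hyH (by rwa [← hwxy])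
    have hxgen : ∃ k, x = n k := by
      by_contra hc
      push_neg at hc
      have := nongen_unique x w hxAp hwAp (by omega) (by omega) hc hwn
      omega
    have hwpos : 0 < w := by omega
    obtain ⟨b, hbAp, hbsum⟩ := ap_pair hH h1 hsym hwAp
    rcases Nat.eq_zero_or_pos b with rfl | hbpos
    · exact hwn I (by omega)
    · by_cases hbgen : ∃ s, b = n s
      · obtain ⟨s, rfl⟩ := hbgen
        exact irred hgen hmin I (hwAp.1) (gen_mem hgen s) hwpos (hnpos s) (by omega)
      · push_neg at hbgen
        have hbw : b = w := nongen_unique b w hbAp hwAp hbpos hwpos hbgen hwn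
        have : n I = (x + y) + (x + y) := by omega
        exact irred hgen hmin I (hwAp.1) (hwAp.1) hwpos hwpos (by omega)
  -- (4) pairing on generators
  have hpair : ∀ k : Fin e, 1 ≤ (k : ℕ) →
      ∃ k' : Fin e, 1 ≤ (k' : ℕ) ∧ n k + n k' = Frob H + (e + 1) := by
    intro k hk
    obtain ⟨b, hbAp, hbsum⟩ := ap_pair hH h1 hsym (gen_ap k hk)
    rcases Nat.eq_zero_or_pos b with rfl | hbpos
    · exact absurd (by omega : Frob H + (e + 1) = n k) (hFm_notgen k)
    · by_cases hbgen : ∃ s, b = n s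
      · obtain ⟨s, rfl⟩ := hbgen
        refine ⟨s, ?_, hbsum⟩
        by_contra hs0
        push_neg at hs0
        have hs0' : (s : ℕ) = 0 := by omega
        have hns : n s = e + 1 := hn1 s hs0'
        have hz : (n s : ℤ) - ((e + 1 : ℕ) : ℤ) = ((0 : ℕ) : ℤ) := by rw [hns]; push_cast; ring
        exact hbAp.2 (by rw [hz]; exact mem_img.mpr hH.1)
      · push_neg at hbgen
        exfalso
        have := nongen_unique b (Frob H + (e + 1)) hbAp hFm_ap hbpos hFm_pos hbgen hFm_notgen
        have := hnpos k
        omega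
  -- (5) choose the pairing function and show it is order-reversing
  choose τ hτ1 hτ2 using hpair
  have key : ∀ (k : Fin e) (hk : 1 ≤ (k : ℕ)) (k' : Fin e) (hk' : 1 ≤ (k' : ℕ)),
      (k : ℕ) < (k' : ℕ) → ((τ k' hk' : ℕ) < (τ k hk : ℕ)) := by
    intro k hk k' hk' hlt
    have h1' : n k < n k' := hmono (by rwa [Fin.lt_def])
    have h2' := hτ2 k hk
    have h3' := hτ2 k' hk'
    have : n (τ k' hk') < n (τ k hk) := by omega
    exact (Fin.lt_def).mp (hmono.lt_iff_lt.mp this)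
  have keyinj : ∀ (k : Fin e) (hk : 1 ≤ (k : ℕ)) (k' : Fin e) (hk' : 1 ≤ (k' : ℕ)),
      τ k hk = τ k' hk' → k = k' := by
    intro k hk k' hk' heq
    have h2' := hτ2 k hk
    have h3' := hτ2 k' hk'
    rw [heq] at h2'
    exact hmono.injective (by omega)
  -- cardinality computations
  have cardA : ∀ a : ℕ, (Finset.univ.filter (fun k : Fin e => a ≤ (k : ℕ))).card = e - a := by
    intro a
    have himg : Finset.image Fin.val (Finset.univ.filter (fun k : Fin e => a ≤ (k : ℕ)))
        = Finset.Ico a e := by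
      ext x
      simp only [Finset.mem_image, Finset.mem_filter, Finset.mem_univ, true_and,
        Finset.mem_Ico]
      constructor
      · rintro ⟨k, hak, rfl⟩; exact ⟨hak, k.isLt⟩
      · rintro ⟨hax, hxe⟩; exact ⟨⟨x, hxe⟩, hax, rfl⟩
    have := Finset.card_image_of_injective
      (Finset.univ.filter (fun k : Fin e => a ≤ (k : ℕ))) (Fin.val_injective)
    rw [himg, Nat.card_Ico] at this
    omega
  have cardB : ∀ c : ℕ, c < e →
      (Finset.univ.filter (fun k : Fin e => 1 ≤ (k : ℕ) ∧ (k : ℕ) ≤ c)).card = c := by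
    intro c hc
    have himg : Finset.image Fin.val
        (Finset.univ.filter (fun k : Fin e => 1 ≤ (k : ℕ) ∧ (k : ℕ) ≤ c))
        = Finset.Icc 1 c := by
      ext x
      simp only [Finset.mem_image, Finset.mem_filter, Finset.mem_univ, true_and,
        Finset.mem_Icc]
      constructor
      · rintro ⟨k, hak, rfl⟩; exact hak
      · rintro ⟨h1x, hxc⟩; exact ⟨⟨x, by omega⟩, ⟨h1x, hxc⟩, rfl⟩
    have := Finset.card_image_of_injective
      (Finset.univ.filter (fun k : Fin e => 1 ≤ (k : ℕ) ∧ (k : ℕ) ≤ c)) (Fin.val_injective)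
    rw [himg, Nat.card_Icc] at this
    omega
  set t := (τ j hj : ℕ) with ht
  have htlt : t < e := (τ j hj).isLt
  have ht1 : 1 ≤ t := hτ1 j hj
  set φ : Fin e → Fin e := fun k => if h : 1 ≤ (k : ℕ) then τ k h else k with hφ
  have hφval : ∀ (k : Fin e) (hk : 1 ≤ (k : ℕ)), φ k = τ k hk := by
    intro k hk
    simp [hφ, dif_pos hk]
  -- lower bound : e - j ≤ t
  have hlow : e - (j : ℕ) ≤ t := by
    have hmaps : ∀ k ∈ Finset.univ.filter (fun k : Fin e => (j : ℕ) ≤ (k : ℕ)),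
        φ k ∈ Finset.univ.filter (fun k : Fin e => 1 ≤ (k : ℕ) ∧ (k : ℕ) ≤ t) := by
      intro k hk
      rw [Finset.mem_filter] at hk ⊢
      have hk1 : 1 ≤ (k : ℕ) := by omega
      rw [hφval k hk1]
      refine ⟨Finset.mem_univ _, hτ1 k hk1, ?_⟩
      rcases Nat.lt_or_ge (j : ℕ) (k : ℕ) with h | h
      · exact le_of_lt (key j hj k hk1 h)
      · have : k = j := Fin.ext (by omega)
        subst this
        rfl
    have hinj : Set.InjOn φ (Finset.univ.filter (fun k : Fin e => (j : ℕ) ≤ (k : ℕ))) := by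
      intro k hk k' hk' heq
      simp only [Finset.coe_filter, Set.mem_setOf_eq, Finset.mem_univ, true_and] at hk hk'
      have hk1 : 1 ≤ (k : ℕ) := by omega
      have hk1' : 1 ≤ (k' : ℕ) := by omega
      rw [hφval k hk1, hφval k' hk1'] at heq
      exact keyinj k hk1 k' hk1' heq
    have := Finset.card_le_card_of_injOn φ hmaps hinj
    rw [cardA (j : ℕ), cardB t htlt] at this
    exact this
  -- upper bound : t ≤ e - j
  have hupp : t ≤ e - (j : ℕ) := by
    have hmaps : ∀ k ∈ Finset.univ.filter (fun k : Fin e => 1 ≤ (k : ℕ) ∧ (k : ℕ) ≤ (j : ℕ)),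
        φ k ∈ Finset.univ.filter (fun k : Fin e => t ≤ (k : ℕ)) := by
      intro k hk
      rw [Finset.mem_filter] at hk ⊢
      obtain ⟨-, hk1, hkj⟩ := hk
      rw [hφval k hk1]
      refine ⟨Finset.mem_univ _, ?_⟩
      rcases Nat.lt_or_ge (k : ℕ) (j : ℕ) with h | h
      · exact le_of_lt (key k hk1 j hj h)
      · have : k = j := Fin.ext (by omega)
        subst this
        rfl
    have hinj : Set.InjOn φ
        (Finset.univ.filter (fun k : Fin e => 1 ≤ (k : ℕ) ∧ (k : ℕ) ≤ (j : ℕ))) := by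
      intro k hk k' hk' heq
      simp only [Finset.coe_filter, Set.mem_setOf_eq, Finset.mem_univ, true_and] at hk hk'
      rw [hφval k hk.1, hφval k' hk'.1] at heq
      exact keyinj k hk.1 k' hk'.1 heq
    have := Finset.card_le_card_of_injOn φ hmaps hinj
    rw [cardB (j : ℕ) j.isLt, cardA t] at this
    omega
  have hteq : t = e - (j : ℕ) := by omega
  have hfin : τ j hj = (⟨e - (j : ℕ), by have := j.isLt; omega⟩ : Fin e) := Fin.ext (by simp only [Fin.val_mk]; omega)
  have hsum := hτ2 j hj
  rw [hfin] at hsum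
  omega
end

section
/- Let H be a numerical semigroup and m ∈ ℕ. If it is not the case that m is even and m/2 ∈ H, then the finite set {h ∈ ℕ : h ∈ H and m − h ∈ H} has even cardinality. -/
/-- A finset with a fixed-point-free involution has even cardinality. -/
lemma even_card_of_fpf_involution {α : Type*} [DecidableEq α] (f : α → α) :
    ∀ (s : Finset α), (∀ x ∈ s, f x ∈ s) → (∀ x ∈ s, f (f x) = x) →
      (∀ x ∈ s, f x ≠ x) → Even s.card := by
  intro s
  induction s using Finset.strongInduction with
  | _ s ih =>
    intro hmem hinv hne
    rcases s.eq_empty_or_nonempty with rfl | ⟨a, ha⟩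
    · simp
    · have hfa : f a ∈ s := hmem a ha
      have hne' : f a ≠ a := hne a ha
      set t := (s.erase a).erase (f a) with ht
      have hts : t ⊂ s := by
        refine Finset.ssubset_of_subset_of_ssubset ?_ (Finset.erase_ssubset ha)
        exact Finset.erase_subset _ _
      have hcard : s.card = t.card + 2 := by
        rw [ht, Finset.card_erase_of_mem (Finset.mem_erase.mpr ⟨hne', hfa⟩),
          Finset.card_erase_of_mem ha]
        have h1 : 1 ≤ s.card := Finset.card_pos.mpr ⟨a, ha⟩
        have h2 : 2 ≤ s.card := Finset.one_lt_card.mpr ⟨a, ha, f a, hfa, (hne a ha).symm⟩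
        omega
      have htmem : ∀ x ∈ t, x ∈ s := fun x hx =>
        Finset.mem_of_mem_erase (Finset.mem_of_mem_erase hx)
      have key : Even t.card := by
        refine ih t hts ?_ ?_ ?_
        · intro x hx
          have hxs := htmem x hx
          have hx1 : x ≠ f a := (Finset.mem_erase.mp hx).1
          have hx2 : x ≠ a := (Finset.mem_erase.mp (Finset.mem_of_mem_erase hx)).1
          refine Finset.mem_erase.mpr ⟨?_, Finset.mem_erase.mpr ⟨?_, hmem x hxs⟩⟩
          · intro h; exact hx2 (by rw [← hinv x hxs, h, hinv a ha])
          · intro h; exact hx1 (by rw [← h, hinv x hxs])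
        · exact fun x hx => hinv x (htmem x hx)
        · exact fun x hx => hne x (htmem x hx)
      rw [hcard]
      exact key.add (even_two)

/-- if it is not the case that `m` is even with `m/2 ∈ H`, then
`{h ∈ H : m − h ∈ H}` has even cardinality. -/
theorem stmt17 (H : Set ℕ) (hH : IsNumericalSemigroup H) (m : ℕ)
    (hm : ¬ (Even m ∧ m / 2 ∈ H)) :
    Even ({h : ℕ | h ∈ H ∧ ∃ b ∈ H, h + b = m}).ncard := by
  classical
  set S : Set ℕ := {h : ℕ | h ∈ H ∧ ∃ b ∈ H, h + b = m} with hS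
  set t : Finset ℕ := (Finset.range (m + 1)).filter (fun h => h ∈ S) with htdef
  have hSt : S = ↑t := by
    ext x
    simp only [htdef, Finset.coe_filter, Finset.mem_range, Set.mem_setOf_eq, Finset.mem_coe]
    constructor
    · intro hx
      refine ⟨?_, hx⟩
      obtain ⟨_, b, _, hb⟩ := hx
      omega
    · exact fun hx => hx.2
  rw [hSt, Set.ncard_coe_finset]
  refine even_card_of_fpf_involution (fun h => m - h) t ?_ ?_ ?_
  · intro x hx
    simp only [htdef, Finset.mem_filter, Finset.mem_range, hS, Set.mem_setOf_eq] at hx ⊢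
    obtain ⟨hxr, hxH, b, hbH, hxb⟩ := hx
    have hb : m - x = b := by omega
    exact ⟨by omega, by rw [hb]; exact hbH, x, hxH, by omega⟩
  · intro x hx
    simp only [htdef, Finset.mem_filter, Finset.mem_range, hS, Set.mem_setOf_eq] at hx
    obtain ⟨hxr, hxH, b, hbH, hxb⟩ := hx
    show m - (m - x) = x
    omega
  · intro x hx
    simp only [htdef, Finset.mem_filter, Finset.mem_range, hS, Set.mem_setOf_eq] at hx
    obtain ⟨hxr, hxH, b, hbH, hxb⟩ := hx
    intro heq
    change m - x = x at heq
    apply hm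
    have h2 : m / 2 = x := by omega
    exact ⟨⟨x, by omega⟩, h2 ▸ hxH⟩
end

section
/- Let H_1, H_2 be numerical semigroups, let d_1 ∈ H_2 and d_2 ∈ H_1 be coprime integers with d_1 > 1 and d_2 > 1, and let H = {d_1 h_1 + d_2 h_2 : h_1 ∈ H_1, h_2 ∈ H_2}. Then H is a numerical semigroup and PF(H) = {d_1 f_1 + d_2 f_2 + d_1 d_2 : f_1 ∈ PF(H_1), f_2 ∈ PF(H_2)}; in particular Fr(H) = d_1·Fr(H_1) + d_2·Fr(H_2) + d_1 d_2 and type(H) = type(H_1)·type(H_2). -/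
lemma NS.bezout_rep {d₁ d₂ : ℕ} (hcop : Nat.gcd d₁ d₂ = 1) (hd₂ : 0 < d₂)
    {a b a' b' : ℤ} (h : (d₁:ℤ)*a + (d₂:ℤ)*b = (d₁:ℤ)*a' + (d₂:ℤ)*b') :
    ∃ k : ℤ, a' = a - (d₂:ℤ)*k ∧ b' = b + (d₁:ℤ)*k := by
  have hco : IsCoprime (d₁:ℤ) (d₂:ℤ) := by
    rw [Int.isCoprime_iff_gcd_eq_one, Int.gcd_natCast_natCast]; exact hcop
  have heq : (d₁:ℤ) * (a - a') = (d₂:ℤ) * (b' - b) := by ring_nf; linarith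
  have hdvd : (d₂:ℤ) ∣ (a - a') := by
    refine (hco.symm).dvd_of_dvd_mul_left ?_
    exact ⟨b' - b, by linarith⟩
  obtain ⟨k, hk⟩ := hdvd
  refine ⟨k, by linarith, ?_⟩
  have hd2 : (d₂:ℤ) ≠ 0 := by positivity
  have h2 : (d₂:ℤ) * (b' - b) = (d₂:ℤ) * ((d₁:ℤ) * k) := by rw [← heq, hk]; ring
  have := mul_left_cancel₀ hd2 h2
  linarith

lemma NS.add_mul_mem {K : Set ℕ} (hK : IsNumericalSemigroup K) {b y : ℕ}
    (hb : b ∈ K) (hy : y ∈ K) (m : ℕ) : b + y * m ∈ K := by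
  induction m with
  | zero => simpa using hb
  | succ n ih =>
      have h1 : b + y * n + y ∈ K := hK.2.1 _ ih _ hy
      have he : b + y * (n+1) = b + y * n + y := by ring
      rwa [he]

lemma NS.cast_add_mul_mem {K : Set ℕ} (hK : IsNumericalSemigroup K) {b y : ℕ}
    (hb : b ∈ K) (hy : y ∈ K) {m : ℤ} (hm : 0 ≤ m) :
    (b:ℤ) + (y:ℤ) * m ∈ ((Nat.cast : ℕ → ℤ) '' K) := by
  lift m to ℕ using hm
  exact ⟨b + y * m, NS.add_mul_mem hK hb hy m, by push_cast; ring⟩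

lemma NS.isGreatest {K : Set ℕ} (hK : IsNumericalSemigroup K) :
    IsGreatest {z : ℤ | z ∉ ((Nat.cast : ℕ → ℤ) '' K)} (FrobZ K) := by
  have hne : Set.Nonempty {z : ℤ | z ∉ ((Nat.cast : ℕ → ℤ) '' K)} := by
    refine ⟨-1, ?_⟩
    rintro ⟨n, -, hn⟩; omega
  have hbdd : BddAbove {z : ℤ | z ∉ ((Nat.cast : ℕ → ℤ) '' K)} := by
    obtain ⟨N, hN⟩ := hK.2.2.bddAbove
    refine ⟨(N:ℤ), fun z hz => ?_⟩
    by_contra hlt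
    push_neg at hlt
    have hz0 : 0 ≤ z := le_trans (Int.natCast_nonneg N) hlt.le
    lift z to ℕ using hz0
    have hzK : z ∈ K := by
      by_contra h
      have := hN h
      exact absurd hlt (by exact_mod_cast not_lt.mpr this)
    exact hz ⟨z, hzK, rfl⟩
  exact ⟨Int.csSup_mem hne hbdd, fun z hz => le_csSup hbdd hz⟩

lemma NS.frob_mem_PF {K : Set ℕ} (hK : IsNumericalSemigroup K) : FrobZ K ∈ PF K := by
  obtain ⟨hmem, hub⟩ := NS.isGreatest hK
  refine ⟨hmem, fun h hh hpos => ?_⟩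
  by_contra hc
  have := hub hc
  omega

lemma NS.le_frob {K : Set ℕ} (hK : IsNumericalSemigroup K) {z : ℤ}
    (hz : z ∉ ((Nat.cast : ℕ → ℤ) '' K)) : z ≤ FrobZ K :=
  (NS.isGreatest hK).2 hz

lemma NS.pf_finite {K : Set ℕ} (hK : IsNumericalSemigroup K) {y : ℕ}
    (hy : y ∈ K) (hy0 : 0 < y) : (PF K).Finite := by
  refine (Set.finite_Icc (-(y:ℤ)) (FrobZ K)).subset fun f hf => ?_
  constructor
  · obtain ⟨n, -, hn⟩ := hf.2 y hy hy0
    omega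
  · exact NS.le_frob hK hf.1

/-- for a gluing `H = ⟨d₁H₁, d₂H₂⟩`, `H` is a numerical
semigroup, `PF(H) = {d₁f₁ + d₂f₂ + d₁d₂ : fᵢ ∈ PF(Hᵢ)}`, and in particular
`Fr(H) = d₁Fr(H₁) + d₂Fr(H₂) + d₁d₂` and `type(H) = type(H₁)·type(H₂)`. -/
theorem stmt19 (H₁ H₂ : Set ℕ)
    (hH₁ : IsNumericalSemigroup H₁) (hH₂ : IsNumericalSemigroup H₂)
    (d₁ d₂ : ℕ) (hd₁ : 1 < d₁) (hd₂ : 1 < d₂)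
    (hd₁H₂ : d₁ ∈ H₂) (hd₂H₁ : d₂ ∈ H₁) (hcop : Nat.gcd d₁ d₂ = 1)
    (H : Set ℕ) (hH : H = {x | ∃ h₁ ∈ H₁, ∃ h₂ ∈ H₂, x = d₁ * h₁ + d₂ * h₂}) :
    IsNumericalSemigroup H ∧
    PF H = {z : ℤ | ∃ f₁ ∈ PF H₁, ∃ f₂ ∈ PF H₂,
      z = (d₁ : ℤ) * f₁ + (d₂ : ℤ) * f₂ + (d₁ : ℤ) * (d₂ : ℤ)} ∧
    FrobZ H = (d₁ : ℤ) * FrobZ H₁ + (d₂ : ℤ) * FrobZ H₂ + (d₁ : ℤ) * (d₂ : ℤ) ∧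
    (PF H).ncard = (PF H₁).ncard * (PF H₂).ncard := by
  have hd₁p : 0 < d₁ := by omega
  have hd₂p : 0 < d₂ := by omega
  have hd₁0 : (0:ℤ) < (d₁:ℤ) := by exact_mod_cast hd₁p
  have hd₂0 : (0:ℤ) < (d₂:ℤ) := by exact_mod_cast hd₂p
  set F₁ := FrobZ H₁ with hF₁def
  set F₂ := FrobZ H₂ with hF₂def
  -- membership characterization of the cast image of H
  have memH : ∀ z : ℤ, z ∈ ((Nat.cast : ℕ → ℤ) '' H) ↔
      ∃ h₁ ∈ H₁, ∃ h₂ ∈ H₂, z = (d₁:ℤ) * (h₁:ℤ) + (d₂:ℤ) * (h₂:ℤ) := by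
    intro z
    constructor
    · rintro ⟨n, hn, rfl⟩
      rw [hH] at hn
      obtain ⟨h₁, hh₁, h₂, hh₂, rfl⟩ := hn
      exact ⟨h₁, hh₁, h₂, hh₂, by push_cast; ring⟩
    · rintro ⟨h₁, hh₁, h₂, hh₂, rfl⟩
      refine ⟨d₁ * h₁ + d₂ * h₂, ?_, by push_cast; ring⟩
      rw [hH]; exact ⟨h₁, hh₁, h₂, hh₂, rfl⟩
  -- all integers above the candidate Frobenius number lie in H
  have hbig : ∀ z : ℤ, (d₁:ℤ)*F₁ + (d₂:ℤ)*F₂ + (d₁:ℤ)*(d₂:ℤ) < z →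
      z ∈ ((Nat.cast : ℕ → ℤ) '' H) := by
    intro z hz
    have hbez : (1:ℤ) = (d₁:ℤ) * Nat.gcdA d₁ d₂ + (d₂:ℤ) * Nat.gcdB d₁ d₂ := by
      have h := Nat.gcd_eq_gcd_ab d₁ d₂
      rw [hcop] at h; exact_mod_cast h
    set b₀ : ℤ := Nat.gcdB d₁ d₂ * z with hb₀def
    set r : ℤ := (F₂ + (d₁:ℤ) - b₀) % (d₁:ℤ) with hrdef
    have hr0 : 0 ≤ r := Int.emod_nonneg _ (by positivity)
    have hr1 : r < (d₁:ℤ) := Int.emod_lt_of_pos _ hd₁0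
    set b : ℤ := F₂ + (d₁:ℤ) - r with hbdef
    have hbF : F₂ < b := by omega
    have hbF' : b ≤ F₂ + (d₁:ℤ) := by omega
    have hdvd1 : (d₁:ℤ) ∣ ((F₂ + (d₁:ℤ) - b₀) - r) := Int.dvd_self_sub_of_emod_eq rfl
    obtain ⟨q, hq⟩ := hdvd1
    have hb : b = b₀ + (d₁:ℤ) * q := by rw [hbdef]; linarith
    have h1 : z - (d₂:ℤ) * b₀ = (d₁:ℤ) * (Nat.gcdA d₁ d₂ * z) := by
      rw [hb₀def]; linear_combination z * hbez
    have hdvd2 : (d₁:ℤ) ∣ (z - (d₂:ℤ) * b) :=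
      ⟨Nat.gcdA d₁ d₂ * z - (d₂:ℤ) * q, by rw [hb]; linear_combination h1⟩
    obtain ⟨a, ha⟩ := hdvd2
    have haF : F₁ < a := by
      have h2 : (d₁:ℤ) * F₁ < (d₁:ℤ) * a := by nlinarith
      exact lt_of_mul_lt_mul_left h2 hd₁0.le
    have haH : a ∈ ((Nat.cast : ℕ → ℤ) '' H₁) := by
      by_contra hc; exact absurd (NS.le_frob hH₁ hc) (not_le.mpr haF)
    have hbH : b ∈ ((Nat.cast : ℕ → ℤ) '' H₂) := by
      by_contra hc; exact absurd (NS.le_frob hH₂ hc) (not_le.mpr hbF)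
    obtain ⟨n₁, hn₁, he₁⟩ := haH
    obtain ⟨n₂, hn₂, he₂⟩ := hbH
    refine (memH z).2 ⟨n₁, hn₁, n₂, hn₂, ?_⟩
    rw [he₁, he₂]; linarith
  -- H is a numerical semigroup
  have hH0 : (0:ℕ) ∈ H := by
    rw [hH]; exact ⟨0, hH₁.1, 0, hH₂.1, by ring⟩
  have hHadd : ∀ a ∈ H, ∀ b ∈ H, a + b ∈ H := by
    intro a ha b hb
    rw [hH] at ha hb ⊢
    obtain ⟨a₁, ha₁, a₂, ha₂, rfl⟩ := ha
    obtain ⟨b₁, hb₁, b₂, hb₂, rfl⟩ := hb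
    exact ⟨a₁ + b₁, hH₁.2.1 _ ha₁ _ hb₁, a₂ + b₂, hH₂.2.1 _ ha₂ _ hb₂, by ring⟩
  have hHfin : Hᶜ.Finite := by
    refine (Set.finite_Iic ((d₁:ℤ)*F₁ + (d₂:ℤ)*F₂ + (d₁:ℤ)*(d₂:ℤ)).toNat).subset
      fun n hn => ?_
    by_contra hn'
    simp only [Set.mem_Iic, not_le] at hn'
    obtain ⟨m, hm, hmn⟩ := hbig (n:ℤ) (by omega)
    have hmn' : m = n := by exact_mod_cast hmn
    exact hn (hmn' ▸ hm)
  have hNS : IsNumericalSemigroup H := ⟨hH0, hHadd, hHfin⟩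
  have hHmono : ∀ h₁ ∈ H₁, ∀ h₂ ∈ H₂, d₁ * h₁ + d₂ * h₂ ∈ H := by
    intro h₁ hh₁ h₂ hh₂; rw [hH]; exact ⟨h₁, hh₁, h₂, hh₂, rfl⟩
  -- PF H ⊆ image
  have hPFsub : ∀ z ∈ PF H, ∃ f₁ ∈ PF H₁, ∃ f₂ ∈ PF H₂,
      z = (d₁:ℤ) * f₁ + (d₂:ℤ) * f₂ + (d₁:ℤ) * (d₂:ℤ) := by
    intro z hz
    obtain ⟨hz1, hz2⟩ := hz
    have hd₁d₂H : d₁ * d₂ ∈ H := by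
      have := hHmono d₂ hd₂H₁ 0 hH₂.1; simpa using this
    obtain ⟨h₁, hh₁, h₂, hh₂, he⟩ := (memH _).1 (hz2 (d₁*d₂) hd₁d₂H (by positivity))
    push_cast at he
    -- he : z + d₁ * d₂ = d₁ * h₁ + d₂ * h₂
    have hf₁n : ((h₁:ℤ) - (d₂:ℤ)) ∉ ((Nat.cast : ℕ → ℤ) '' H₁) := by
      rintro ⟨m, hm, hme⟩
      exact hz1 ((memH z).2 ⟨m, hm, h₂, hh₂, by linear_combination he - (d₁:ℤ) * hme⟩)
    have hf₂n : ((h₂:ℤ) - (d₁:ℤ)) ∉ ((Nat.cast : ℕ → ℤ) '' H₂) := by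
      rintro ⟨m, hm, hme⟩
      exact hz1 ((memH z).2 ⟨h₁, hh₁, m, hm, by linear_combination he - (d₂:ℤ) * hme⟩)
    refine ⟨(h₁:ℤ) - (d₂:ℤ), ⟨hf₁n, ?_⟩, (h₂:ℤ) - (d₁:ℤ), ⟨hf₂n, ?_⟩,
      by linear_combination he⟩
    · -- pseudo-Frobenius property for f₁
      intro g hg hg0
      have hmem : d₁ * g ∈ H := by
        have := hHmono g hg 0 hH₂.1; simpa using this
      obtain ⟨a, haH, bb, hbH, hab⟩ := (memH _).1 (hz2 (d₁*g) hmem (by positivity))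
      push_cast at hab
      obtain ⟨k, hk1, hk2⟩ := NS.bezout_rep hcop hd₂p
        (a := (h₁:ℤ) + (g:ℤ)) (b := (h₂:ℤ) - (d₁:ℤ)) (a' := (a:ℤ)) (b' := (bb:ℤ))
        (by linear_combination hab - he)
      rcases le_or_gt k 0 with hk | hk
      · exfalso
        apply hf₂n
        have hrw : ((h₂:ℤ) - (d₁:ℤ)) = (bb:ℤ) + (d₁:ℤ) * (-k) := by linear_combination -hk2
        rw [hrw]
        exact NS.cast_add_mul_mem hH₂ hbH hd₁H₂ (by omega)
      · have hrw : ((h₁:ℤ) - (d₂:ℤ)) + (g:ℤ) = (a:ℤ) + (d₂:ℤ) * (k-1) := by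
          linear_combination -hk1
        rw [hrw]
        exact NS.cast_add_mul_mem hH₁ haH hd₂H₁ (by omega)
    · -- pseudo-Frobenius property for f₂
      intro g hg hg0
      have hmem : d₂ * g ∈ H := by
        have := hHmono 0 hH₁.1 g hg; simpa using this
      obtain ⟨a, haH, bb, hbH, hab⟩ := (memH _).1 (hz2 (d₂*g) hmem (by positivity))
      push_cast at hab
      obtain ⟨k, hk1, hk2⟩ := NS.bezout_rep hcop hd₂p
        (a := (h₁:ℤ) - (d₂:ℤ)) (b := (h₂:ℤ) + (g:ℤ)) (a' := (a:ℤ)) (b' := (bb:ℤ))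
        (by linear_combination hab - he)
      rcases le_or_gt k (-1) with hk | hk
      · have hrw : ((h₂:ℤ) - (d₁:ℤ)) + (g:ℤ) = (bb:ℤ) + (d₁:ℤ) * (-k-1) := by
          linear_combination -hk2
        rw [hrw]
        exact NS.cast_add_mul_mem hH₂ hbH hd₁H₂ (by omega)
      · exfalso
        apply hf₁n
        have hrw : ((h₁:ℤ) - (d₂:ℤ)) = (a:ℤ) + (d₂:ℤ) * k := by linear_combination -hk1
        rw [hrw]
        exact NS.cast_add_mul_mem hH₁ haH hd₂H₁ (by omega)
  -- image ⊆ PF H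
  have hPFsup : ∀ f₁ ∈ PF H₁, ∀ f₂ ∈ PF H₂,
      ((d₁:ℤ) * f₁ + (d₂:ℤ) * f₂ + (d₁:ℤ) * (d₂:ℤ)) ∈ PF H := by
    intro f₁ hf₁ f₂ hf₂
    constructor
    · rintro hmem
      obtain ⟨h₁, hh₁, h₂, hh₂, he⟩ := (memH _).1 hmem
      obtain ⟨k, hk1, hk2⟩ := NS.bezout_rep hcop hd₂p
        (a := f₁ + (d₂:ℤ)) (b := f₂) (a' := (h₁:ℤ)) (b' := (h₂:ℤ))
        (by linear_combination he)
      rcases le_or_gt k 0 with hk | hk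
      · apply hf₂.1
        have hrw : f₂ = (h₂:ℤ) + (d₁:ℤ) * (-k) := by linear_combination -hk2
        rw [hrw]
        exact NS.cast_add_mul_mem hH₂ hh₂ hd₁H₂ (by omega)
      · apply hf₁.1
        have hrw : f₁ = (h₁:ℤ) + (d₂:ℤ) * (k-1) := by linear_combination -hk1
        rw [hrw]
        exact NS.cast_add_mul_mem hH₁ hh₁ hd₂H₁ (by omega)
    · intro h hhH hh0
      rw [hH] at hhH
      obtain ⟨h₁, hh₁, h₂, hh₂, rfl⟩ := hhH
      rcases Nat.eq_zero_or_pos h₁ with h₁0 | h₁p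
      · have h₂p : 0 < h₂ := by
          rcases Nat.eq_zero_or_pos h₂ with h₂0 | h₂p
          · exfalso; rw [h₁0, h₂0] at hh0; omega
          · exact h₂p
        obtain ⟨a, haH, hae⟩ := hf₁.2 d₂ hd₂H₁ hd₂p
        obtain ⟨bb, hbH, hbe⟩ := hf₂.2 h₂ hh₂ h₂p
        refine (memH _).2 ⟨a, haH, bb, hbH, ?_⟩
        push_cast
        subst h₁0
        push_cast
        linear_combination -((d₁:ℤ) * hae) - (d₂:ℤ) * hbe
      · obtain ⟨a, haH, hae⟩ := hf₁.2 h₁ hh₁ h₁p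
        obtain ⟨bb, hbH, hbe⟩ := hf₂.2 d₁ hd₁H₂ hd₁p
        refine (memH _).2 ⟨a, haH, bb + h₂, hH₂.2.1 _ hbH _ hh₂, ?_⟩
        push_cast
        linear_combination -((d₁:ℤ) * hae) - (d₂:ℤ) * hbe
  have hPFeq : PF H = {z : ℤ | ∃ f₁ ∈ PF H₁, ∃ f₂ ∈ PF H₂,
      z = (d₁ : ℤ) * f₁ + (d₂ : ℤ) * f₂ + (d₁ : ℤ) * (d₂ : ℤ)} := by
    ext z
    constructor
    · exact fun hz => hPFsub z hz
    · rintro ⟨f₁, h1, f₂, h2, rfl⟩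
      exact hPFsup f₁ h1 f₂ h2
  -- Frobenius number
  have hFgr : IsGreatest {z : ℤ | z ∉ ((Nat.cast : ℕ → ℤ) '' H)}
      ((d₁:ℤ)*F₁ + (d₂:ℤ)*F₂ + (d₁:ℤ)*(d₂:ℤ)) := by
    constructor
    · exact (hPFsup F₁ (NS.frob_mem_PF hH₁) F₂ (NS.frob_mem_PF hH₂)).1
    · intro z hz
      by_contra hc
      push_neg at hc
      exact hz (hbig z hc)
  have hFrob : FrobZ H = (d₁:ℤ)*F₁ + (d₂:ℤ)*F₂ + (d₁:ℤ)*(d₂:ℤ) := hFgr.csSup_eq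
  -- cardinality
  have himg : PF H = (fun p : ℤ × ℤ => (d₁:ℤ)*p.1 + (d₂:ℤ)*p.2 + (d₁:ℤ)*(d₂:ℤ)) ''
      (PF H₁ ×ˢ PF H₂) := by
    rw [hPFeq]
    ext z
    constructor
    · rintro ⟨f₁, h1, f₂, h2, rfl⟩
      exact ⟨(f₁, f₂), ⟨h1, h2⟩, rfl⟩
    · rintro ⟨⟨f₁, f₂⟩, ⟨h1, h2⟩, rfl⟩
      exact ⟨f₁, h1, f₂, h2, rfl⟩
  have hinj : Set.InjOn (fun p : ℤ × ℤ => (d₁:ℤ)*p.1 + (d₂:ℤ)*p.2 + (d₁:ℤ)*(d₂:ℤ))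
      (PF H₁ ×ˢ PF H₂) := by
    rintro ⟨p₁, p₂⟩ ⟨hp₁, hp₂⟩ ⟨q₁, q₂⟩ ⟨hq₁, hq₂⟩ heq
    simp only at heq hp₁ hp₂ hq₁ hq₂
    have heq' : (d₁:ℤ)*p₁ + (d₂:ℤ)*p₂ = (d₁:ℤ)*q₁ + (d₂:ℤ)*q₂ := by linarith
    obtain ⟨k, hk1, hk2⟩ := NS.bezout_rep hcop hd₂p heq'
    have hk0 : k = 0 := by
      rcases lt_trichotomy k 0 with hk | hk | hk
      · exfalso
        apply hp₂.1
        have hm : d₁ * (-k).toNat ∈ H₂ := by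
          have := NS.add_mul_mem hH₂ hH₂.1 hd₁H₂ (-k).toNat
          simpa using this
        have hmp : 0 < d₁ * (-k).toNat := by
          have : 0 < (-k).toNat := by omega
          positivity
        have := hq₂.2 _ hm hmp
        have hrw : p₂ = q₂ + ((d₁ * (-k).toNat : ℕ) : ℤ) := by
          push_cast
          have hkt : ((-k).toNat : ℤ) = -k := by omega
          rw [hkt]
          linear_combination -hk2
        rw [hrw]
        exact this
      · exact hk
      · exfalso
        apply hq₂.1
        have hm : d₁ * k.toNat ∈ H₂ := by
          have := NS.add_mul_mem hH₂ hH₂.1 hd₁H₂ k.toNat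
          simpa using this
        have hmp : 0 < d₁ * k.toNat := by
          have : 0 < k.toNat := by omega
          positivity
        have := hp₂.2 _ hm hmp
        have hrw : q₂ = p₂ + ((d₁ * k.toNat : ℕ) : ℤ) := by
          push_cast
          have hkt : (k.toNat : ℤ) = k := by omega
          rw [hkt]
          linear_combination hk2
        rw [hrw]
        exact this
    subst hk0
    have : q₁ = p₁ ∧ q₂ = p₂ := ⟨by linarith, by linarith⟩
    exact Prod.ext this.1.symm this.2.symm
  have hcard : (PF H).ncard = (PF H₁).ncard * (PF H₂).ncard := by
    rw [himg, Set.ncard_image_of_injOn hinj]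
    rw [← Nat.card_coe_set_eq, ← Nat.card_coe_set_eq, ← Nat.card_coe_set_eq,
      Nat.card_congr (Equiv.Set.prod _ _), Nat.card_prod]
  exact ⟨hNS, hPFeq, hFrob, hcard⟩
end
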